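/- arXiv:1307.7473 — 4 statements merged into one kernel-verified Lean document; each statement's English description precedes it below -/
import Mathlib

section
/- Let h be a C¹ function on (x0,y0) which is a solution of (h'/s')' = m' V h, i.e. h'(y)/s'(y) − h'(x)/s'(x) = ∫_x^y m'(t) V(t) h(t) dt for all x ≤ y in (x0,y0). If c1 ∈ (x0,y0) satisfies h(c1) > 0 and h'(c1) > 0, then h'(y) > 0 for every y ∈ (c1, y0). If instead h(c1) > 0 and h'(c1) < 0, then h'(y) < 0 for every y ∈ (x0, c1). -/
open MeasureTheory Set Filter

noncomputable section

/-- The open interval `(x0, y0)` in `ℝ`, with extended-real endpoints. -/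
def EI (x0 y0 : EReal) : Set ℝ := {x : ℝ | x0 < (x : EReal) ∧ (x : EReal) < y0}

/-- `f` is locally essentially bounded on `(x0, y0)`. -/
def LocEssBdd (x0 y0 : EReal) (f : ℝ → ℝ) : Prop :=
  ∀ u v : ℝ, x0 < (u : EReal) → (v : EReal) < y0 →
    ∃ C : ℝ, ∀ᵐ x ∂(volume.restrict (Icc u v)), |f x| ≤ C

/-- Derivative `s'` of Feller's scale function, with base point `c`. -/
def sder (a b : ℝ → ℝ) (c x : ℝ) : ℝ := Real.exp (-∫ t in c..x, b t / a t)

/-- Derivative `m'` of Feller's speed function, with base point `c`. -/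
def mder (a b : ℝ → ℝ) (c x : ℝ) : ℝ :=
  (1 / a x) * Real.exp (∫ t in c..x, b t / a t)

/-- Iterated integrals `I_n^W` toward `y0`, base point `c`. -/
def Ifun (a b : ℝ → ℝ) (c : ℝ) (W : ℝ → ℝ) : ℕ → ℝ → ℝ
  | 0, _ => 1
  | n + 1, y =>
      ∫ r in c..y, sder a b c r * ∫ t in c..r, mder a b c t * W t * Ifun a b c W n t

/-- Iterated integrals `J_n^W` toward `x0`, base point `c`. -/
def Jfun (a b : ℝ → ℝ) (c : ℝ) (W : ℝ → ℝ) : ℕ → ℝ → ℝ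
  | 0, _ => 1
  | n + 1, y =>
      ∫ r in y..c, sder a b c r * ∫ t in r..c, mder a b c t * W t * Jfun a b c W n t

/-- The speed measure `m = m'(x) dx` on `(x0, y0)`. -/
def speedMeasure (x0 y0 : EReal) (a b : ℝ → ℝ) (c : ℝ) : Measure ℝ :=
  (volume.restrict (EI x0 y0)).withDensity fun x => ENNReal.ofReal (mder a b c x)

/-- Smooth compactly supported test functions supported in `S`. -/
def IsTestFun (S : Set ℝ) (f : ℝ → ℝ) : Prop :=
  ContDiff ℝ (⊤ : ℕ∞) f ∧ HasCompactSupport f ∧ tsupport f ⊆ S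

/-- Sturm–Liouville operator `L^V f = a f'' + b f' - V f`. -/
def SLop (a b V : ℝ → ℝ) (f : ℝ → ℝ) (x : ℝ) : ℝ :=
  a x * deriv (deriv f) x + b x * deriv f x - V x * f x

/-- `y0` is a "no entrance" boundary for the potential `W`:
`∫_c^{y0} (∑_n I_n^W(y)) m'(y) dy = +∞`. -/
def noEntranceTop (y0 : EReal) (a b : ℝ → ℝ) (c : ℝ) (W : ℝ → ℝ) : Prop :=
  ∫⁻ y in {y : ℝ | c < y ∧ (y : EReal) < y0},
    (∑' n : ℕ, ENNReal.ofReal (Ifun a b c W n y)) * ENNReal.ofReal (mder a b c y) = ⊤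

/-- `x0` is a "no entrance" boundary for the potential `W`:
`∫_{x0}^c (∑_n J_n^W(y)) m'(y) dy = +∞`. -/
def noEntranceBot (x0 : EReal) (a b : ℝ → ℝ) (c : ℝ) (W : ℝ → ℝ) : Prop :=
  ∫⁻ y in {y : ℝ | x0 < (y : EReal) ∧ y < c},
    (∑' n : ℕ, ENNReal.ofReal (Jfun a b c W n y)) * ENNReal.ofReal (mder a b c y) = ⊤

lemma isOpen_EI (x0 y0 : EReal) : IsOpen (EI x0 y0) := by
  have : EI x0 y0 = ((↑) : ℝ → EReal) ⁻¹' (Ioo x0 y0) := rfl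
  rw [this]
  exact isOpen_Ioo.preimage continuous_coe_real_ereal

lemma EI_subset {x0 y0 : EReal} {p q : ℝ} (hp : p ∈ EI x0 y0) (hq : q ∈ EI x0 y0) :
    Icc p q ⊆ EI x0 y0 := fun t ht =>
  ⟨lt_of_lt_of_le hp.1 (by exact_mod_cast ht.1), lt_of_le_of_lt (by exact_mod_cast ht.2) hq.2⟩

lemma integrand_nonneg {x0 y0 : EReal} {a b V : ℝ → ℝ} {c : ℝ}
    (hapos : ∀ᵐ x ∂(volume.restrict (EI x0 y0)), 0 < a x)
    (hVnn : ∀ x ∈ EI x0 y0, 0 ≤ V x)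
    {h : ℝ → ℝ} {p q : ℝ} (hsub : Icc p q ⊆ EI x0 y0)
    (hh : ∀ t ∈ Icc p q, 0 ≤ h t) (hpq : p ≤ q) :
    0 ≤ ∫ t in p..q, mder a b c t * V t * h t := by
  apply intervalIntegral.integral_nonneg_of_ae_restrict hpq
  have h1 : ∀ᵐ t ∂(volume.restrict (Icc p q)), 0 < a t :=
    ae_restrict_of_ae_restrict_of_subset hsub hapos
  have h2 : ∀ᵐ t ∂(volume.restrict (Icc p q)), t ∈ Icc p q :=
    ae_restrict_mem measurableSet_Icc
  filter_upwards [h1, h2] with t hta htm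
  have htE : t ∈ EI x0 y0 := hsub htm
  have hm : 0 ≤ mder a b c t :=
    mul_nonneg (one_div_pos.mpr hta).le (Real.exp_pos _).le
  exact mul_nonneg (mul_nonneg hm (hVnn t htE)) (hh t htm)

lemma right_prop {x0 y0 : EReal} {a b V : ℝ → ℝ} {c : ℝ}
    (hapos : ∀ᵐ x ∂(volume.restrict (EI x0 y0)), 0 < a x)
    (hVnn : ∀ x ∈ EI x0 y0, 0 ≤ V x)
    {h h' : ℝ → ℝ}
    (hcont : ContinuousOn h' (EI x0 y0))
    (hder : ∀ x ∈ EI x0 y0, HasDerivAt h (h' x) x)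
    (hsol : ∀ x ∈ EI x0 y0, ∀ y ∈ EI x0 y0, x ≤ y →
      h' y / sder a b c y - h' x / sder a b c x =
        ∫ t in x..y, mder a b c t * V t * h t)
    {c1 : ℝ} (hc1 : c1 ∈ EI x0 y0) (hhc1 : 0 < h c1) (hd : 0 < h' c1)
    {y : ℝ} (hy : y ∈ EI x0 y0) (hcy : c1 < y) : 0 < h' y := by
  set S := {z ∈ Icc c1 y | ∀ t ∈ Icc c1 z, 0 < h' t} with hS
  have hSne : c1 ∈ S := by
    refine ⟨⟨le_rfl, hcy.le⟩, fun t ht => ?_⟩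
    have : t = c1 := le_antisymm ht.2 ht.1
    rw [this]; exact hd
  have hbdd : BddAbove S := ⟨y, fun z hz => hz.1.2⟩
  set u := sSup S with hu
  have huy : u ≤ y := csSup_le ⟨c1, hSne⟩ (fun z hz => hz.1.2)
  have hcu : c1 ≤ u := le_csSup hbdd hSne
  have hposIco : ∀ t ∈ Ico c1 u, 0 < h' t := by
    intro t ht
    obtain ⟨z, hzS, htz⟩ := exists_lt_of_lt_csSup ⟨c1, hSne⟩ ht.2
    exact hzS.2 t ⟨ht.1, htz.le⟩
  have hsubEI : Icc c1 u ⊆ EI x0 y0 :=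
    (Icc_subset_Icc_right huy).trans (EI_subset hc1 hy)
  have huEI : u ∈ EI x0 y0 := hsubEI ⟨hcu, le_rfl⟩
  have hmono : StrictMonoOn h (Icc c1 u) := by
    apply strictMonoOn_of_deriv_pos (convex_Icc _ _)
    · intro t ht; exact (hder t (hsubEI ht)).continuousAt.continuousWithinAt
    · intro t ht
      rw [interior_Icc] at ht
      rw [(hder t (hsubEI (Ioo_subset_Icc_self ht))).deriv]
      exact hposIco t ⟨ht.1.le, ht.2⟩
  have hhpos : ∀ t ∈ Icc c1 u, 0 ≤ h t := by
    intro t ht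
    rcases eq_or_lt_of_le ht.1 with rfl | hlt
    · exact hhc1.le
    · exact (hhc1.trans (hmono ⟨le_rfl, hcu⟩ ht hlt)).le
  have hint : 0 ≤ ∫ t in c1..u, mder a b c t * V t * h t :=
    integrand_nonneg hapos hVnn hsubEI hhpos hcu
  have hsu : 0 < sder a b c u := Real.exp_pos _
  have hsc : 0 < sder a b c c1 := Real.exp_pos _
  have hkey := hsol c1 hc1 u huEI hcu
  have h'u : 0 < h' u := by
    have h1 : 0 < h' c1 / sder a b c c1 := div_pos hd hsc
    have h2 : 0 < h' u / sder a b c u := by linarith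
    have h3 := mul_pos h2 hsu
    rwa [div_mul_cancel₀ _ hsu.ne'] at h3
  rcases eq_or_lt_of_le huy with heq | hulty
  · rw [← heq]; exact h'u
  exfalso
  have hcont_u : ContinuousAt h' u := hcont.continuousAt ((isOpen_EI x0 y0).mem_nhds huEI)
  have hev : ∀ᶠ t in nhds u, 0 < h' t := hcont_u (Ioi_mem_nhds h'u)
  obtain ⟨ε, hε, hball⟩ := Metric.eventually_nhds_iff.mp hev
  set z := min (u + ε / 2) (y) with hz
  have huz : u < z := lt_min (by linarith) hulty
  have hzS : z ∈ S := by
    refine ⟨⟨hcu.trans huz.le, min_le_right _ _⟩, fun t ht => ?_⟩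
    rcases lt_or_ge t u with h1 | h1
    · exact hposIco t ⟨ht.1, h1⟩
    · apply hball
      rw [Real.dist_eq, abs_of_nonneg (by linarith)]
      have : t ≤ u + ε / 2 := ht.2.trans (min_le_left _ _)
      linarith
  exact absurd (le_csSup hbdd hzS) (not_le.mpr huz)

lemma left_prop {x0 y0 : EReal} {a b V : ℝ → ℝ} {c : ℝ}
    (hapos : ∀ᵐ x ∂(volume.restrict (EI x0 y0)), 0 < a x)
    (hVnn : ∀ x ∈ EI x0 y0, 0 ≤ V x)
    {h h' : ℝ → ℝ}
    (hcont : ContinuousOn h' (EI x0 y0))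
    (hder : ∀ x ∈ EI x0 y0, HasDerivAt h (h' x) x)
    (hsol : ∀ x ∈ EI x0 y0, ∀ y ∈ EI x0 y0, x ≤ y →
      h' y / sder a b c y - h' x / sder a b c x =
        ∫ t in x..y, mder a b c t * V t * h t)
    {c1 : ℝ} (hc1 : c1 ∈ EI x0 y0) (hhc1 : 0 < h c1) (hd : h' c1 < 0)
    {y : ℝ} (hy : y ∈ EI x0 y0) (hcy : y < c1) : h' y < 0 := by
  set S := {z ∈ Icc y c1 | ∀ t ∈ Icc z c1, h' t < 0} with hS
  have hSne : c1 ∈ S := by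
    refine ⟨⟨hcy.le, le_rfl⟩, fun t ht => ?_⟩
    have : t = c1 := le_antisymm ht.2 ht.1
    rw [this]; exact hd
  have hbdd : BddBelow S := ⟨y, fun z hz => hz.1.1⟩
  set u := sInf S with hu
  have huy : y ≤ u := le_csInf ⟨c1, hSne⟩ (fun z hz => hz.1.1)
  have hcu : u ≤ c1 := csInf_le hbdd hSne
  have hnegIoc : ∀ t ∈ Ioc u c1, h' t < 0 := by
    intro t ht
    obtain ⟨z, hzS, htz⟩ := exists_lt_of_csInf_lt ⟨c1, hSne⟩ ht.1
    exact hzS.2 t ⟨htz.le, ht.2⟩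
  have hsubEI : Icc u c1 ⊆ EI x0 y0 :=
    (Icc_subset_Icc_left huy).trans (EI_subset hy hc1)
  have huEI : u ∈ EI x0 y0 := hsubEI ⟨le_rfl, hcu⟩
  have hmono : StrictAntiOn h (Icc u c1) := by
    apply strictAntiOn_of_deriv_neg (convex_Icc _ _)
    · intro t ht; exact (hder t (hsubEI ht)).continuousAt.continuousWithinAt
    · intro t ht
      rw [interior_Icc] at ht
      rw [(hder t (hsubEI (Ioo_subset_Icc_self ht))).deriv]
      exact hnegIoc t ⟨ht.1, ht.2.le⟩
  have hhpos : ∀ t ∈ Icc u c1, 0 ≤ h t := by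
    intro t ht
    rcases eq_or_lt_of_le ht.2 with rfl | hlt
    · exact hhc1.le
    · exact (hhc1.trans (hmono ht ⟨hcu, le_rfl⟩ hlt)).le
  have hint : 0 ≤ ∫ t in u..c1, mder a b c t * V t * h t :=
    integrand_nonneg hapos hVnn hsubEI hhpos hcu
  have hsu : 0 < sder a b c u := Real.exp_pos _
  have hsc : 0 < sder a b c c1 := Real.exp_pos _
  have hkey := hsol u huEI c1 hc1 hcu
  have h'u : h' u < 0 := by
    have h1 : h' c1 / sder a b c c1 < 0 := div_neg_of_neg_of_pos hd hsc
    have h2 : h' u / sder a b c u < 0 := by linarith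
    have h3 := mul_neg_of_neg_of_pos h2 hsu
    rwa [div_mul_cancel₀ _ hsu.ne'] at h3
  rcases eq_or_lt_of_le huy with heq | hulty
  · rw [heq]; exact h'u
  exfalso
  have hcont_u : ContinuousAt h' u := hcont.continuousAt ((isOpen_EI x0 y0).mem_nhds huEI)
  have hev : ∀ᶠ t in nhds u, h' t < 0 := hcont_u (Iio_mem_nhds h'u)
  obtain ⟨ε, hε, hball⟩ := Metric.eventually_nhds_iff.mp hev
  set z := max (u - ε / 2) y with hz
  have huz : z < u := max_lt (by linarith) hulty
  have hzS : z ∈ S := by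
    refine ⟨⟨le_max_right _ _, huz.le.trans hcu⟩, fun t ht => ?_⟩
    rcases lt_or_ge u t with h1 | h1
    · exact hnegIoc t ⟨h1, ht.2⟩
    · apply hball
      rw [Real.dist_eq, abs_of_nonpos (by linarith)]
      have : u - ε / 2 ≤ t := (le_max_left _ _).trans ht.1
      linarith
  exact absurd (csInf_le hbdd hzS) (not_le.mpr huz)

/-- if `h` is a `C¹` solution of `(h'/s')' = m' V h` on `(x0, y0)` with
`h(c1) > 0`, then `h'(c1) > 0` propagates to the right and `h'(c1) < 0` propagates to
the left. -/
theorem stmt3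
    (x0 y0 : EReal) (hxy : x0 < y0)
    (a b V : ℝ → ℝ) (c : ℝ)
    (hc : x0 < (c : EReal) ∧ (c : EReal) < y0)
    (ha : Measurable a) (hb : Measurable b) (hV : Measurable V)
    (haB : LocEssBdd x0 y0 a) (hbB : LocEssBdd x0 y0 b)
    (hVB : LocEssBdd x0 y0 V) (hainvB : LocEssBdd x0 y0 (fun x => 1 / a x))
    (hapos : ∀ᵐ x ∂(volume.restrict (EI x0 y0)), 0 < a x)
    (hVnn : ∀ x ∈ EI x0 y0, 0 ≤ V x)
    (h h' : ℝ → ℝ)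
    (hcont : ContinuousOn h' (EI x0 y0))
    (hder : ∀ x ∈ EI x0 y0, HasDerivAt h (h' x) x)
    (hsol : ∀ x ∈ EI x0 y0, ∀ y ∈ EI x0 y0, x ≤ y →
      h' y / sder a b c y - h' x / sder a b c x =
        ∫ t in x..y, mder a b c t * V t * h t)
    (c1 : ℝ) (hc1 : c1 ∈ EI x0 y0) (hhc1 : 0 < h c1) :
    (0 < h' c1 → ∀ y ∈ EI x0 y0, c1 < y → 0 < h' y) ∧
    (h' c1 < 0 → ∀ y ∈ EI x0 y0, y < c1 → h' y < 0) := by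
  constructor
  · intro hd y hy hcy
    exact right_prop hapos hVnn hcont hder hsol hc1 hhc1 hd hy hcy
  · intro hd y hy hcy
    exact left_prop hapos hVnn hcont hder hsol hc1 hhc1 hd hy hcy
end
end

section
/- Assume V(x) ≥ δ > 0 almost everywhere on (x0,y0). Then there exist two strictly positive C¹ functions h1, h2 on (x0,y0) which are solutions of (h'/s')' = m' V h (meaning h_k'(y)/s'(y) − h_k'(x)/s'(x) = ∫_x^y m'(t) V(t) h_k(t) dt for all x ≤ y) and such that h1'(x) > 0 and h2'(x) < 0 for all x ∈ (x0,y0). -/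
open MeasureTheory Set Filter

noncomputable section

namespace Feller

/-- The product `m' V`. -/
def Kf (a b V : ℝ → ℝ) (c : ℝ) : ℝ → ℝ := fun t => mder a b c t * V t

/-- Bundle of all hypotheses. -/
structure Hyp (x0 y0 : EReal) (a b V : ℝ → ℝ) (c δ : ℝ) : Prop where
  hc1 : x0 < (c : EReal)
  hc2 : (c : EReal) < y0
  ha : Measurable a
  hb : Measurable b
  hV : Measurable V
  hbB : LocEssBdd x0 y0 b
  hVB : LocEssBdd x0 y0 V
  hainvB : LocEssBdd x0 y0 (fun x => 1 / a x)
  hapos : ∀ᵐ x ∂(volume.restrict (EI x0 y0)), 0 < a x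
  hVnn : ∀ x ∈ EI x0 y0, 0 ≤ V x
  hδ : 0 < δ
  hVδ : ∀ᵐ x ∂(volume.restrict (EI x0 y0)), δ ≤ V x

variable {x0 y0 : EReal} {a b V : ℝ → ℝ} {c δ : ℝ}

lemma EI_open : IsOpen (EI x0 y0) := by
  have : EI x0 y0 = ((↑) : ℝ → EReal) ⁻¹' (Set.Ioo x0 y0) := rfl
  rw [this]; exact isOpen_Ioo.preimage continuous_coe_real_ereal

lemma EI_Icc_subset {p q : ℝ} (hp : p ∈ EI x0 y0) (hq : q ∈ EI x0 y0) :
    Icc p q ⊆ EI x0 y0 := by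
  intro z hz
  exact ⟨lt_of_lt_of_le hp.1 (EReal.coe_le_coe_iff.2 hz.1),
    lt_of_le_of_lt (EReal.coe_le_coe_iff.2 hz.2) hq.2⟩

lemma min_mem_EI {p q : ℝ} (hp : p ∈ EI x0 y0) (hq : q ∈ EI x0 y0) :
    min p q ∈ EI x0 y0 := by
  rcases min_choice p q with h | h <;> rw [h] <;> assumption

lemma max_mem_EI {p q : ℝ} (hp : p ∈ EI x0 y0) (hq : q ∈ EI x0 y0) :
    max p q ∈ EI x0 y0 := by
  rcases max_choice p q with h | h <;> rw [h] <;> assumption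

lemma EI_uIcc_subset {p q : ℝ} (hp : p ∈ EI x0 y0) (hq : q ∈ EI x0 y0) :
    Set.uIcc p q ⊆ EI x0 y0 := by
  rw [Set.uIcc]
  exact EI_Icc_subset (min_mem_EI hp hq) (max_mem_EI hp hq)

lemma exists_lt_EI {y : ℝ} (hy : y ∈ EI x0 y0) : ∃ z ∈ EI x0 y0, z < y := by
  obtain ⟨r, hr1, hr2⟩ := EReal.exists_rat_btwn_of_lt hy.1
  exact ⟨(r : ℝ), ⟨hr1, lt_trans hr2 hy.2⟩, EReal.coe_lt_coe_iff.1 hr2⟩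

lemma exists_gt_EI {y : ℝ} (hy : y ∈ EI x0 y0) : ∃ z ∈ EI x0 y0, y < z := by
  obtain ⟨r, hr1, hr2⟩ := EReal.exists_rat_btwn_of_lt hy.2
  exact ⟨(r : ℝ), ⟨lt_trans hy.1 hr1, hr2⟩, EReal.coe_lt_coe_iff.1 hr1⟩

lemma Hyp.cmem (H : Hyp x0 y0 a b V c δ) : c ∈ EI x0 y0 := ⟨H.hc1, H.hc2⟩

lemma ae_sub {P : ℝ → Prop} {s t : Set ℝ} (hst : s ⊆ t)
    (h : ∀ᵐ x ∂(volume.restrict t), P x) : ∀ᵐ x ∂(volume.restrict s), P x :=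
  ae_restrict_of_ae_restrict_of_subset hst h

lemma integrableOn_Icc_of_bound {f : ℝ → ℝ} {p q C : ℝ}
    (hm : AEStronglyMeasurable f (volume.restrict (Icc p q)))
    (hC : ∀ᵐ x ∂(volume.restrict (Icc p q)), |f x| ≤ C) :
    IntegrableOn f (Icc p q) volume := by
  refine Integrable.mono' (g := fun _ => C) ?_ hm (by simpa using hC)
  exact integrableOn_const measure_Icc_lt_top.ne

lemma intervalIntegrable_of_bound {f : ℝ → ℝ} {p q C : ℝ}
    (hm : AEStronglyMeasurable f (volume.restrict (Icc (min p q) (max p q))))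
    (hC : ∀ᵐ x ∂(volume.restrict (Icc (min p q) (max p q))), |f x| ≤ C) :
    IntervalIntegrable f volume p q := by
  rw [intervalIntegrable_iff]
  exact (integrableOn_Icc_of_bound hm hC).mono_set Set.uIoc_subset_uIcc

lemma continuousOn_primitive_of_intInt {f : ℝ → ℝ} {s : Set ℝ} {c : ℝ} (hs : IsOpen s)
    (hsub : ∀ p q : ℝ, p ∈ s → q ∈ s → Set.uIcc p q ⊆ s) (hc : c ∈ s)
    (hint : ∀ p q : ℝ, p ∈ s → q ∈ s → IntervalIntegrable f volume p q) :
    ContinuousOn (fun y => ∫ t in c..y, f t) s := by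
  intro x hx
  obtain ⟨ε, hε, hball⟩ := Metric.isOpen_iff.1 hs x hx
  have hp : x - ε / 2 ∈ s := by
    apply hball; rw [Metric.mem_ball, Real.dist_eq]
    rw [abs_of_nonpos (by linarith)]; linarith
  have hq : x + ε / 2 ∈ s := by
    apply hball; rw [Metric.mem_ball, Real.dist_eq]
    rw [abs_of_nonneg (by linarith)]; linarith
  have hmin : min c (x - ε / 2) ∈ s := by
    rcases min_choice c (x - ε / 2) with h | h <;> rw [h] <;> assumption
  have hmax : max c (x + ε / 2) ∈ s := by
    rcases max_choice c (x + ε / 2) with h | h <;> rw [h] <;> assumption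
  have hcw : ContinuousWithinAt (fun y => ∫ t in c..y, f t) (Icc (x - ε / 2) (x + ε / 2)) x :=
    intervalIntegral.continuousWithinAt_primitive (measure_singleton x)
      (hint _ _ hmin hmax)
  exact (hcw.continuousAt (Icc_mem_nhds (by linarith) (by linarith))).continuousWithinAt

/-! ### Bounds on coefficients -/

lemma Hyp.bound_ba (H : Hyp x0 y0 a b V c δ) {p q : ℝ} (hp : p ∈ EI x0 y0)
    (hq : q ∈ EI x0 y0) :
    ∃ C : ℝ, ∀ᵐ x ∂(volume.restrict (Icc p q)), |b x / a x| ≤ C := by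
  obtain ⟨Cb, hCb⟩ := H.hbB p q hp.1 hq.2
  obtain ⟨Ca, hCa⟩ := H.hainvB p q hp.1 hq.2
  refine ⟨max Cb 0 * max Ca 0, ?_⟩
  filter_upwards [hCb, hCa] with x h1 h2
  have : b x / a x = b x * (1 / a x) := by ring
  rw [this, abs_mul]
  exact mul_le_mul (h1.trans (le_max_left _ _)) (h2.trans (le_max_left _ _))
    (abs_nonneg _) (le_max_right _ _)

lemma Hyp.ba_intInt (H : Hyp x0 y0 a b V c δ) {p q : ℝ} (hp : p ∈ EI x0 y0)
    (hq : q ∈ EI x0 y0) : IntervalIntegrable (fun t => b t / a t) volume p q := by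
  obtain ⟨C, hC⟩ := H.bound_ba (min_mem_EI hp hq) (max_mem_EI hp hq)
  exact intervalIntegrable_of_bound ((H.hb.div H.ha).aestronglyMeasurable) hC

/-- primitive of `b/a`. -/
def sba (a b : ℝ → ℝ) (c : ℝ) : ℝ → ℝ := fun x => ∫ t in c..x, b t / a t

lemma Hyp.sba_cont (H : Hyp x0 y0 a b V c δ) : ContinuousOn (sba a b c) (EI x0 y0) :=
  continuousOn_primitive_of_intInt EI_open (fun _ _ => EI_uIcc_subset) H.cmem
    (fun _ _ hp hq => H.ba_intInt hp hq)

lemma sder_pos (x : ℝ) : 0 < sder a b c x := Real.exp_pos _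

lemma sder_eq_exp (x : ℝ) : sder a b c x = Real.exp (-(sba a b c x)) := rfl

lemma mder_eq_exp (x : ℝ) : mder a b c x = (1 / a x) * Real.exp (sba a b c x) := rfl

lemma Hyp.sder_cont (H : Hyp x0 y0 a b V c δ) : ContinuousOn (sder a b c) (EI x0 y0) := by
  have : ContinuousOn (fun x => Real.exp (-(sba a b c x))) (EI x0 y0) :=
    Real.continuous_exp.comp_continuousOn H.sba_cont.neg
  exact this

lemma Hyp.exp_sba_cont (H : Hyp x0 y0 a b V c δ) :
    ContinuousOn (fun x => Real.exp (sba a b c x)) (EI x0 y0) :=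
  Real.continuous_exp.comp_continuousOn H.sba_cont

lemma Hyp.mder_pos_ae (H : Hyp x0 y0 a b V c δ) :
    ∀ᵐ x ∂(volume.restrict (EI x0 y0)), 0 < mder a b c x := by
  filter_upwards [H.hapos] with x hx
  exact mul_pos (by positivity) (Real.exp_pos _)

lemma Hyp.K_nonneg_ae (H : Hyp x0 y0 a b V c δ) :
    ∀ᵐ x ∂(volume.restrict (EI x0 y0)), 0 ≤ Kf a b V c x := by
  filter_upwards [H.mder_pos_ae, ae_restrict_mem EI_open.measurableSet] with x h1 h2
  exact mul_nonneg h1.le (H.hVnn x h2)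

lemma Hyp.K_ge_ae (H : Hyp x0 y0 a b V c δ) :
    ∀ᵐ x ∂(volume.restrict (EI x0 y0)), δ * mder a b c x ≤ Kf a b V c x := by
  filter_upwards [H.mder_pos_ae, H.hVδ] with x h1 h2
  calc δ * mder a b c x = mder a b c x * δ := by ring
  _ ≤ mder a b c x * V x := mul_le_mul_of_nonneg_left h2 h1.le

lemma Hyp.mder_aesm (H : Hyp x0 y0 a b V c δ) {s : Set ℝ} (hsm : MeasurableSet s)
    (hsub : s ⊆ EI x0 y0) : AEStronglyMeasurable (mder a b c) (volume.restrict s) := by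
  have h1 : AEStronglyMeasurable (fun x => 1 / a x) (volume.restrict s) :=
    (measurable_const.div H.ha).aestronglyMeasurable
  have h2 : AEStronglyMeasurable (fun x => Real.exp (sba a b c x)) (volume.restrict s) :=
    (H.exp_sba_cont.mono hsub).aestronglyMeasurable hsm
  exact h1.mul h2

lemma Hyp.K_aesm (H : Hyp x0 y0 a b V c δ) {s : Set ℝ} (hsm : MeasurableSet s)
    (hsub : s ⊆ EI x0 y0) : AEStronglyMeasurable (Kf a b V c) (volume.restrict s) :=
  (H.mder_aesm hsm hsub).mul H.hV.aestronglyMeasurable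

lemma Hyp.mder_bound (H : Hyp x0 y0 a b V c δ) {p q : ℝ} (hp : p ∈ EI x0 y0)
    (hq : q ∈ EI x0 y0) :
    ∃ C : ℝ, ∀ᵐ x ∂(volume.restrict (Icc p q)), |mder a b c x| ≤ C := by
  obtain ⟨Ca, hCa⟩ := H.hainvB p q hp.1 hq.2
  obtain ⟨Ce, hCe⟩ := isCompact_Icc.exists_bound_of_continuousOn
    ((H.exp_sba_cont.mono (EI_Icc_subset hp hq)))
  refine ⟨max Ca 0 * max Ce 0, ?_⟩
  filter_upwards [hCa, ae_restrict_mem measurableSet_Icc] with x h1 h2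
  rw [mder_eq_exp, abs_mul]
  refine mul_le_mul (h1.trans (le_max_left _ _)) ?_ (abs_nonneg _) (le_max_right _ _)
  have h3 : |Real.exp (sba a b c x)| ≤ Ce := by
    simpa [Real.norm_eq_abs] using hCe x h2
  exact h3.trans (le_max_left _ _)

lemma Hyp.K_bound (H : Hyp x0 y0 a b V c δ) {p q : ℝ} (hp : p ∈ EI x0 y0)
    (hq : q ∈ EI x0 y0) :
    ∃ C : ℝ, 0 ≤ C ∧ ∀ᵐ x ∂(volume.restrict (Icc p q)), |Kf a b V c x| ≤ C := by
  obtain ⟨Cm, hCm⟩ := H.mder_bound hp hq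
  obtain ⟨Cv, hCv⟩ := H.hVB p q hp.1 hq.2
  refine ⟨max Cm 0 * max Cv 0, by positivity, ?_⟩
  filter_upwards [hCm, hCv] with x h1 h2
  rw [Kf, abs_mul]
  exact mul_le_mul (h1.trans (le_max_left _ _)) (h2.trans (le_max_left _ _))
    (abs_nonneg _) (le_max_right _ _)

lemma Hyp.mder_intInt (H : Hyp x0 y0 a b V c δ) {p q : ℝ} (hp : p ∈ EI x0 y0)
    (hq : q ∈ EI x0 y0) : IntervalIntegrable (mder a b c) volume p q := by
  obtain ⟨C, hC⟩ := H.mder_bound (min_mem_EI hp hq) (max_mem_EI hp hq)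
  exact intervalIntegrable_of_bound
    (H.mder_aesm measurableSet_Icc (EI_Icc_subset (min_mem_EI hp hq) (max_mem_EI hp hq))) hC

lemma Hyp.K_mul_integrableOn (H : Hyp x0 y0 a b V c δ) {g : ℝ → ℝ}
    (hg : ContinuousOn g (EI x0 y0)) {p q : ℝ} (hp : p ∈ EI x0 y0) (hq : q ∈ EI x0 y0) :
    IntegrableOn (fun t => Kf a b V c t * g t) (Icc p q) volume := by
  have hsub : Icc p q ⊆ EI x0 y0 := EI_Icc_subset hp hq
  obtain ⟨C, hC0, hC⟩ := H.K_bound hp hq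
  obtain ⟨Cg, hCg⟩ := isCompact_Icc.exists_bound_of_continuousOn (hg.mono hsub)
  refine integrableOn_Icc_of_bound (C := C * Cg) ?_ ?_
  · exact (H.K_aesm measurableSet_Icc hsub).mul
      ((hg.mono hsub).aestronglyMeasurable measurableSet_Icc)
  · filter_upwards [hC, ae_restrict_mem measurableSet_Icc] with x h1 h2
    rw [abs_mul]
    exact mul_le_mul h1 (Real.norm_eq_abs _ ▸ hCg x h2) (abs_nonneg _) hC0

lemma Hyp.K_mul_intInt (H : Hyp x0 y0 a b V c δ) {g : ℝ → ℝ}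
    (hg : ContinuousOn g (EI x0 y0)) {p q : ℝ} (hp : p ∈ EI x0 y0) (hq : q ∈ EI x0 y0) :
    IntervalIntegrable (fun t => Kf a b V c t * g t) volume p q := by
  rw [intervalIntegrable_iff]
  exact (H.K_mul_integrableOn hg (min_mem_EI hp hq) (max_mem_EI hp hq)).mono_set
    Set.uIoc_subset_uIcc

lemma Hyp.integral_mder_pos (H : Hyp x0 y0 a b V c δ) {p q : ℝ} (hp : p ∈ EI x0 y0)
    (hq : q ∈ EI x0 y0) (hpq : p < q) : 0 < ∫ t in p..q, mder a b c t := by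
  have hsub : Ioc p q ⊆ EI x0 y0 := Set.Ioc_subset_Icc_self.trans (EI_Icc_subset hp hq)
  have hpos : ∀ᵐ x ∂(volume.restrict (Ioc p q)), 0 < mder a b c x :=
    ae_sub hsub H.mder_pos_ae
  have hint : IntegrableOn (mder a b c) (Ioc p q) volume := by
    have := (H.mder_intInt hp hq)
    rw [intervalIntegrable_iff_integrableOn_Ioc_of_le hpq.le] at this
    exact this
  rw [intervalIntegral.integral_of_le hpq.le]
  rw [setIntegral_pos_iff_support_of_nonneg_ae (hpos.mono fun x hx => hx.le) hint]
  have hnull : volume ({x | x ∉ Function.support (mder a b c)} ∩ Ioc p q) = 0 := by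
    have : ∀ᵐ x ∂(volume.restrict (Ioc p q)), x ∈ Function.support (mder a b c) :=
      hpos.mono fun x hx => ne_of_gt hx
    rw [← Measure.restrict_apply' measurableSet_Ioc]
    exact this
  have hle : volume (Ioc p q) ≤ volume (Function.support (mder a b c) ∩ Ioc p q) := by
    have hsubu : Ioc p q ⊆ (Function.support (mder a b c) ∩ Ioc p q) ∪
        ({x | x ∉ Function.support (mder a b c)} ∩ Ioc p q) := by
      intro x hx
      by_cases h : x ∈ Function.support (mder a b c)
      · exact Or.inl ⟨h, hx⟩
      · exact Or.inr ⟨h, hx⟩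
    refine (measure_mono hsubu).trans ?_
    refine (measure_union_le _ _).trans ?_
    rw [hnull, add_zero]
  have : (0 : ENNReal) < volume (Ioc p q) := by
    rw [Real.volume_Ioc]
    exact ENNReal.ofReal_pos.2 (by linarith)
  exact lt_of_lt_of_le this hle

lemma Hyp.integral_K_pos (H : Hyp x0 y0 a b V c δ) {g : ℝ → ℝ}
    (hg : ContinuousOn g (EI x0 y0)) {p q : ℝ} (hp : p ∈ EI x0 y0) (hq : q ∈ EI x0 y0)
    (hpq : p < q) (hg1 : ∀ t ∈ Icc p q, 1 ≤ g t) :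
    0 < ∫ t in p..q, Kf a b V c t * g t := by
  have hsub : Icc p q ⊆ EI x0 y0 := EI_Icc_subset hp hq
  have h1 : 0 < δ * ∫ t in p..q, mder a b c t :=
    mul_pos H.hδ (H.integral_mder_pos hp hq hpq)
  have h2 : δ * ∫ t in p..q, mder a b c t = ∫ t in p..q, δ * mder a b c t := by
    rw [intervalIntegral.integral_const_mul]
  refine lt_of_lt_of_le (h2 ▸ h1) ?_
  apply intervalIntegral.integral_mono_ae_restrict hpq.le
    ((H.mder_intInt hp hq).const_mul δ) (H.K_mul_intInt hg hp hq)
  filter_upwards [ae_sub hsub H.K_ge_ae, ae_sub hsub H.K_nonneg_ae,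
    ae_restrict_mem measurableSet_Icc] with x hKδ hK0 hx
  calc δ * mder a b c x ≤ Kf a b V c x := hKδ
  _ = Kf a b V c x * 1 := by ring
  _ ≤ Kf a b V c x * g x := mul_le_mul_of_nonneg_left (hg1 x hx) hK0

/-! ### Integration by parts for primitives, via Fubini -/

lemma mul_cont_integrableOn {f w : ℝ → ℝ} {y z : ℝ}
    (hf : IntegrableOn f (Icc y z) volume) (hw : ContinuousOn w (Icc y z)) :
    IntegrableOn (fun t => f t * w t) (Icc y z) volume := by
  obtain ⟨C, hC⟩ := isCompact_Icc.exists_bound_of_continuousOn hw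
  refine Integrable.mono' (g := fun t => |f t| * C) ((hf.abs).mul_const C)
    (hf.aestronglyMeasurable.mul (hw.aestronglyMeasurable measurableSet_Icc)) ?_
  filter_upwards [ae_restrict_mem measurableSet_Icc] with t ht
  rw [Real.norm_eq_abs, abs_mul]
  exact mul_le_mul_of_nonneg_left (Real.norm_eq_abs (w t) ▸ hC t ht) (abs_nonneg _)

lemma mul_cont_intervalIntegrable {f w : ℝ → ℝ} {y z : ℝ} (hyz : y ≤ z)
    (hf : IntegrableOn f (Icc y z) volume) (hw : ContinuousOn w (Icc y z)) :
    IntervalIntegrable (fun t => f t * w t) volume y z := by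
  rw [intervalIntegrable_iff_integrableOn_Ioc_of_le hyz]
  exact (mul_cont_integrableOn hf hw).mono_set Set.Ioc_subset_Icc_self

lemma integral_primitive_swap {y z : ℝ} (hyz : y ≤ z) {f g : ℝ → ℝ}
    (hf : IntegrableOn f (Icc y z) volume) (hg : IntegrableOn g (Icc y z) volume) :
    ∫ t in y..z, f t * (∫ s in y..t, g s) = ∫ s in y..z, g s * (∫ t in s..z, f t) := by
  have hf' : IntegrableOn f (Ioc y z) volume := hf.mono_set Set.Ioc_subset_Icc_self
  have hg' : IntegrableOn g (Ioc y z) volume := hg.mono_set Set.Ioc_subset_Icc_self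
  set μt := volume.restrict (Ioc y z) with hμt
  have hprod : Integrable (fun p : ℝ × ℝ => f p.1 * g p.2) (μt.prod μt) :=
    Integrable.mul_prod hf' hg'
  have hA : MeasurableSet {p : ℝ × ℝ | p.2 ≤ p.1} :=
    measurableSet_le measurable_snd measurable_fst
  set Find := ({p : ℝ × ℝ | p.2 ≤ p.1}).indicator (fun p : ℝ × ℝ => f p.1 * g p.2)
    with hFind
  have hInd : Integrable Find (μt.prod μt) := hprod.indicator hA
  have key : ∫ t, (∫ s, Find (t, s) ∂μt) ∂μt = ∫ s, (∫ t, Find (t, s) ∂μt) ∂μt :=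
    MeasureTheory.integral_integral_swap (by exact hInd)
  have hL : ∫ t in y..z, f t * (∫ s in y..t, g s) = ∫ t, (∫ s, Find (t, s) ∂μt) ∂μt := by
    rw [intervalIntegral.integral_of_le hyz]
    apply setIntegral_congr_fun measurableSet_Ioc
    intro t ht
    have h1 : ∀ s : ℝ, Find (t, s) = (Iic t).indicator (fun s => f t * g s) s := by
      intro s
      by_cases h : s ≤ t
      · rw [hFind, Set.indicator_of_mem (by simpa using h), Set.indicator_of_mem (by simpa using h)]
      · rw [hFind, Set.indicator_of_notMem (by simpa using h),
          Set.indicator_of_notMem (by simpa using h)]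
    simp only [h1]
    rw [setIntegral_indicator measurableSet_Iic]
    have h2 : Ioc y z ∩ Iic t = Ioc y t := by
      rw [Set.Ioc_inter_Iic, min_eq_right ht.2]
    rw [h2, MeasureTheory.integral_const_mul, intervalIntegral.integral_of_le ht.1.le]
  have hR : ∫ s in y..z, g s * (∫ t in s..z, f t) = ∫ s, (∫ t, Find (t, s) ∂μt) ∂μt := by
    rw [intervalIntegral.integral_of_le hyz]
    apply setIntegral_congr_fun measurableSet_Ioc
    intro s hs
    have h1 : ∀ t : ℝ, Find (t, s) = (Ici s).indicator (fun t => f t * g s) t := by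
      intro t
      by_cases h : s ≤ t
      · rw [hFind, Set.indicator_of_mem (by simpa using h), Set.indicator_of_mem (by simpa using h)]
      · rw [hFind, Set.indicator_of_notMem (by simpa using h),
          Set.indicator_of_notMem (by simpa using h)]
    simp only [h1]
    rw [setIntegral_indicator measurableSet_Ici]
    have h2 : Ioc y z ∩ Ici s = Icc s z := by
      ext t
      constructor
      · rintro ⟨⟨_, h2⟩, h3⟩; exact ⟨h3, h2⟩
      · rintro ⟨h1', h2⟩; exact ⟨⟨lt_of_lt_of_le hs.1 h1', h2⟩, h1'⟩
    rw [h2, MeasureTheory.integral_mul_const, integral_Icc_eq_integral_Ioc,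
      ← intervalIntegral.integral_of_le hs.2, mul_comm]
  rw [hL, hR, key]

lemma ibp {y z : ℝ} (hyz : y ≤ z) {f g F G : ℝ → ℝ}
    (hf : IntegrableOn f (Icc y z) volume) (hg : IntegrableOn g (Icc y z) volume)
    (hF : ∀ t ∈ Icc y z, F t = F y + ∫ s in y..t, f s)
    (hG : ∀ t ∈ Icc y z, G t = G y + ∫ s in y..t, g s) :
    F z * G z - F y * G y = ∫ t in y..z, (f t * G t + F t * g t) := by
  set Hf : ℝ → ℝ := fun t => ∫ s in y..t, f s with hHf
  set Hg : ℝ → ℝ := fun t => ∫ s in y..t, g s with hHg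
  have hfi : IntervalIntegrable f volume y z := by
    rw [intervalIntegrable_iff_integrableOn_Ioc_of_le hyz]
    exact hf.mono_set Set.Ioc_subset_Icc_self
  have hgi : IntervalIntegrable g volume y z := by
    rw [intervalIntegrable_iff_integrableOn_Ioc_of_le hyz]
    exact hg.mono_set Set.Ioc_subset_Icc_self
  have hHfc : ContinuousOn Hf (Icc y z) := by
    have := intervalIntegral.continuousOn_primitive_interval
      (a := y) (b := z) (μ := volume) (f := f) (by rwa [Set.uIcc_of_le hyz])
    rwa [Set.uIcc_of_le hyz] at this
  have hHgc : ContinuousOn Hg (Icc y z) := by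
    have := intervalIntegral.continuousOn_primitive_interval
      (a := y) (b := z) (μ := volume) (f := g) (by rwa [Set.uIcc_of_le hyz])
    rwa [Set.uIcc_of_le hyz] at this
  have hGc : ContinuousOn G (Icc y z) := by
    have h0 : ContinuousOn (fun t => G y + Hg t) (Icc y z) := continuousOn_const.add hHgc
    exact h0.congr fun t ht => hG t ht
  have hFc : ContinuousOn F (Icc y z) := by
    have h0 : ContinuousOn (fun t => F y + Hf t) (Icc y z) := continuousOn_const.add hHfc
    exact h0.congr fun t ht => hF t ht
  -- integrability of the products
  have hfG : IntervalIntegrable (fun t => f t * G t) volume y z :=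
    mul_cont_intervalIntegrable hyz hf hGc
  have hFg : IntervalIntegrable (fun t => F t * g t) volume y z := by
    have := mul_cont_intervalIntegrable hyz hg hFc
    exact this.congr (fun t _ => mul_comm (g t) (F t))
  have hfHg : IntervalIntegrable (fun t => f t * Hg t) volume y z :=
    mul_cont_intervalIntegrable hyz hf hHgc
  have hgHf : IntervalIntegrable (fun t => g t * Hf t) volume y z :=
    mul_cont_intervalIntegrable hyz hg hHfc
  -- E1
  have E1 : ∫ t in y..z, f t * G t = G y * (∫ t in y..z, f t) + ∫ t in y..z, f t * Hg t := by
    have h1 : ∫ t in y..z, f t * G t = ∫ t in y..z, (G y * f t + f t * Hg t) := by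
      apply intervalIntegral.integral_congr
      intro t ht
      rw [Set.uIcc_of_le hyz] at ht
      show f t * G t = G y * f t + f t * Hg t
      rw [hG t ht]; ring
    rw [h1, intervalIntegral.integral_add (hfi.const_mul _) hfHg,
      intervalIntegral.integral_const_mul]
  -- E2
  have E2 : ∫ t in y..z, F t * g t = F y * (∫ t in y..z, g t) + ∫ t in y..z, g t * Hf t := by
    have h1 : ∫ t in y..z, F t * g t = ∫ t in y..z, (F y * g t + g t * Hf t) := by
      apply intervalIntegral.integral_congr
      intro t ht
      rw [Set.uIcc_of_le hyz] at ht
      show F t * g t = F y * g t + g t * Hf t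
      rw [hF t ht]; ring
    rw [h1, intervalIntegral.integral_add (hgi.const_mul _) hgHf,
      intervalIntegral.integral_const_mul]
  -- E3 : Fubini
  have E3 : (∫ t in y..z, f t * Hg t) =
      (∫ t in y..z, f t) * (∫ t in y..z, g t) - ∫ t in y..z, g t * Hf t := by
    rw [integral_primitive_swap hyz hf hg]
    have h1 : ∫ s in y..z, g s * (∫ t in s..z, f t) =
        ∫ s in y..z, (g s * (∫ t in y..z, f t) - g s * Hf s) := by
      apply intervalIntegral.integral_congr
      intro s hs
      rw [Set.uIcc_of_le hyz] at hs
      show g s * (∫ t in s..z, f t) = g s * (∫ t in y..z, f t) - g s * Hf s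
      have hadd : Hf s + (∫ t in s..z, f t) = ∫ t in y..z, f t :=
        intervalIntegral.integral_add_adjacent_intervals
          (hfi.mono_set (by rw [Set.uIcc_of_le hyz, Set.uIcc_of_le hs.1]; exact Icc_subset_Icc le_rfl hs.2))
          (hfi.mono_set (by rw [Set.uIcc_of_le hyz, Set.uIcc_of_le hs.2]; exact Icc_subset_Icc hs.1 le_rfl))
      have : (∫ t in s..z, f t) = (∫ t in y..z, f t) - Hf s := by linarith
      rw [this]; ring
    rw [h1, intervalIntegral.integral_sub (hgi.mul_const _) hgHf,
      intervalIntegral.integral_mul_const]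
    ring
  have E4F : F z = F y + ∫ t in y..z, f t := hF z ⟨hyz, le_rfl⟩
  have E4G : G z = G y + ∫ t in y..z, g t := hG z ⟨hyz, le_rfl⟩
  rw [intervalIntegral.integral_add hfG hFg, E1, E2, E3, E4F, E4G]
  ring

/-! ### Picard iteration -/

def pic (a b V : ℝ → ℝ) (c α β : ℝ) : ℕ → ℝ → ℝ × ℝ
  | 0 => fun _ => (α, β)
  | n + 1 => fun y =>
      (∫ r in c..y, sder a b c r * (pic a b V c α β n r).2,
       ∫ r in c..y, Kf a b V c r * (pic a b V c α β n r).1)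

lemma Hyp.pic_cont (H : Hyp x0 y0 a b V c δ) (α β : ℝ) : ∀ n : ℕ,
    ContinuousOn (fun y => (pic a b V c α β n y).1) (EI x0 y0) ∧
    ContinuousOn (fun y => (pic a b V c α β n y).2) (EI x0 y0) := by
  intro n
  induction n with
  | zero => exact ⟨continuousOn_const, continuousOn_const⟩
  | succ n ih =>
    constructor
    · apply continuousOn_primitive_of_intInt EI_open (fun _ _ => EI_uIcc_subset) H.cmem
      intro p q hp hq
      exact ((H.sder_cont.mul ih.2).mono (EI_uIcc_subset hp hq)).intervalIntegrable
    · apply continuousOn_primitive_of_intInt EI_open (fun _ _ => EI_uIcc_subset) H.cmem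
      intro p q hp hq
      exact H.K_mul_intInt ih.1 hp hq

lemma integral_abs_pow (c y : ℝ) (n : ℕ) :
    |∫ r in c..y, |r - c| ^ n| = |y - c| ^ (n + 1) / (n + 1) := by
  rcases le_total c y with h | h
  · have hyc : (0 : ℝ) ≤ y - c := by linarith
    have h1 : ∫ r in c..y, |r - c| ^ n = ∫ r in c..y, (r - c) ^ n := by
      apply intervalIntegral.integral_congr
      intro r hr
      rw [Set.uIcc_of_le h] at hr
      show |r - c| ^ n = (r - c) ^ n
      rw [abs_of_nonneg (by linarith [hr.1] : (0:ℝ) ≤ r - c)]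
    rw [h1, intervalIntegral.integral_comp_sub_right (fun u => u ^ n) c, sub_self,
      integral_pow, zero_pow (Nat.succ_ne_zero n), sub_zero,
      abs_of_nonneg (div_nonneg (pow_nonneg hyc _) (by positivity)),
      abs_of_nonneg hyc]
  · have hyc : (0 : ℝ) ≤ c - y := by linarith
    have h1 : ∫ r in c..y, |r - c| ^ n = -∫ r in y..c, (c - r) ^ n := by
      rw [← intervalIntegral.integral_symm]
      apply intervalIntegral.integral_congr
      intro r hr
      rw [Set.uIcc_comm, Set.uIcc_of_le h] at hr
      show |r - c| ^ n = (c - r) ^ n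
      rw [abs_of_nonpos (by linarith [hr.2] : r - c ≤ 0), neg_sub]
    rw [h1, abs_neg, intervalIntegral.integral_comp_sub_left (fun u => u ^ n) c, sub_self,
      integral_pow, zero_pow (Nat.succ_ne_zero n), sub_zero,
      abs_of_nonneg (div_nonneg (pow_nonneg hyc _) (by positivity)),
      abs_of_nonpos (by linarith : y - c ≤ 0), neg_sub]

lemma Hyp.pic_bound (H : Hyp x0 y0 a b V c δ) (α β : ℝ) {p q : ℝ}
    (hp : p ∈ EI x0 y0) (hq : q ∈ EI x0 y0) (hpc : p ≤ c) (hcq : c ≤ q)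
    {S Q : ℝ} (hS0 : 0 ≤ S) (hQ0 : 0 ≤ Q)
    (hS : ∀ r ∈ Icc p q, sder a b c r ≤ S)
    (hQ : ∀ᵐ r ∂(volume.restrict (Icc p q)), |Kf a b V c r| ≤ Q) :
    ∀ n : ℕ, ∀ y ∈ Icc p q,
      |(pic a b V c α β n y).1| ≤
        max |α| |β| * max S Q ^ n * |y - c| ^ n / n.factorial ∧
      |(pic a b V c α β n y).2| ≤
        max |α| |β| * max S Q ^ n * |y - c| ^ n / n.factorial := by
  set M := max |α| |β| with hM
  set R := max S Q with hR
  have hM0 : 0 ≤ M := le_trans (abs_nonneg α) (le_max_left _ _)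
  have hR0 : 0 ≤ R := le_trans hS0 (le_max_left _ _)
  intro n
  induction n with
  | zero =>
    intro y hy
    simp only [pic, pow_zero, Nat.factorial_zero, Nat.cast_one, mul_one, one_mul]
    rw [div_one]
    exact ⟨le_max_left _ _, le_max_right _ _⟩
  | succ n ih =>
    intro y hy
    have hcm : c ∈ Icc p q := ⟨hpc, hcq⟩
    have hsub : Set.uIoc c y ⊆ Icc p q :=
      Set.uIoc_subset_uIcc.trans (Set.uIcc_subset_Icc hcm hy)
    have hfact : (0 : ℝ) < n.factorial := by positivity
    have hn1 : (0 : ℝ) < (n : ℝ) + 1 := by positivity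
    -- the integrable dominating function
    have hgc : ∀ c' : ℝ, Continuous fun t : ℝ => c' * |t - c| ^ n := by
      intro c'
      exact continuous_const.mul (((continuous_id.sub continuous_const).abs).pow n)
    have hkey : ∀ c' : ℝ, 0 ≤ c' →
        |∫ t in c..y, c' * |t - c| ^ n| = c' * |y - c| ^ (n + 1) / (n + 1) := by
      intro c' hc'
      rw [intervalIntegral.integral_const_mul, abs_mul, abs_of_nonneg hc',
        integral_abs_pow, mul_div_assoc]
    have step : ∀ (w : ℝ → ℝ) (C : ℝ), 0 ≤ C → C ≤ R →
        (∀ᵐ t ∂(volume.restrict (Set.uIoc c y)),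
          ‖w t‖ ≤ C * (M * R ^ n * |t - c| ^ n / n.factorial)) →
        IntervalIntegrable w volume c y →
        |∫ t in c..y, w t| ≤ M * R ^ (n + 1) * |y - c| ^ (n + 1) / (n + 1).factorial := by
      intro w C hC0 hCR hbd hwi
      have h1 : ‖∫ t in c..y, w t‖ ≤
          |∫ t in c..y, (C * M * R ^ n / n.factorial) * |t - c| ^ n| := by
        apply intervalIntegral.norm_integral_le_abs_of_norm_le
        · refine hbd.mono fun t ht => ht.trans (le_of_eq ?_)
          ring
        · exact (hgc _).intervalIntegrable _ _
      rw [Real.norm_eq_abs] at h1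
      have h2 : |∫ t in c..y, (C * M * R ^ n / n.factorial) * |t - c| ^ n|
          = (C * M * R ^ n / n.factorial) * |y - c| ^ (n + 1) / (n + 1) := by
        exact hkey _ (by positivity)
      refine h1.trans (h2 ▸ ?_)
      have hfs : ((n + 1).factorial : ℝ) = ((n : ℝ) + 1) * n.factorial := by
        rw [Nat.factorial_succ]; push_cast; ring
      rw [hfs]
      have goal_eq : C * M * R ^ n / (n.factorial : ℝ) * |y - c| ^ (n + 1) / ((n : ℝ) + 1) =
          C * (M * R ^ n * |y - c| ^ (n + 1) / (((n : ℝ) + 1) * (n.factorial : ℝ))) := by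
        field_simp
      have rhs_eq : M * R ^ (n + 1) * |y - c| ^ (n + 1) / (((n : ℝ) + 1) * (n.factorial : ℝ)) =
          R * (M * R ^ n * |y - c| ^ (n + 1) / (((n : ℝ) + 1) * (n.factorial : ℝ))) := by
        rw [pow_succ]; field_simp
      rw [goal_eq, rhs_eq]
      exact mul_le_mul_of_nonneg_right hCR (by positivity)
    constructor
    · show |∫ r in c..y, sder a b c r * (pic a b V c α β n r).2| ≤ _
      apply step _ S hS0 (le_max_left _ _)
      · filter_upwards [ae_restrict_mem measurableSet_uIoc] with t ht
        have htm : t ∈ Icc p q := hsub ht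
        rw [Real.norm_eq_abs, abs_mul, abs_of_nonneg (sder_pos t).le]
        exact mul_le_mul (hS t htm) (ih t htm).2 (abs_nonneg _) hS0
      · refine ((H.sder_cont.mul (H.pic_cont α β n).2).mono ?_).intervalIntegrable
        exact (EI_uIcc_subset H.cmem (EI_Icc_subset hp hq hy))
    · show |∫ r in c..y, Kf a b V c r * (pic a b V c α β n r).1| ≤ _
      apply step _ Q hQ0 (le_max_right _ _)
      · filter_upwards [ae_sub hsub hQ, ae_restrict_mem measurableSet_uIoc] with t h1 ht
        have htm : t ∈ Icc p q := hsub ht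
        rw [Real.norm_eq_abs, abs_mul]
        exact mul_le_mul h1 (ih t htm).1 (abs_nonneg _) hQ0
      · exact H.K_mul_intInt (H.pic_cont α β n).1 H.cmem (EI_Icc_subset hp hq hy)

/-! ### The solutions as sums of the iterates -/

lemma Hyp.frame (H : Hyp x0 y0 a b V c δ) {x : ℝ} (hx : x ∈ EI x0 y0) :
    ∃ p q S Q : ℝ, p ∈ EI x0 y0 ∧ q ∈ EI x0 y0 ∧ p < x ∧ x < q ∧ p ≤ c ∧ c ≤ q ∧
      0 ≤ S ∧ 0 ≤ Q ∧ (∀ r ∈ Icc p q, sder a b c r ≤ S) ∧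
      (∀ᵐ r ∂(volume.restrict (Icc p q)), |Kf a b V c r| ≤ Q) := by
  obtain ⟨p, hp, hplt⟩ := exists_lt_EI (min_mem_EI hx H.cmem)
  obtain ⟨q, hq, hqgt⟩ := exists_gt_EI (max_mem_EI hx H.cmem)
  have hpx : p < x := lt_of_lt_of_le hplt (min_le_left _ _)
  have hpc : p ≤ c := (lt_of_lt_of_le hplt (min_le_right _ _)).le
  have hxq : x < q := lt_of_le_of_lt (le_max_left _ _) hqgt
  have hcq : c ≤ q := (lt_of_le_of_lt (le_max_right _ _) hqgt).le
  obtain ⟨S, hS⟩ := isCompact_Icc.exists_bound_of_continuousOn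
    (H.sder_cont.mono (EI_Icc_subset hp hq))
  obtain ⟨Q, hQ0, hQ⟩ := H.K_bound hp hq
  have hS0 : 0 ≤ S := le_trans (norm_nonneg _) (hS p ⟨le_rfl, by linarith⟩)
  refine ⟨p, q, S, Q, hp, hq, hpx, hxq, hpc, hcq, hS0, hQ0, ?_, hQ⟩
  intro r hr
  exact (le_abs_self _).trans (Real.norm_eq_abs (sder a b c r) ▸ hS r hr)

lemma summable_aux (M R L : ℝ) : Summable (fun n : ℕ => M * (R * L) ^ n / n.factorial) := by
  have := Real.summable_pow_div_factorial (R * L)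
  simpa [mul_div_assoc] using this.mul_left M

lemma tsum_intervalIntegral_swap {f : ℕ → ℝ → ℝ} {c y : ℝ} {d : ℕ → ℝ}
    (hm : ∀ n, AEStronglyMeasurable (f n) (volume.restrict (Set.uIoc c y)))
    (hd : Summable d) (hd0 : ∀ n, 0 ≤ d n)
    (hbd : ∀ n, ∀ᵐ t ∂(volume.restrict (Set.uIoc c y)), ‖f n t‖ ≤ d n) :
    ∫ t in c..y, (∑' n, f n t) = ∑' n, ∫ t in c..y, f n t := by
  set μ := volume.restrict (Set.uIoc c y) with hμ
  have hμfin : μ Set.univ < ⊤ := by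
    rw [hμ, Measure.restrict_apply_univ, Set.uIoc]
    exact measure_Ioc_lt_top
  have hlin : ∑' n, ∫⁻ t, ‖f n t‖₊ ∂μ ≠ ⊤ := by
    have hone : ∀ n, ∫⁻ t, ‖f n t‖₊ ∂μ ≤ ENNReal.ofReal (d n) * μ Set.univ := by
      intro n
      calc ∫⁻ t, (‖f n t‖₊ : ENNReal) ∂μ ≤ ∫⁻ _, ENNReal.ofReal (d n) ∂μ := by
            apply lintegral_mono_ae
            refine (hbd n).mono fun t ht => ?_
            rw [← enorm_eq_nnnorm, ← ofReal_norm]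
            exact ENNReal.ofReal_le_ofReal ht
        _ = ENNReal.ofReal (d n) * μ Set.univ := by rw [lintegral_const]
    refine ne_top_of_le_ne_top ?_ (ENNReal.tsum_le_tsum hone)
    rw [ENNReal.tsum_mul_right]
    apply ENNReal.mul_ne_top
    · rw [← ENNReal.ofReal_tsum_of_nonneg hd0 hd]
      exact ENNReal.ofReal_ne_top
    · exact hμfin.ne
  have key : ∫ t, (∑' n, f n t) ∂μ = ∑' n, ∫ t, f n t ∂μ :=
    MeasureTheory.integral_tsum hm hlin
  rcases le_total c y with h | h
  · have huIoc : Set.uIoc c y = Ioc c y := Set.uIoc_of_le h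
    rw [intervalIntegral.integral_of_le h, ← huIoc, ← hμ, key]
    congr 1
    funext n
    rw [intervalIntegral.integral_of_le h, ← huIoc, ← hμ]
  · have huIoc : Set.uIoc c y = Ioc y c := Set.uIoc_of_ge h
    rw [intervalIntegral.integral_of_ge h, ← huIoc, ← hμ, key, ← tsum_neg]
    congr 1
    funext n
    rw [intervalIntegral.integral_of_ge h, ← huIoc, ← hμ]

/-- first component of the solution with initial data `(α, β)` at `c`. -/
def usolP (a b V : ℝ → ℝ) (c α β : ℝ) : ℝ → ℝ :=
  fun y => ∑' n, (pic a b V c α β n y).1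

/-- second component (the quasi-derivative `h'/s'`). -/
def psolP (a b V : ℝ → ℝ) (c α β : ℝ) : ℝ → ℝ :=
  fun y => ∑' n, (pic a b V c α β n y).2

lemma Hyp.pack (H : Hyp x0 y0 a b V c δ) (α β : ℝ) {x : ℝ} (hx : x ∈ EI x0 y0) :
    ∃ p q : ℝ, p ∈ EI x0 y0 ∧ q ∈ EI x0 y0 ∧ p < x ∧ x < q ∧
      p ≤ c ∧ c ≤ q ∧ ∃ S Q : ℝ, ∃ d : ℕ → ℝ, 0 ≤ S ∧ 0 ≤ Q ∧ Summable d ∧ (∀ n, 0 ≤ d n) ∧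
      (∀ r ∈ Icc p q, sder a b c r ≤ S) ∧
      (∀ᵐ r ∂(volume.restrict (Icc p q)), |Kf a b V c r| ≤ Q) ∧
      (∀ (n : ℕ), ∀ r ∈ Icc p q, |(pic a b V c α β n r).1| ≤ d n ∧
        |(pic a b V c α β n r).2| ≤ d n) := by
  obtain ⟨p, q, S, Q, hp, hq, hpx, hxq, hpc, hcq, hS0, hQ0, hS, hQ⟩ := H.frame hx
  set M := max |α| |β| with hM
  set R := max S Q with hR
  set L := q - p with hL
  have hM0 : 0 ≤ M := le_trans (abs_nonneg α) (le_max_left _ _)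
  have hR0 : 0 ≤ R := le_trans hS0 (le_max_left _ _)
  have hL0 : 0 ≤ L := by rw [hL]; linarith
  refine ⟨p, q, hp, hq, hpx, hxq, hpc, hcq,
    S, Q, fun n => M * (R * L) ^ n / n.factorial, hS0, hQ0,
    summable_aux M R L, fun n => by positivity, hS, hQ, ?_⟩
  intro n r hr
  have hb := H.pic_bound α β hp hq hpc hcq hS0 hQ0 hS hQ n r hr
  have habs : |r - c| ≤ L := by
    rw [abs_le]
    constructor
    · rw [hL]; linarith [hr.1, hcq]
    · rw [hL]; linarith [hr.2, hpc]
  have hmono : M * R ^ n * |r - c| ^ n / (n.factorial : ℝ) ≤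
      M * (R * L) ^ n / (n.factorial : ℝ) := by
    rw [mul_pow, ← mul_assoc]
    gcongr
  exact ⟨hb.1.trans hmono, hb.2.trans hmono⟩

lemma Hyp.usol_cont (H : Hyp x0 y0 a b V c δ) (α β : ℝ) :
    ContinuousOn (usolP a b V c α β) (EI x0 y0) := by
  intro x hx
  obtain ⟨p, q, hp, hq, hpx, hxq, _, _, S, Q, d, _, _, hd, _, _, _, hbd⟩ := H.pack α β hx
  have hco : ContinuousOn (usolP a b V c α β) (Icc p q) := by
    apply continuousOn_tsum (fun n => (H.pic_cont α β n).1.mono (EI_Icc_subset hp hq)) hd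
    intro n r hr
    rw [Real.norm_eq_abs]
    exact (hbd n r hr).1
  exact (hco.continuousAt (Icc_mem_nhds hpx hxq)).continuousWithinAt

lemma Hyp.psol_cont (H : Hyp x0 y0 a b V c δ) (α β : ℝ) :
    ContinuousOn (psolP a b V c α β) (EI x0 y0) := by
  intro x hx
  obtain ⟨p, q, hp, hq, hpx, hxq, _, _, S, Q, d, _, _, hd, _, _, _, hbd⟩ := H.pack α β hx
  have hco : ContinuousOn (psolP a b V c α β) (Icc p q) := by
    apply continuousOn_tsum (fun n => (H.pic_cont α β n).2.mono (EI_Icc_subset hp hq)) hd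
    intro n r hr
    rw [Real.norm_eq_abs]
    exact (hbd n r hr).2
  exact (hco.continuousAt (Icc_mem_nhds hpx hxq)).continuousWithinAt

lemma Hyp.sol_eq (H : Hyp x0 y0 a b V c δ) (α β : ℝ) {y : ℝ} (hy : y ∈ EI x0 y0) :
    usolP a b V c α β y = α + ∫ t in c..y, sder a b c t * psolP a b V c α β t ∧
    psolP a b V c α β y = β + ∫ t in c..y, Kf a b V c t * usolP a b V c α β t := by
  obtain ⟨p, q, hp, hq, hpy, hyq, hpc, hcq, S, Q, d, hS0, hQ0, hd, hd0, hS, hQ, hbd⟩ :=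
    H.pack α β hy
  have hcont := H.pic_cont α β
  have hcIcc : c ∈ Icc p q := ⟨hpc, hcq⟩
  have hyIcc : y ∈ Icc p q := ⟨hpy.le, hyq.le⟩
  have hsub : Set.uIoc c y ⊆ Icc p q :=
    Set.uIoc_subset_uIcc.trans (Set.uIcc_subset_Icc hcIcc hyIcc)
  have hsubEI : Set.uIoc c y ⊆ EI x0 y0 := hsub.trans (EI_Icc_subset hp hq)
  constructor
  · have hsum1 : Summable (fun n => (pic a b V c α β n y).1) := by
      apply Summable.of_norm_bounded hd
      intro n; rw [Real.norm_eq_abs]; exact (hbd n y hyIcc).1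
    have h0 : (pic a b V c α β 0 y).1 = α := rfl
    have e1 : usolP a b V c α β y =
        α + ∑' n, (pic a b V c α β (n + 1) y).1 := by
      rw [usolP, Summable.tsum_eq_zero_add hsum1, h0]
    have e2 : ∀ n : ℕ, (pic a b V c α β (n + 1) y).1 =
        ∫ t in c..y, sder a b c t * (pic a b V c α β n t).2 := fun n => rfl
    have e3 : (∑' n, ∫ t in c..y, sder a b c t * (pic a b V c α β n t).2)
        = ∫ t in c..y, (∑' n, sder a b c t * (pic a b V c α β n t).2) := by
      refine (tsum_intervalIntegral_swap (d := fun n => S * d n) ?_ (hd.mul_left S)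
        (fun n => mul_nonneg hS0 (hd0 n)) ?_).symm
      · intro n
        exact ((H.sder_cont.mul (hcont n).2).mono hsubEI).aestronglyMeasurable
          measurableSet_uIoc
      · intro n
        filter_upwards [ae_restrict_mem measurableSet_uIoc] with t ht
        have htm : t ∈ Icc p q := hsub ht
        rw [Real.norm_eq_abs, abs_mul, abs_of_nonneg (sder_pos t).le]
        exact mul_le_mul (hS t htm) (hbd n t htm).2 (abs_nonneg _) hS0
    have e4 : ∫ t in c..y, (∑' n, sder a b c t * (pic a b V c α β n t).2)
        = ∫ t in c..y, sder a b c t * psolP a b V c α β t := by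
      apply intervalIntegral.integral_congr
      intro t _
      exact tsum_mul_left
    rw [e1, tsum_congr e2, e3, e4]
  · have hsum1 : Summable (fun n => (pic a b V c α β n y).2) := by
      apply Summable.of_norm_bounded hd
      intro n; rw [Real.norm_eq_abs]; exact (hbd n y hyIcc).2
    have h0 : (pic a b V c α β 0 y).2 = β := rfl
    have e1 : psolP a b V c α β y =
        β + ∑' n, (pic a b V c α β (n + 1) y).2 := by
      rw [psolP, Summable.tsum_eq_zero_add hsum1, h0]
    have e2 : ∀ n : ℕ, (pic a b V c α β (n + 1) y).2 =
        ∫ t in c..y, Kf a b V c t * (pic a b V c α β n t).1 := fun n => rfl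
    have e3 : (∑' n, ∫ t in c..y, Kf a b V c t * (pic a b V c α β n t).1)
        = ∫ t in c..y, (∑' n, Kf a b V c t * (pic a b V c α β n t).1) := by
      refine (tsum_intervalIntegral_swap (d := fun n => Q * d n) ?_ (hd.mul_left Q)
        (fun n => mul_nonneg hQ0 (hd0 n)) ?_).symm
      · intro n
        exact (H.K_aesm measurableSet_uIoc hsubEI).mul
          (((hcont n).1.mono hsubEI).aestronglyMeasurable measurableSet_uIoc)
      · intro n
        filter_upwards [ae_sub hsub hQ, ae_restrict_mem measurableSet_uIoc] with t h1 ht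
        have htm : t ∈ Icc p q := hsub ht
        rw [Real.norm_eq_abs, abs_mul]
        exact mul_le_mul h1 (hbd n t htm).1 (abs_nonneg _) hQ0
    have e4 : ∫ t in c..y, (∑' n, Kf a b V c t * (pic a b V c α β n t).1)
        = ∫ t in c..y, Kf a b V c t * usolP a b V c α β t := by
      apply intervalIntegral.integral_congr
      intro t _
      exact tsum_mul_left
    rw [e1, tsum_congr e2, e3, e4]

/-! ### Bootstrap lemmas -/

lemma cont_pos_nbhd {f : ℝ → ℝ} {x : ℝ} (hf : ContinuousAt f x) (hx : 0 < f x) :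
    ∃ ε > 0, ∀ s : ℝ, |s - x| < ε → 0 < f s := by
  have h2 : ∀ᶠ s in nhds x, 0 < f s := hf.eventually (eventually_gt_nhds hx)
  obtain ⟨ε, hε, hball⟩ := Metric.eventually_nhds_iff.1 h2
  exact ⟨ε, hε, fun s hs => hball (by rwa [Real.dist_eq])⟩

lemma cont_neg_nbhd {f : ℝ → ℝ} {x : ℝ} (hf : ContinuousAt f x) (hx : f x < 0) :
    ∃ ε > 0, ∀ s : ℝ, |s - x| < ε → f s < 0 := by
  have h2 : ∀ᶠ s in nhds x, f s < 0 := hf.eventually (eventually_lt_nhds hx)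
  obtain ⟨ε, hε, hball⟩ := Metric.eventually_nhds_iff.1 h2
  exact ⟨ε, hε, fun s hs => hball (by rwa [Real.dist_eq])⟩

lemma Hyp.bootstrap_right (H : Hyp x0 y0 a b V c δ) {h p : ℝ → ℝ}
    (hhc : ContinuousOn h (EI x0 y0)) (hpc : ContinuousOn p (EI x0 y0))
    (hrel : ∀ x y : ℝ, x ∈ EI x0 y0 → y ∈ EI x0 y0 →
      h y = h x + (∫ t in x..y, sder a b c t * p t) ∧
      p y = p x + (∫ t in x..y, Kf a b V c t * h t))
    {y T : ℝ} (hy : y ∈ EI x0 y0) (hT : T ∈ EI x0 y0) (hyT : y ≤ T)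
    (h0 : 0 ≤ h y) (p0 : 0 ≤ p y) (hsum : 0 < h y + p y) :
    ∀ t ∈ Icc y T, (h y + p y * ∫ s in y..t, sder a b c s ≤ h t) ∧ p y ≤ p t := by
  have hEIcc : Icc y T ⊆ EI x0 y0 := EI_Icc_subset hy hT
  have hCA : ∀ x ∈ EI x0 y0, ContinuousAt h x :=
    fun x hx => hhc.continuousAt (EI_open.mem_nhds hx)
  have hCAp : ∀ x ∈ EI x0 y0, ContinuousAt p x :=
    fun x hx => hpc.continuousAt (EI_open.mem_nhds hx)
  -- Step 1 : h is nonnegative on [y, T]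
  have hpos : ∀ t ∈ Icc y T, 0 ≤ h t := by
    by_contra hcon
    push_neg at hcon
    obtain ⟨t1, ht1, ht1neg⟩ := hcon
    set B := {t ∈ Icc y T | h t < 0} with hBdef
    have hBne : B.Nonempty := ⟨t1, ht1, ht1neg⟩
    have hBbd : BddBelow B := ⟨y, fun t ht => ht.1.1⟩
    set t₀ := sInf B with ht₀def
    have hyt₀ : y ≤ t₀ := le_csInf hBne fun t ht => ht.1.1
    have ht₀T : t₀ ≤ T := le_trans (csInf_le hBbd ⟨ht1, ht1neg⟩) ht1.2
    have ht₀mem : t₀ ∈ Icc y T := ⟨hyt₀, ht₀T⟩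
    have ht₀EI : t₀ ∈ EI x0 y0 := hEIcc ht₀mem
    have hht₀ : h t₀ ≤ 0 := by
      by_contra hpos'
      push_neg at hpos'
      obtain ⟨ε, hε, hball⟩ := cont_pos_nbhd (hCA t₀ ht₀EI) hpos'
      have hstep : ∀ t ∈ B, t₀ + ε ≤ t := by
        intro t ht
        by_contra hlt
        push_neg at hlt
        have habs : |t - t₀| < ε := by
          rw [abs_lt]
          exact ⟨by linarith [csInf_le hBbd ht], by linarith⟩
        exact absurd (hball t habs) (not_lt.2 ht.2.le)
      have : t₀ + ε ≤ t₀ := le_csInf hBne hstep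
      linarith
    rcases eq_or_lt_of_le hyt₀ with heq | hlt
    · -- t₀ = y
      have hy0 : h y = 0 := le_antisymm (heq ▸ hht₀) h0
      have hpy : 0 < p y := by linarith
      obtain ⟨ε, hε, hball⟩ := cont_pos_nbhd (hCAp y hy) hpy
      have : sInf B < y + ε := by rw [← ht₀def, ← heq]; linarith
      obtain ⟨t2, ht2B, ht2lt⟩ := exists_lt_of_csInf_lt hBne this
      have ht2y : y ≤ t2 := ht2B.1.1
      have hposint : 0 ≤ ∫ s in y..t2, sder a b c s * p s := by
        apply intervalIntegral.integral_nonneg ht2y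
        intro s hs
        refine mul_nonneg (sder_pos s).le (hball s ?_).le
        rw [abs_of_nonneg (by linarith [hs.1])]
        linarith [hs.2]
      have hrel2 := (hrel y t2 hy (hEIcc ht2B.1)).1
      have : 0 ≤ h t2 := by rw [hrel2, hy0]; linarith
      exact absurd this (not_le.2 ht2B.2)
    · -- y < t₀
      have hnn : ∀ r ∈ Icc y t₀, 0 ≤ h r := by
        intro r hr
        rcases eq_or_lt_of_le hr.2 with heq | hlt'
        · -- r = t₀ : left-limit argument
          by_contra hneg
          push_neg at hneg
          rw [heq] at hneg
          obtain ⟨ε, hε, hball⟩ := cont_neg_nbhd (hCA t₀ ht₀EI) hneg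
          obtain ⟨r', hr'1, hr'2⟩ := exists_between (max_lt hlt (by linarith) :
            max y (t₀ - ε) < t₀)
          have hr'y : y ≤ r' := le_trans (le_max_left _ _) hr'1.le
          have hr'B : r' ∈ B := by
            refine ⟨⟨hr'y, le_trans hr'2.le ht₀T⟩, ?_⟩
            apply hball
            rw [abs_lt]
            constructor
            · have := lt_of_le_of_lt (le_max_right y (t₀ - ε)) hr'1
              linarith
            · linarith
          have := csInf_le hBbd hr'B
          linarith
        · by_contra hneg
          push_neg at hneg
          have hrB : r ∈ B := ⟨⟨hr.1, le_trans hr.2 ht₀T⟩, hneg⟩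
          have := csInf_le hBbd hrB
          linarith
      have hpge : ∀ r ∈ Icc y t₀, p y ≤ p r := by
        intro r hr
        have hrEI : r ∈ EI x0 y0 := hEIcc ⟨hr.1, le_trans hr.2 ht₀T⟩
        have hrel2 := (hrel y r hy hrEI).2
        have hintnn : 0 ≤ ∫ t in y..r, Kf a b V c t * h t := by
          apply intervalIntegral.integral_nonneg_of_ae_restrict hr.1
          have hsubr : Icc y r ⊆ EI x0 y0 := EI_Icc_subset hy hrEI
          filter_upwards [ae_sub hsubr H.K_nonneg_ae, ae_restrict_mem measurableSet_Icc]
            with t hK ht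
          exact mul_nonneg hK (hnn t ⟨ht.1, le_trans ht.2 hr.2⟩)
        linarith
      have hsderc : ContinuousOn (sder a b c) (Icc y t₀) :=
        H.sder_cont.mono (EI_Icc_subset hy ht₀EI)
      have hint : p y * (∫ s in y..t₀, sder a b c s) ≤ ∫ s in y..t₀, sder a b c s * p s := by
        rw [← intervalIntegral.integral_const_mul]
        apply intervalIntegral.integral_mono_on hyt₀
        · exact (continuousOn_const.mul hsderc).intervalIntegrable_of_Icc hyt₀
        · exact ((H.sder_cont.mul hpc).mono (EI_Icc_subset hy ht₀EI)).intervalIntegrable_of_Icc hyt₀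
        · intro s hs
          rw [mul_comm (p y) _]
          exact mul_le_mul_of_nonneg_left (hpge s hs) (sder_pos s).le
      have hrelh := (hrel y t₀ hy ht₀EI).1
      rcases lt_or_eq_of_le p0 with hpy | hpy
      · have hIpos : 0 < ∫ s in y..t₀, sder a b c s := by
          apply intervalIntegral.integral_pos hlt hsderc
          · intro s _; exact (sder_pos s).le
          · exact ⟨y, ⟨le_rfl, hyt₀⟩, sder_pos y⟩
        have hprod : 0 < p y * ∫ s in y..t₀, sder a b c s := mul_pos hpy hIpos
        linarith
      · have hprod : p y * (∫ s in y..t₀, sder a b c s) = 0 := by rw [← hpy, zero_mul]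
        linarith
  -- Step 2 : conclusions
  have hpge2 : ∀ r ∈ Icc y T, p y ≤ p r := by
    intro r hr
    have hrEI : r ∈ EI x0 y0 := hEIcc hr
    have hrel2 := (hrel y r hy hrEI).2
    have hintnn : 0 ≤ ∫ t in y..r, Kf a b V c t * h t := by
      apply intervalIntegral.integral_nonneg_of_ae_restrict hr.1
      have hsubr : Icc y r ⊆ EI x0 y0 := EI_Icc_subset hy hrEI
      filter_upwards [ae_sub hsubr H.K_nonneg_ae, ae_restrict_mem measurableSet_Icc]
        with t hK ht
      exact mul_nonneg hK (hpos t ⟨ht.1, le_trans ht.2 hr.2⟩)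
    linarith
  intro t ht
  have htEI : t ∈ EI x0 y0 := hEIcc ht
  refine ⟨?_, hpge2 t ht⟩
  have hrelh := (hrel y t hy htEI).1
  have hint : p y * (∫ s in y..t, sder a b c s) ≤ ∫ s in y..t, sder a b c s * p s := by
    rw [← intervalIntegral.integral_const_mul]
    apply intervalIntegral.integral_mono_on ht.1
    · exact (continuousOn_const.mul (H.sder_cont.mono (EI_Icc_subset hy htEI))).intervalIntegrable_of_Icc ht.1
    · exact ((H.sder_cont.mul hpc).mono (EI_Icc_subset hy htEI)).intervalIntegrable_of_Icc ht.1
    · intro s hs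
      rw [mul_comm (p y) _]
      exact mul_le_mul_of_nonneg_left (hpge2 s ⟨hs.1, le_trans hs.2 ht.2⟩) (sder_pos s).le
  linarith

lemma Hyp.bootstrap_left (H : Hyp x0 y0 a b V c δ) {g w : ℝ → ℝ}
    (hgc : ContinuousOn g (EI x0 y0)) (hwc : ContinuousOn w (EI x0 y0))
    (hrel : ∀ t y : ℝ, t ∈ EI x0 y0 → y ∈ EI x0 y0 →
      g t = g y + (∫ r in t..y, sder a b c r * w r) ∧
      w t = w y + (∫ r in t..y, Kf a b V c r * g r))
    {y T : ℝ} (hy : y ∈ EI x0 y0) (hT : T ∈ EI x0 y0) (hTy : T ≤ y)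
    (h0 : 0 ≤ g y) (p0 : 0 ≤ w y) (hsum : 0 < g y + w y) :
    ∀ t ∈ Icc T y, (g y + w y * ∫ s in t..y, sder a b c s ≤ g t) ∧ w y ≤ w t := by
  have hEIcc : Icc T y ⊆ EI x0 y0 := EI_Icc_subset hT hy
  have hCA : ∀ x ∈ EI x0 y0, ContinuousAt g x :=
    fun x hx => hgc.continuousAt (EI_open.mem_nhds hx)
  have hCAp : ∀ x ∈ EI x0 y0, ContinuousAt w x :=
    fun x hx => hwc.continuousAt (EI_open.mem_nhds hx)
  have hpos : ∀ t ∈ Icc T y, 0 ≤ g t := by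
    by_contra hcon
    push_neg at hcon
    obtain ⟨t1, ht1, ht1neg⟩ := hcon
    set B := {t ∈ Icc T y | g t < 0} with hBdef
    have hBne : B.Nonempty := ⟨t1, ht1, ht1neg⟩
    have hBbd : BddAbove B := ⟨y, fun t ht => ht.1.2⟩
    set t₀ := sSup B with ht₀def
    have ht₀y : t₀ ≤ y := csSup_le hBne fun t ht => ht.1.2
    have hTt₀ : T ≤ t₀ := le_trans ht1.1 (le_csSup hBbd ⟨ht1, ht1neg⟩)
    have ht₀mem : t₀ ∈ Icc T y := ⟨hTt₀, ht₀y⟩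
    have ht₀EI : t₀ ∈ EI x0 y0 := hEIcc ht₀mem
    have hht₀ : g t₀ ≤ 0 := by
      by_contra hpos'
      push_neg at hpos'
      obtain ⟨ε, hε, hball⟩ := cont_pos_nbhd (hCA t₀ ht₀EI) hpos'
      have hstep : ∀ t ∈ B, t ≤ t₀ - ε := by
        intro t ht
        by_contra hlt
        push_neg at hlt
        have habs : |t - t₀| < ε := by
          rw [abs_lt]
          exact ⟨by linarith, by linarith [le_csSup hBbd ht]⟩
        exact absurd (hball t habs) (not_lt.2 ht.2.le)
      have : t₀ ≤ t₀ - ε := csSup_le hBne hstep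
      linarith
    rcases eq_or_lt_of_le ht₀y with heq | hlt
    · -- t₀ = y
      have hy0 : g y = 0 := le_antisymm (heq ▸ hht₀) h0
      have hpy : 0 < w y := by linarith
      obtain ⟨ε, hε, hball⟩ := cont_pos_nbhd (hCAp y hy) hpy
      have : y - ε < sSup B := by rw [← ht₀def, heq]; linarith
      obtain ⟨t2, ht2B, ht2lt⟩ := exists_lt_of_lt_csSup hBne this
      have ht2y : t2 ≤ y := ht2B.1.2
      have hposint : 0 ≤ ∫ s in t2..y, sder a b c s * w s := by
        apply intervalIntegral.integral_nonneg ht2y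
        intro s hs
        refine mul_nonneg (sder_pos s).le (hball s ?_).le
        rw [abs_of_nonpos (by linarith [hs.2])]
        linarith [hs.1]
      have hrel2 := (hrel t2 y (hEIcc ht2B.1) hy).1
      have : 0 ≤ g t2 := by rw [hrel2, hy0]; linarith
      exact absurd this (not_le.2 ht2B.2)
    · -- t₀ < y
      have hnn : ∀ r ∈ Icc t₀ y, 0 ≤ g r := by
        intro r hr
        rcases eq_or_lt_of_le hr.1 with heq | hlt'
        · by_contra hneg
          push_neg at hneg
          rw [← heq] at hneg
          obtain ⟨ε, hε, hball⟩ := cont_neg_nbhd (hCA t₀ ht₀EI) hneg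
          obtain ⟨r', hr'1, hr'2⟩ := exists_between (lt_min hlt (by linarith) :
            t₀ < min y (t₀ + ε))
          have hr'y : r' ≤ y := le_trans hr'2.le (min_le_left _ _)
          have hr'B : r' ∈ B := by
            refine ⟨⟨le_trans hTt₀ hr'1.le, hr'y⟩, ?_⟩
            apply hball
            rw [abs_lt]
            constructor
            · linarith
            · have := lt_of_lt_of_le hr'2 (min_le_right y (t₀ + ε))
              linarith
          have := le_csSup hBbd hr'B
          linarith
        · by_contra hneg
          push_neg at hneg
          have hrB : r ∈ B := ⟨⟨le_trans hTt₀ hr.1, hr.2⟩, hneg⟩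
          have := le_csSup hBbd hrB
          linarith
      have hpge : ∀ r ∈ Icc t₀ y, w y ≤ w r := by
        intro r hr
        have hrEI : r ∈ EI x0 y0 := hEIcc ⟨le_trans hTt₀ hr.1, hr.2⟩
        have hrel2 := (hrel r y hrEI hy).2
        have hintnn : 0 ≤ ∫ t in r..y, Kf a b V c t * g t := by
          apply intervalIntegral.integral_nonneg_of_ae_restrict hr.2
          have hsubr : Icc r y ⊆ EI x0 y0 := EI_Icc_subset hrEI hy
          filter_upwards [ae_sub hsubr H.K_nonneg_ae, ae_restrict_mem measurableSet_Icc]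
            with t hK ht
          exact mul_nonneg hK (hnn t ⟨le_trans hr.1 ht.1, ht.2⟩)
        linarith
      have hsderc : ContinuousOn (sder a b c) (Icc t₀ y) :=
        H.sder_cont.mono (EI_Icc_subset ht₀EI hy)
      have hint : w y * (∫ s in t₀..y, sder a b c s) ≤ ∫ s in t₀..y, sder a b c s * w s := by
        rw [← intervalIntegral.integral_const_mul]
        apply intervalIntegral.integral_mono_on ht₀y
        · exact (continuousOn_const.mul hsderc).intervalIntegrable_of_Icc ht₀y
        · exact ((H.sder_cont.mul hwc).mono (EI_Icc_subset ht₀EI hy)).intervalIntegrable_of_Icc ht₀y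
        · intro s hs
          rw [mul_comm (w y) _]
          exact mul_le_mul_of_nonneg_left (hpge s hs) (sder_pos s).le
      have hrelh := (hrel t₀ y ht₀EI hy).1
      rcases lt_or_eq_of_le p0 with hpy | hpy
      · have hIpos : 0 < ∫ s in t₀..y, sder a b c s := by
          apply intervalIntegral.integral_pos hlt hsderc
          · intro s _; exact (sder_pos s).le
          · exact ⟨y, ⟨ht₀y, le_rfl⟩, sder_pos y⟩
        have hprod : 0 < w y * ∫ s in t₀..y, sder a b c s := mul_pos hpy hIpos
        linarith
      · have hprod : w y * (∫ s in t₀..y, sder a b c s) = 0 := by rw [← hpy, zero_mul]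
        linarith
  have hpge2 : ∀ r ∈ Icc T y, w y ≤ w r := by
    intro r hr
    have hrEI : r ∈ EI x0 y0 := hEIcc hr
    have hrel2 := (hrel r y hrEI hy).2
    have hintnn : 0 ≤ ∫ t in r..y, Kf a b V c t * g t := by
      apply intervalIntegral.integral_nonneg_of_ae_restrict hr.2
      have hsubr : Icc r y ⊆ EI x0 y0 := EI_Icc_subset hrEI hy
      filter_upwards [ae_sub hsubr H.K_nonneg_ae, ae_restrict_mem measurableSet_Icc]
        with t hK ht
      exact mul_nonneg hK (hpos t ⟨le_trans hr.1 ht.1, ht.2⟩)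
    linarith
  intro t ht
  have htEI : t ∈ EI x0 y0 := hEIcc ht
  refine ⟨?_, hpge2 t ht⟩
  have hrelh := (hrel t y htEI hy).1
  have hint : w y * (∫ s in t..y, sder a b c s) ≤ ∫ s in t..y, sder a b c s * w s := by
    rw [← intervalIntegral.integral_const_mul]
    apply intervalIntegral.integral_mono_on ht.2
    · exact (continuousOn_const.mul (H.sder_cont.mono (EI_Icc_subset htEI hy))).intervalIntegrable_of_Icc ht.2
    · exact ((H.sder_cont.mul hwc).mono (EI_Icc_subset htEI hy)).intervalIntegrable_of_Icc ht.2
    · intro s hs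
      rw [mul_comm (w y) _]
      exact mul_le_mul_of_nonneg_left (hpge2 s ⟨le_trans ht.1 hs.1, hs.2⟩) (sder_pos s).le
  linarith

/-! ### The two fundamental solutions -/

def uu (a b V : ℝ → ℝ) (c : ℝ) : ℝ → ℝ := usolP a b V c 1 0
def pu (a b V : ℝ → ℝ) (c : ℝ) : ℝ → ℝ := psolP a b V c 1 0
def vv (a b V : ℝ → ℝ) (c : ℝ) : ℝ → ℝ := usolP a b V c 0 1
def pv (a b V : ℝ → ℝ) (c : ℝ) : ℝ → ℝ := psolP a b V c 0 1

lemma Hyp.uu_cont (H : Hyp x0 y0 a b V c δ) : ContinuousOn (uu a b V c) (EI x0 y0) :=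
  H.usol_cont 1 0
lemma Hyp.pu_cont (H : Hyp x0 y0 a b V c δ) : ContinuousOn (pu a b V c) (EI x0 y0) :=
  H.psol_cont 1 0
lemma Hyp.vv_cont (H : Hyp x0 y0 a b V c δ) : ContinuousOn (vv a b V c) (EI x0 y0) :=
  H.usol_cont 0 1
lemma Hyp.pv_cont (H : Hyp x0 y0 a b V c δ) : ContinuousOn (pv a b V c) (EI x0 y0) :=
  H.psol_cont 0 1

lemma Hyp.sol_rebase (H : Hyp x0 y0 a b V c δ) (α β : ℝ) {x y : ℝ}
    (hx : x ∈ EI x0 y0) (hy : y ∈ EI x0 y0) :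
    usolP a b V c α β y = usolP a b V c α β x +
      (∫ t in x..y, sder a b c t * psolP a b V c α β t) ∧
    psolP a b V c α β y = psolP a b V c α β x +
      (∫ t in x..y, Kf a b V c t * usolP a b V c α β t) := by
  have hintS : ∀ u v : ℝ, u ∈ EI x0 y0 → v ∈ EI x0 y0 →
      IntervalIntegrable (fun t => sder a b c t * psolP a b V c α β t) volume u v :=
    fun u v hu hv =>
      ((H.sder_cont.mul (H.psol_cont α β)).mono (EI_uIcc_subset hu hv)).intervalIntegrable
  have e1 := H.sol_eq α β hx
  have e2 := H.sol_eq α β hy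
  constructor
  · have hadd := intervalIntegral.integral_add_adjacent_intervals
      (hintS c x H.cmem hx) (hintS x y hx hy)
    rw [e2.1, e1.1]; linarith
  · have hadd := intervalIntegral.integral_add_adjacent_intervals
      (H.K_mul_intInt (H.usol_cont α β) H.cmem hx) (H.K_mul_intInt (H.usol_cont α β) hx hy)
    rw [e2.2, e1.2]; linarith

lemma Hyp.uu_c (H : Hyp x0 y0 a b V c δ) : uu a b V c c = 1 := by
  have := (H.sol_eq 1 0 H.cmem).1
  rwa [intervalIntegral.integral_same, add_zero] at this

lemma Hyp.pu_c (H : Hyp x0 y0 a b V c δ) : pu a b V c c = 0 := by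
  have := (H.sol_eq 1 0 H.cmem).2
  rwa [intervalIntegral.integral_same, add_zero] at this

lemma Hyp.vv_c (H : Hyp x0 y0 a b V c δ) : vv a b V c c = 0 := by
  have := (H.sol_eq 0 1 H.cmem).1
  rwa [intervalIntegral.integral_same, add_zero] at this

lemma Hyp.pv_c (H : Hyp x0 y0 a b V c δ) : pv a b V c c = 1 := by
  have := (H.sol_eq 0 1 H.cmem).2
  rwa [intervalIntegral.integral_same, add_zero] at this

lemma Hyp.comb_rebase (H : Hyp x0 y0 a b V c δ) (A B : ℝ) {x y : ℝ}
    (hx : x ∈ EI x0 y0) (hy : y ∈ EI x0 y0) :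
    A * uu a b V c y + B * vv a b V c y = A * uu a b V c x + B * vv a b V c x +
      (∫ t in x..y, sder a b c t * (A * pu a b V c t + B * pv a b V c t)) ∧
    A * pu a b V c y + B * pv a b V c y = A * pu a b V c x + B * pv a b V c x +
      (∫ t in x..y, Kf a b V c t * (A * uu a b V c t + B * vv a b V c t)) := by
  have ru : uu a b V c y = uu a b V c x +
      (∫ t in x..y, sder a b c t * pu a b V c t) := (H.sol_rebase 1 0 hx hy).1
  have rpu : pu a b V c y = pu a b V c x +
      (∫ t in x..y, Kf a b V c t * uu a b V c t) := (H.sol_rebase 1 0 hx hy).2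
  have rv : vv a b V c y = vv a b V c x +
      (∫ t in x..y, sder a b c t * pv a b V c t) := (H.sol_rebase 0 1 hx hy).1
  have rpv : pv a b V c y = pv a b V c x +
      (∫ t in x..y, Kf a b V c t * vv a b V c t) := (H.sol_rebase 0 1 hx hy).2
  have hintSu : IntervalIntegrable (fun t => sder a b c t * pu a b V c t) volume x y :=
    ((H.sder_cont.mul H.pu_cont).mono (EI_uIcc_subset hx hy)).intervalIntegrable
  have hintSv : IntervalIntegrable (fun t => sder a b c t * pv a b V c t) volume x y :=
    ((H.sder_cont.mul H.pv_cont).mono (EI_uIcc_subset hx hy)).intervalIntegrable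
  have hintKu := H.K_mul_intInt H.uu_cont hx hy
  have hintKv := H.K_mul_intInt H.vv_cont hx hy
  constructor
  · have l1 : (∫ t in x..y, sder a b c t * (A * pu a b V c t + B * pv a b V c t)) =
        A * (∫ t in x..y, sder a b c t * pu a b V c t) +
        B * (∫ t in x..y, sder a b c t * pv a b V c t) := by
      rw [show (fun t => sder a b c t * (A * pu a b V c t + B * pv a b V c t)) =
        (fun t => A * (sder a b c t * pu a b V c t) + B * (sder a b c t * pv a b V c t))
        from funext fun t => by ring]
      rw [intervalIntegral.integral_add (hintSu.const_mul A) (hintSv.const_mul B),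
        intervalIntegral.integral_const_mul, intervalIntegral.integral_const_mul]
    rw [l1, ru, rv]; ring
  · have l2 : (∫ t in x..y, Kf a b V c t * (A * uu a b V c t + B * vv a b V c t)) =
        A * (∫ t in x..y, Kf a b V c t * uu a b V c t) +
        B * (∫ t in x..y, Kf a b V c t * vv a b V c t) := by
      rw [show (fun t => Kf a b V c t * (A * uu a b V c t + B * vv a b V c t)) =
        (fun t => A * (Kf a b V c t * uu a b V c t) + B * (Kf a b V c t * vv a b V c t))
        from funext fun t => by ring]
      rw [intervalIntegral.integral_add (hintKu.const_mul A) (hintKv.const_mul B),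
        intervalIntegral.integral_const_mul, intervalIntegral.integral_const_mul]
    rw [l2, rpu, rpv]; ring

lemma Hyp.W_const (H : Hyp x0 y0 a b V c δ) {l r : ℝ} (hl : l ∈ EI x0 y0)
    (hr : r ∈ EI x0 y0) (hlr : l ≤ r) :
    uu a b V c r * pv a b V c r - vv a b V c r * pu a b V c r =
    uu a b V c l * pv a b V c l - vv a b V c l * pu a b V c l := by
  have hsub : Icc l r ⊆ EI x0 y0 := EI_Icc_subset hl hr
  have hf1 : IntegrableOn (fun t => sder a b c t * pu a b V c t) (Icc l r) volume :=
    ((H.sder_cont.mul H.pu_cont).mono hsub).integrableOn_compact isCompact_Icc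
  have hf2 : IntegrableOn (fun t => sder a b c t * pv a b V c t) (Icc l r) volume :=
    ((H.sder_cont.mul H.pv_cont).mono hsub).integrableOn_compact isCompact_Icc
  have hg1 : IntegrableOn (fun t => Kf a b V c t * vv a b V c t) (Icc l r) volume :=
    H.K_mul_integrableOn H.vv_cont hl hr
  have hg2 : IntegrableOn (fun t => Kf a b V c t * uu a b V c t) (Icc l r) volume :=
    H.K_mul_integrableOn H.uu_cont hl hr
  have i1 := ibp hlr hf1 hg1
    (F := uu a b V c) (G := pv a b V c)
    (fun t ht => (H.sol_rebase 1 0 hl (hsub ht)).1)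
    (fun t ht => (H.sol_rebase 0 1 hl (hsub ht)).2)
  have i2 := ibp hlr hf2 hg2
    (F := vv a b V c) (G := pu a b V c)
    (fun t ht => (H.sol_rebase 0 1 hl (hsub ht)).1)
    (fun t ht => (H.sol_rebase 1 0 hl (hsub ht)).2)
  have hI1 : IntervalIntegrable (fun t => sder a b c t * pu a b V c t * pv a b V c t +
      uu a b V c t * (Kf a b V c t * vv a b V c t)) volume l r := by
    rw [intervalIntegrable_iff_integrableOn_Ioc_of_le hlr]
    have hA : IntegrableOn (fun t => sder a b c t * pu a b V c t * pv a b V c t)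
        (Icc l r) volume :=
      (((H.sder_cont.mul H.pu_cont).mul H.pv_cont).mono hsub).integrableOn_compact
        isCompact_Icc
    have hB0 := H.K_mul_integrableOn (g := fun t => vv a b V c t * uu a b V c t)
        (H.vv_cont.mul H.uu_cont) hl hr
    have hB : IntegrableOn (fun t => uu a b V c t * (Kf a b V c t * vv a b V c t))
        (Icc l r) volume :=
      hB0.congr_fun (fun t _ => by ring) measurableSet_Icc
    have hAB : IntegrableOn (fun t => sder a b c t * pu a b V c t * pv a b V c t +
        uu a b V c t * (Kf a b V c t * vv a b V c t)) (Icc l r) volume := hA.add hB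
    exact hAB.mono_set Set.Ioc_subset_Icc_self
  have hI2 : IntervalIntegrable (fun t => sder a b c t * pv a b V c t * pu a b V c t +
      vv a b V c t * (Kf a b V c t * uu a b V c t)) volume l r := by
    rw [intervalIntegrable_iff_integrableOn_Ioc_of_le hlr]
    have hA : IntegrableOn (fun t => sder a b c t * pv a b V c t * pu a b V c t)
        (Icc l r) volume :=
      (((H.sder_cont.mul H.pv_cont).mul H.pu_cont).mono hsub).integrableOn_compact
        isCompact_Icc
    have hB0 := H.K_mul_integrableOn (g := fun t => uu a b V c t * vv a b V c t)
        (H.uu_cont.mul H.vv_cont) hl hr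
    have hB : IntegrableOn (fun t => vv a b V c t * (Kf a b V c t * uu a b V c t))
        (Icc l r) volume :=
      hB0.congr_fun (fun t _ => by ring) measurableSet_Icc
    have hAB : IntegrableOn (fun t => sder a b c t * pv a b V c t * pu a b V c t +
        vv a b V c t * (Kf a b V c t * uu a b V c t)) (Icc l r) volume := hA.add hB
    exact hAB.mono_set Set.Ioc_subset_Icc_self
  have hdiff : (∫ t in l..r, (sder a b c t * pu a b V c t * pv a b V c t +
        uu a b V c t * (Kf a b V c t * vv a b V c t))) -
      (∫ t in l..r, (sder a b c t * pv a b V c t * pu a b V c t +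
        vv a b V c t * (Kf a b V c t * uu a b V c t))) = 0 := by
    rw [← intervalIntegral.integral_sub hI1 hI2]
    rw [show (fun t => (sder a b c t * pu a b V c t * pv a b V c t +
        uu a b V c t * (Kf a b V c t * vv a b V c t)) -
        (sder a b c t * pv a b V c t * pu a b V c t +
        vv a b V c t * (Kf a b V c t * uu a b V c t))) = (fun _ => (0 : ℝ))
      from funext fun t => by ring]
    simp
  linarith [i1, i2]

lemma Hyp.wronskian (H : Hyp x0 y0 a b V c δ) {y : ℝ} (hy : y ∈ EI x0 y0) :
    uu a b V c y * pv a b V c y - vv a b V c y * pu a b V c y = 1 := by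
  rcases le_total c y with h | h
  · rw [H.W_const H.cmem hy h, H.uu_c, H.pu_c, H.vv_c, H.pv_c]; ring
  · rw [← H.W_const hy H.cmem h, H.uu_c, H.pu_c, H.vv_c, H.pv_c]; ring

/-! ### Sign facts -/

lemma Hyp.base_right (H : Hyp x0 y0 a b V c δ) {y : ℝ} (hy : y ∈ EI x0 y0) (hcy : c ≤ y) :
    1 ≤ uu a b V c y ∧ 0 ≤ pu a b V c y ∧
    (∫ s in c..y, sder a b c s) ≤ vv a b V c y ∧ 1 ≤ pv a b V c y := by
  have hrelu : ∀ x z : ℝ, x ∈ EI x0 y0 → z ∈ EI x0 y0 →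
      uu a b V c z = uu a b V c x + (∫ t in x..z, sder a b c t * pu a b V c t) ∧
      pu a b V c z = pu a b V c x + (∫ t in x..z, Kf a b V c t * uu a b V c t) :=
    fun x z hx hz => H.sol_rebase 1 0 hx hz
  have hrelv : ∀ x z : ℝ, x ∈ EI x0 y0 → z ∈ EI x0 y0 →
      vv a b V c z = vv a b V c x + (∫ t in x..z, sder a b c t * pv a b V c t) ∧
      pv a b V c z = pv a b V c x + (∫ t in x..z, Kf a b V c t * vv a b V c t) :=
    fun x z hx hz => H.sol_rebase 0 1 hx hz
  have b1 := H.bootstrap_right H.uu_cont H.pu_cont hrelu H.cmem hy hcy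
    (by rw [H.uu_c]; norm_num) (by rw [H.pu_c]) (by rw [H.uu_c, H.pu_c]; norm_num)
    y ⟨hcy, le_rfl⟩
  have b2 := H.bootstrap_right H.vv_cont H.pv_cont hrelv H.cmem hy hcy
    (by rw [H.vv_c]) (by rw [H.pv_c]; norm_num) (by rw [H.vv_c, H.pv_c]; norm_num)
    y ⟨hcy, le_rfl⟩
  obtain ⟨b11, b12⟩ := b1
  obtain ⟨b21, b22⟩ := b2
  simp only [H.uu_c, H.pu_c, H.vv_c, H.pv_c] at b11 b12 b21 b22
  exact ⟨by linarith, b12, by linarith, b22⟩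

lemma Hyp.base_left (H : Hyp x0 y0 a b V c δ) {y : ℝ} (hy : y ∈ EI x0 y0) (hyc : y ≤ c) :
    1 ≤ uu a b V c y ∧ pu a b V c y ≤ 0 ∧
    vv a b V c y ≤ -(∫ s in y..c, sder a b c s) ∧ 1 ≤ pv a b V c y := by
  have hrelu : ∀ t z : ℝ, t ∈ EI x0 y0 → z ∈ EI x0 y0 →
      uu a b V c t = uu a b V c z + (∫ r in t..z, sder a b c r * (-(pu a b V c r))) ∧
      (-(pu a b V c t)) = -(pu a b V c z) + (∫ r in t..z, Kf a b V c r * uu a b V c r) := by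
    intro t z ht hz
    obtain ⟨r1, r2⟩ := H.sol_rebase 1 0 (x := t) (y := z) ht hz
    have e : (∫ r in t..z, sder a b c r * (-(pu a b V c r))) =
        -(∫ r in t..z, sder a b c r * pu a b V c r) := by
      rw [show (fun r => sder a b c r * (-(pu a b V c r))) =
        (fun r => -(sder a b c r * pu a b V c r)) from funext fun r => by ring,
        intervalIntegral.integral_neg]
    constructor
    · rw [e]
      have : uu a b V c z = uu a b V c t +
          (∫ r in t..z, sder a b c r * pu a b V c r) := r1
      linarith
    · have : pu a b V c z = pu a b V c t +
          (∫ r in t..z, Kf a b V c r * uu a b V c r) := r2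
      linarith
  have hrelv : ∀ t z : ℝ, t ∈ EI x0 y0 → z ∈ EI x0 y0 →
      (-(vv a b V c t)) = -(vv a b V c z) + (∫ r in t..z, sder a b c r * pv a b V c r) ∧
      pv a b V c t = pv a b V c z + (∫ r in t..z, Kf a b V c r * (-(vv a b V c r))) := by
    intro t z ht hz
    obtain ⟨r1, r2⟩ := H.sol_rebase 0 1 (x := t) (y := z) ht hz
    have e : (∫ r in t..z, Kf a b V c r * (-(vv a b V c r))) =
        -(∫ r in t..z, Kf a b V c r * vv a b V c r) := by
      rw [show (fun r => Kf a b V c r * (-(vv a b V c r))) =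
        (fun r => -(Kf a b V c r * vv a b V c r)) from funext fun r => by ring,
        intervalIntegral.integral_neg]
    constructor
    · have : vv a b V c z = vv a b V c t +
          (∫ r in t..z, sder a b c r * pv a b V c r) := r1
      linarith
    · rw [e]
      have : pv a b V c z = pv a b V c t +
          (∫ r in t..z, Kf a b V c r * vv a b V c r) := r2
      linarith
  have b1 := H.bootstrap_left H.uu_cont H.pu_cont.neg hrelu H.cmem hy hyc
    (by rw [H.uu_c]; norm_num) (by rw [Pi.neg_apply, H.pu_c]; norm_num)
    (by rw [Pi.neg_apply, H.uu_c, H.pu_c]; norm_num) y ⟨le_rfl, hyc⟩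
  have b2 := H.bootstrap_left H.vv_cont.neg H.pv_cont hrelv H.cmem hy hyc
    (by rw [Pi.neg_apply, H.vv_c]; norm_num) (by rw [H.pv_c]; norm_num)
    (by rw [Pi.neg_apply, H.vv_c, H.pv_c]; norm_num) y ⟨le_rfl, hyc⟩
  obtain ⟨b11, b12⟩ := b1
  obtain ⟨b21, b22⟩ := b2
  simp only [Pi.neg_apply, H.uu_c, H.pu_c, H.vv_c, H.pv_c] at b11 b12 b21 b22
  refine ⟨by linarith, by linarith, by linarith, b22⟩

lemma Hyp.uu_ge (H : Hyp x0 y0 a b V c δ) {y : ℝ} (hy : y ∈ EI x0 y0) :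
    1 ≤ uu a b V c y := by
  rcases le_total c y with h | h
  · exact (H.base_right hy h).1
  · exact (H.base_left hy h).1

lemma Hyp.pv_ge (H : Hyp x0 y0 a b V c δ) {y : ℝ} (hy : y ∈ EI x0 y0) :
    1 ≤ pv a b V c y := by
  rcases le_total c y with h | h
  · exact (H.base_right hy h).2.2.2
  · exact (H.base_left hy h).2.2.2

lemma Hyp.integral_sder_pos (H : Hyp x0 y0 a b V c δ) {l r : ℝ} (hl : l ∈ EI x0 y0)
    (hr : r ∈ EI x0 y0) (hlr : l < r) : 0 < ∫ s in l..r, sder a b c s := by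
  apply intervalIntegral.integral_pos hlr (H.sder_cont.mono (EI_Icc_subset hl hr))
  · intro s _; exact (sder_pos s).le
  · exact ⟨l, ⟨le_rfl, hlr.le⟩, sder_pos l⟩

lemma Hyp.vv_pos (H : Hyp x0 y0 a b V c δ) {y : ℝ} (hy : y ∈ EI x0 y0) (h : c < y) :
    0 < vv a b V c y :=
  lt_of_lt_of_le (H.integral_sder_pos H.cmem hy h) (H.base_right hy h.le).2.2.1

lemma Hyp.vv_neg (H : Hyp x0 y0 a b V c δ) {y : ℝ} (hy : y ∈ EI x0 y0) (h : y < c) :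
    vv a b V c y < 0 :=
  lt_of_le_of_lt (H.base_left hy h.le).2.2.1 (by linarith [H.integral_sder_pos hy H.cmem h])

lemma Hyp.pu_pos (H : Hyp x0 y0 a b V c δ) {y : ℝ} (hy : y ∈ EI x0 y0) (h : c < y) :
    0 < pu a b V c y := by
  have hre : pu a b V c y = pu a b V c c +
      (∫ t in c..y, Kf a b V c t * uu a b V c t) := (H.sol_rebase 1 0 H.cmem hy).2
  have hpos := H.integral_K_pos H.uu_cont H.cmem hy h
    (fun t ht => H.uu_ge (EI_Icc_subset H.cmem hy ht))
  rw [hre, H.pu_c]; linarith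

lemma Hyp.pu_neg (H : Hyp x0 y0 a b V c δ) {y : ℝ} (hy : y ∈ EI x0 y0) (h : y < c) :
    pu a b V c y < 0 := by
  have hre : pu a b V c c = pu a b V c y +
      (∫ t in y..c, Kf a b V c t * uu a b V c t) := (H.sol_rebase 1 0 hy H.cmem).2
  have hpos := H.integral_K_pos H.uu_cont hy H.cmem h
    (fun t ht => H.uu_ge (EI_Icc_subset hy H.cmem ht))
  rw [H.pu_c] at hre; linarith

lemma Hyp.det_pos (H : Hyp x0 y0 a b V c δ) {y z : ℝ} (hy : y ∈ EI x0 y0)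
    (hz : z ∈ EI x0 y0) (hyz : y < z) :
    0 < pv a b V c y * pu a b V c z - pu a b V c y * pv a b V c z := by
  have hhc : ContinuousOn
      (fun t => pv a b V c y * uu a b V c t + (-(pu a b V c y)) * vv a b V c t)
      (EI x0 y0) :=
    (continuousOn_const.mul H.uu_cont).add (continuousOn_const.mul H.vv_cont)
  have hpc : ContinuousOn
      (fun t => pv a b V c y * pu a b V c t + (-(pu a b V c y)) * pv a b V c t)
      (EI x0 y0) :=
    (continuousOn_const.mul H.pu_cont).add (continuousOn_const.mul H.pv_cont)
  have hrel : ∀ x z' : ℝ, x ∈ EI x0 y0 → z' ∈ EI x0 y0 →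
      (pv a b V c y * uu a b V c z' + (-(pu a b V c y)) * vv a b V c z' =
        pv a b V c y * uu a b V c x + (-(pu a b V c y)) * vv a b V c x +
        (∫ t in x..z', sder a b c t *
          (pv a b V c y * pu a b V c t + (-(pu a b V c y)) * pv a b V c t))) ∧
      (pv a b V c y * pu a b V c z' + (-(pu a b V c y)) * pv a b V c z' =
        pv a b V c y * pu a b V c x + (-(pu a b V c y)) * pv a b V c x +
        (∫ t in x..z', Kf a b V c t *
          (pv a b V c y * uu a b V c t + (-(pu a b V c y)) * vv a b V c t))) :=
    fun x z' hx hz' => H.comb_rebase (pv a b V c y) (-(pu a b V c y)) hx hz'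
  have hy1 : pv a b V c y * uu a b V c y + (-(pu a b V c y)) * vv a b V c y = 1 := by
    linear_combination H.wronskian hy
  have hy2 : pv a b V c y * pu a b V c y + (-(pu a b V c y)) * pv a b V c y = 0 := by ring
  have bb := H.bootstrap_right hhc hpc hrel hy hz hyz.le
    (by rw [hy1]; norm_num) (by rw [hy2]) (by rw [hy1, hy2]; norm_num)
  have hge1 : ∀ t ∈ Icc y z,
      1 ≤ pv a b V c y * uu a b V c t + (-(pu a b V c y)) * vv a b V c t := by
    intro t ht
    have h1 := (bb t ht).1
    rw [hy1, hy2] at h1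
    have h2 : (0 : ℝ) * (∫ s in y..t, sder a b c s) = 0 := by ring
    linarith [h1, h2.le]
  have hpos := H.integral_K_pos hhc hy hz hyz hge1
  have hrelp := (hrel y z hy hz).2
  rw [hy2] at hrelp
  linarith

lemma Hyp.psi_pos (H : Hyp x0 y0 a b V c δ) {y z : ℝ} (hy : y ∈ EI x0 y0)
    (hz : z ∈ EI x0 y0) (hyz : y < z) :
    0 < uu a b V c y * vv a b V c z - vv a b V c y * uu a b V c z := by
  have hhc : ContinuousOn
      (fun t => (-(vv a b V c y)) * uu a b V c t + uu a b V c y * vv a b V c t)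
      (EI x0 y0) :=
    (continuousOn_const.mul H.uu_cont).add (continuousOn_const.mul H.vv_cont)
  have hpc : ContinuousOn
      (fun t => (-(vv a b V c y)) * pu a b V c t + uu a b V c y * pv a b V c t)
      (EI x0 y0) :=
    (continuousOn_const.mul H.pu_cont).add (continuousOn_const.mul H.pv_cont)
  have hrel : ∀ x z' : ℝ, x ∈ EI x0 y0 → z' ∈ EI x0 y0 →
      ((-(vv a b V c y)) * uu a b V c z' + uu a b V c y * vv a b V c z' =
        (-(vv a b V c y)) * uu a b V c x + uu a b V c y * vv a b V c x +
        (∫ t in x..z', sder a b c t *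
          ((-(vv a b V c y)) * pu a b V c t + uu a b V c y * pv a b V c t))) ∧
      ((-(vv a b V c y)) * pu a b V c z' + uu a b V c y * pv a b V c z' =
        (-(vv a b V c y)) * pu a b V c x + uu a b V c y * pv a b V c x +
        (∫ t in x..z', Kf a b V c t *
          ((-(vv a b V c y)) * uu a b V c t + uu a b V c y * vv a b V c t))) :=
    fun x z' hx hz' => H.comb_rebase (-(vv a b V c y)) (uu a b V c y) hx hz'
  have hy1 : (-(vv a b V c y)) * uu a b V c y + uu a b V c y * vv a b V c y = 0 := by ring
  have hy2 : (-(vv a b V c y)) * pu a b V c y + uu a b V c y * pv a b V c y = 1 := by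
    linear_combination H.wronskian hy
  have bb := H.bootstrap_right hhc hpc hrel hy hz hyz.le
    (by rw [hy1]) (by rw [hy2]; norm_num) (by rw [hy1, hy2]; norm_num)
  have h1 := (bb z ⟨hyz.le, le_rfl⟩).1
  rw [hy1, hy2] at h1
  have hI := H.integral_sder_pos hy hz hyz
  nlinarith [h1, hI]

/-! ### Choice of the constants θ -/

lemma Hyp.pv_pos (H : Hyp x0 y0 a b V c δ) {y : ℝ} (hy : y ∈ EI x0 y0) :
    0 < pv a b V c y := lt_of_lt_of_le zero_lt_one (H.pv_ge hy)

lemma Hyp.rho_lt (H : Hyp x0 y0 a b V c δ) {y z : ℝ} (hy : y ∈ EI x0 y0)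
    (hz : z ∈ EI x0 y0) (hyz : y < z) :
    pu a b V c y / pv a b V c y < pu a b V c z / pv a b V c z := by
  rw [div_lt_div_iff₀ (H.pv_pos hy) (H.pv_pos hz)]
  nlinarith [H.det_pos hy hz hyz]

lemma Hyp.rho_le (H : Hyp x0 y0 a b V c δ) {y z : ℝ} (hy : y ∈ EI x0 y0)
    (hz : z ∈ EI x0 y0) (hyz : y ≤ z) :
    pu a b V c y / pv a b V c y ≤ pu a b V c z / pv a b V c z := by
  rcases eq_or_lt_of_le hyz with heq | hlt
  · rw [heq]
  · exact (H.rho_lt hy hz hlt).le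

lemma Hyp.h1_spec (H : Hyp x0 y0 a b V c δ) : ∃ θ : ℝ, 0 < θ ∧
    (∀ y ∈ EI x0 y0, 0 < pu a b V c y + θ * pv a b V c y) ∧
    (∀ y ∈ EI x0 y0, 0 < uu a b V c y + θ * vv a b V c y) := by
  obtain ⟨y1, hy1, hy1c⟩ := exists_lt_EI H.cmem
  -- the "left ratio" bound function
  have hvneg : ∀ y ∈ EI x0 y0, y < c → 0 < -(vv a b V c y) :=
    fun y hy h => neg_pos.2 (H.vv_neg hy h)
  have hF8 : ∀ y ∈ EI x0 y0, y < c →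
      -(pu a b V c y / pv a b V c y) < uu a b V c y / (-(vv a b V c y)) := by
    intro y hy h
    rw [← neg_div, div_lt_div_iff₀ (H.pv_pos hy) (hvneg y hy h)]
    nlinarith [H.wronskian hy]
  have hr_mono : ∀ y z : ℝ, y ∈ EI x0 y0 → z ∈ EI x0 y0 → y < z → z < c →
      uu a b V c y / (-(vv a b V c y)) < uu a b V c z / (-(vv a b V c z)) := by
    intro y z hy hz hyz hzc
    rw [div_lt_div_iff₀ (hvneg y hy (hyz.trans hzc)) (hvneg z hz hzc)]
    nlinarith [H.psi_pos hy hz hyz]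
  have hupper : ∀ y z : ℝ, y ∈ EI x0 y0 → z ∈ EI x0 y0 → y < c → z < c →
      -(pu a b V c z / pv a b V c z) < uu a b V c y / (-(vv a b V c y)) := by
    intro y z hy hz hyc hzc
    rcases le_or_gt y z with h | h
    · have h1 : pu a b V c y / pv a b V c y ≤ pu a b V c z / pv a b V c z :=
        H.rho_le hy hz h
      have h2 := hF8 y hy hyc
      linarith
    · exact lt_trans (hF8 z hz hzc) (hr_mono z y hz hy h hyc)
  set SL := (fun y => -(pu a b V c y / pv a b V c y)) '' {y | y ∈ EI x0 y0 ∧ y < c}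
    with hSLdef
  have hne : SL.Nonempty := ⟨_, ⟨y1, ⟨hy1, hy1c⟩, rfl⟩⟩
  have hbdd : BddAbove SL := by
    refine ⟨uu a b V c y1 / (-(vv a b V c y1)), ?_⟩
    rintro w ⟨z, ⟨hz, hzc⟩, rfl⟩
    exact (hupper y1 z hy1 hz hy1c hzc).le
  set θ := sSup SL with hθdef
  have hθub : ∀ y ∈ EI x0 y0, y < c → θ ≤ uu a b V c y / (-(vv a b V c y)) := by
    intro y hy hyc
    apply csSup_le hne
    rintro w ⟨z, ⟨hz, hzc⟩, rfl⟩
    exact (hupper y z hy hz hyc hzc).le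
  have hθub' : ∀ y ∈ EI x0 y0, y < c → θ < uu a b V c y / (-(vv a b V c y)) := by
    intro y hy hyc
    obtain ⟨y'', hy'', hy''lt⟩ := exists_lt_EI hy
    exact lt_of_le_of_lt (hθub y'' hy'' (hy''lt.trans hyc))
      (hr_mono y'' y hy'' hy hy''lt hyc)
  have hθlb : ∀ y ∈ EI x0 y0, y < c → -(pu a b V c y / pv a b V c y) < θ := by
    intro y hy hyc
    obtain ⟨y'', hy'', hy''lt⟩ := exists_lt_EI hy
    have h1 : -(pu a b V c y'' / pv a b V c y'') ∈ SL := ⟨y'', ⟨hy'', hy''lt.trans hyc⟩, rfl⟩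
    have h2 := le_csSup hbdd h1
    have h3 := H.rho_lt hy'' hy hy''lt
    linarith
  have hθpos : 0 < θ := by
    have h1 : -(pu a b V c y1 / pv a b V c y1) ∈ SL := ⟨y1, ⟨hy1, hy1c⟩, rfl⟩
    have h2 := le_csSup hbdd h1
    have h3 : pu a b V c y1 / pv a b V c y1 < 0 :=
      div_neg_of_neg_of_pos (H.pu_neg hy1 hy1c) (H.pv_pos hy1)
    linarith
  refine ⟨θ, hθpos, ?_, ?_⟩
  · intro y hy
    rcases lt_or_ge y c with h | h
    · have h1 := hθlb y hy h
      rw [← neg_div] at h1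
      have h2 := (div_lt_iff₀ (H.pv_pos hy)).1 h1
      linarith
    · have h1 : 0 ≤ pu a b V c y := by
        rcases eq_or_lt_of_le h with heq | hlt
        · rw [← heq, H.pu_c]
        · exact (H.pu_pos hy hlt).le
      have h2 : θ * 1 ≤ θ * pv a b V c y :=
        mul_le_mul_of_nonneg_left (H.pv_ge hy) hθpos.le
      linarith
  · intro y hy
    rcases lt_or_ge y c with h | h
    · have h1 := hθub' y hy h
      have h2 := (lt_div_iff₀ (hvneg y hy h)).1 h1
      have h3 : θ * -(vv a b V c y) = -(θ * vv a b V c y) := by ring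
      linarith
    · have hrel := (H.comb_rebase 1 θ H.cmem hy).1
      rw [H.uu_c, H.vv_c] at hrel
      have hintnn : 0 ≤ ∫ t in c..y, sder a b c t *
          (1 * pu a b V c t + θ * pv a b V c t) := by
        apply intervalIntegral.integral_nonneg h
        intro s hs
        have hsEI : s ∈ EI x0 y0 := EI_Icc_subset H.cmem hy hs
        rcases lt_or_ge s c with h' | h'
        · have := hθlb s hsEI h'
          rw [← neg_div] at this
          have h2 := (div_lt_iff₀ (H.pv_pos hsEI)).1 this
          have : 0 ≤ 1 * pu a b V c s + θ * pv a b V c s := by linarith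
          exact mul_nonneg (sder_pos s).le this
        · have h1 : 0 ≤ pu a b V c s := by
            rcases eq_or_lt_of_le h' with heq | hlt
            · rw [← heq, H.pu_c]
            · exact (H.pu_pos hsEI hlt).le
          have h2 : θ * 1 ≤ θ * pv a b V c s :=
            mul_le_mul_of_nonneg_left (H.pv_ge hsEI) hθpos.le
          exact mul_nonneg (sder_pos s).le (by linarith)
      have : 1 * uu a b V c y + θ * vv a b V c y ≥ 1 * 1 + θ * 0 := by
        rw [hrel]; linarith
      linarith

lemma Hyp.h2_spec (H : Hyp x0 y0 a b V c δ) : ∃ θ : ℝ, θ < 0 ∧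
    (∀ y ∈ EI x0 y0, pu a b V c y + θ * pv a b V c y < 0) ∧
    (∀ y ∈ EI x0 y0, 0 < uu a b V c y + θ * vv a b V c y) := by
  obtain ⟨y2, hy2, hy2c⟩ := exists_gt_EI H.cmem
  have hvpos : ∀ y ∈ EI x0 y0, c < y → 0 < vv a b V c y :=
    fun y hy h => H.vv_pos hy h
  have hF8 : ∀ y ∈ EI x0 y0, c < y →
      -(uu a b V c y) / vv a b V c y < -(pu a b V c y / pv a b V c y) := by
    intro y hy h
    rw [← neg_div, div_lt_div_iff₀ (hvpos y hy h) (H.pv_pos hy)]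
    nlinarith [H.wronskian hy]
  have hr_mono : ∀ y z : ℝ, y ∈ EI x0 y0 → z ∈ EI x0 y0 → c < y → y < z →
      -(uu a b V c y) / vv a b V c y < -(uu a b V c z) / vv a b V c z := by
    intro y z hy hz hcy hyz
    rw [div_lt_div_iff₀ (hvpos y hy hcy) (hvpos z hz (hcy.trans hyz))]
    nlinarith [H.psi_pos hy hz hyz]
  have hlower : ∀ y z : ℝ, y ∈ EI x0 y0 → z ∈ EI x0 y0 → c < y → c < z →
      -(uu a b V c y) / vv a b V c y < -(pu a b V c z / pv a b V c z) := by
    intro y z hy hz hcy hcz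
    rcases le_or_gt z y with h | h
    · have h1 : pu a b V c z / pv a b V c z ≤ pu a b V c y / pv a b V c y :=
        H.rho_le hz hy h
      have h2 := hF8 y hy hcy
      linarith
    · exact lt_trans (hr_mono y z hy hz hcy h) (hF8 z hz (hcy.trans h))
  set SL := (fun y => -(pu a b V c y / pv a b V c y)) '' {y | y ∈ EI x0 y0 ∧ c < y}
    with hSLdef
  have hne : SL.Nonempty := ⟨_, ⟨y2, ⟨hy2, hy2c⟩, rfl⟩⟩
  have hbdd : BddBelow SL := by
    refine ⟨-(uu a b V c y2) / vv a b V c y2, ?_⟩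
    rintro w ⟨z, ⟨hz, hcz⟩, rfl⟩
    exact (hlower y2 z hy2 hz hy2c hcz).le
  set θ := sInf SL with hθdef
  have hθlb : ∀ y ∈ EI x0 y0, c < y → -(uu a b V c y) / vv a b V c y ≤ θ := by
    intro y hy hcy
    apply le_csInf hne
    rintro w ⟨z, ⟨hz, hcz⟩, rfl⟩
    exact (hlower y z hy hz hcy hcz).le
  have hθlb' : ∀ y ∈ EI x0 y0, c < y → -(uu a b V c y) / vv a b V c y < θ := by
    intro y hy hcy
    obtain ⟨y'', hy'', hy''gt⟩ := exists_gt_EI hy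
    exact lt_of_lt_of_le (hr_mono y y'' hy hy'' hcy hy''gt)
      (hθlb y'' hy'' (hcy.trans hy''gt))
  have hθub : ∀ y ∈ EI x0 y0, c < y → θ < -(pu a b V c y / pv a b V c y) := by
    intro y hy hcy
    obtain ⟨y'', hy'', hy''gt⟩ := exists_gt_EI hy
    have h1 : -(pu a b V c y'' / pv a b V c y'') ∈ SL :=
      ⟨y'', ⟨hy'', hcy.trans hy''gt⟩, rfl⟩
    have h2 := csInf_le hbdd h1
    have h3 := H.rho_lt hy hy'' hy''gt
    linarith
  have hθneg : θ < 0 := by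
    have h1 : -(pu a b V c y2 / pv a b V c y2) ∈ SL := ⟨y2, ⟨hy2, hy2c⟩, rfl⟩
    have h2 := csInf_le hbdd h1
    have h3 : 0 < pu a b V c y2 / pv a b V c y2 :=
      div_pos (H.pu_pos hy2 hy2c) (H.pv_pos hy2)
    linarith
  refine ⟨θ, hθneg, ?_, ?_⟩
  · intro y hy
    rcases lt_or_ge c y with h | h
    · have h1 := hθub y hy h
      rw [← neg_div] at h1
      have h2 := (lt_div_iff₀ (H.pv_pos hy)).1 h1
      linarith
    · have h1 : pu a b V c y ≤ 0 := by
        rcases eq_or_lt_of_le h with heq | hlt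
        · rw [heq, H.pu_c]
        · exact (H.pu_neg hy hlt).le
      have h2 : θ * pv a b V c y ≤ θ * 1 :=
        mul_le_mul_of_nonpos_left (H.pv_ge hy) hθneg.le
      linarith
  · intro y hy
    rcases lt_or_ge c y with h | h
    · have h1 := hθlb' y hy h
      have h2 := (div_lt_iff₀ (hvpos y hy h)).1 h1
      linarith
    · have hrel := (H.comb_rebase 1 θ hy H.cmem).1
      rw [H.uu_c, H.vv_c] at hrel
      have hintnp : (∫ t in y..c, sder a b c t *
          (1 * pu a b V c t + θ * pv a b V c t)) ≤ 0 := by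
        have hnn : 0 ≤ ∫ t in y..c, -(sder a b c t *
            (1 * pu a b V c t + θ * pv a b V c t)) := by
          apply intervalIntegral.integral_nonneg h
          intro s hs
          have hsEI : s ∈ EI x0 y0 := EI_Icc_subset hy H.cmem hs
          rcases lt_or_ge c s with h' | h'
          · have h1 := hθub s hsEI h'
            rw [← neg_div] at h1
            have h2 := (lt_div_iff₀ (H.pv_pos hsEI)).1 h1
            have hnp : 1 * pu a b V c s + θ * pv a b V c s ≤ 0 := by linarith
            have h4 : sder a b c s * (1 * pu a b V c s + θ * pv a b V c s) ≤ 0 :=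
              mul_nonpos_of_nonneg_of_nonpos (sder_pos s).le hnp
            linarith
          · have h1 : pu a b V c s ≤ 0 := by
              rcases eq_or_lt_of_le h' with heq | hlt
              · rw [heq, H.pu_c]
              · exact (H.pu_neg hsEI hlt).le
            have h2 : θ * pv a b V c s ≤ θ * 1 :=
              mul_le_mul_of_nonpos_left (H.pv_ge hsEI) hθneg.le
            have hnp : 1 * pu a b V c s + θ * pv a b V c s ≤ 0 := by linarith
            have h4 : sder a b c s * (1 * pu a b V c s + θ * pv a b V c s) ≤ 0 :=
              mul_nonpos_of_nonneg_of_nonpos (sder_pos s).le hnp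
            linarith
        rw [intervalIntegral.integral_neg] at hnn
        linarith
      have : 1 * 1 + θ * 0 = 1 * uu a b V c y + θ * vv a b V c y +
          (∫ t in y..c, sder a b c t * (1 * pu a b V c t + θ * pv a b V c t)) := hrel
      linarith

/-! ### Differentiability of the combinations -/

lemma Hyp.comb_deriv (H : Hyp x0 y0 a b V c δ) (θ : ℝ) {x : ℝ} (hx : x ∈ EI x0 y0) :
    HasDerivAt (fun t => 1 * uu a b V c t + θ * vv a b V c t)
      (sder a b c x * (1 * pu a b V c x + θ * pv a b V c x)) x := by
  set w := fun t => sder a b c t * (1 * pu a b V c t + θ * pv a b V c t) with hw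
  have hwc : ContinuousOn w (EI x0 y0) :=
    H.sder_cont.mul
      ((continuousOn_const.mul H.pu_cont).add (continuousOn_const.mul H.pv_cont))
  have hint : IntervalIntegrable w volume c x :=
    (hwc.mono (EI_uIcc_subset H.cmem hx)).intervalIntegrable
  have hmeas := hwc.stronglyMeasurableAtFilter (μ := volume) EI_open x hx
  have hFd := intervalIntegral.integral_hasDerivAt_right hint hmeas
    (hwc.continuousAt (EI_open.mem_nhds hx))
  have hFd2 : HasDerivAt (fun z => 1 * 1 + θ * 0 + ∫ t in c..z, w t) (w x) x :=
    hFd.const_add _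
  refine hFd2.congr_of_eventuallyEq ?_
  filter_upwards [EI_open.mem_nhds hx] with z hz
  have h := (H.comb_rebase 1 θ H.cmem hz).1
  rw [H.uu_c, H.vv_c] at h
  exact h

end Feller

/-- Feller: if `V ≥ δ > 0` a.e., there exist two strictly positive `C¹`
solutions `h1, h2` of `(h'/s')' = m' V h` with `h1' > 0` and `h2' < 0` on `(x0, y0)`. -/
theorem stmt4
    (x0 y0 : EReal) (hxy : x0 < y0)
    (a b V : ℝ → ℝ) (c : ℝ)
    (hc : x0 < (c : EReal) ∧ (c : EReal) < y0)
    (ha : Measurable a) (hb : Measurable b) (hV : Measurable V)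
    (haB : LocEssBdd x0 y0 a) (hbB : LocEssBdd x0 y0 b)
    (hVB : LocEssBdd x0 y0 V) (hainvB : LocEssBdd x0 y0 (fun x => 1 / a x))
    (hapos : ∀ᵐ x ∂(volume.restrict (EI x0 y0)), 0 < a x)
    (hVnn : ∀ x ∈ EI x0 y0, 0 ≤ V x)
    (δ : ℝ) (hδ : 0 < δ)
    (hVδ : ∀ᵐ x ∂(volume.restrict (EI x0 y0)), δ ≤ V x) :
    ∃ h1 h2 h1' h2' : ℝ → ℝ,
      (∀ x ∈ EI x0 y0, 0 < h1 x) ∧ (∀ x ∈ EI x0 y0, 0 < h2 x) ∧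
      ContinuousOn h1' (EI x0 y0) ∧ ContinuousOn h2' (EI x0 y0) ∧
      (∀ x ∈ EI x0 y0, HasDerivAt h1 (h1' x) x) ∧
      (∀ x ∈ EI x0 y0, HasDerivAt h2 (h2' x) x) ∧
      (∀ x ∈ EI x0 y0, ∀ y ∈ EI x0 y0, x ≤ y →
        h1' y / sder a b c y - h1' x / sder a b c x =
          ∫ t in x..y, mder a b c t * V t * h1 t) ∧
      (∀ x ∈ EI x0 y0, ∀ y ∈ EI x0 y0, x ≤ y →
        h2' y / sder a b c y - h2' x / sder a b c x =
          ∫ t in x..y, mder a b c t * V t * h2 t) ∧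
      (∀ x ∈ EI x0 y0, 0 < h1' x) ∧ (∀ x ∈ EI x0 y0, h2' x < 0) := by
  have H : Feller.Hyp x0 y0 a b V c δ :=
    ⟨hc.1, hc.2, ha, hb, hV, hbB, hVB, hainvB, hapos, hVnn, hδ, hVδ⟩
  obtain ⟨θ1, hθ1pos, hp1, hh1⟩ := H.h1_spec
  obtain ⟨θ2, hθ2neg, hp2, hh2⟩ := H.h2_spec
  refine ⟨fun t => 1 * Feller.uu a b V c t + θ1 * Feller.vv a b V c t,
          fun t => 1 * Feller.uu a b V c t + θ2 * Feller.vv a b V c t,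
          fun t => sder a b c t * (1 * Feller.pu a b V c t + θ1 * Feller.pv a b V c t),
          fun t => sder a b c t * (1 * Feller.pu a b V c t + θ2 * Feller.pv a b V c t),
          ?_, ?_, ?_, ?_, ?_, ?_, ?_, ?_, ?_, ?_⟩
  · intro x hx
    have := hh1 x hx
    show 0 < 1 * Feller.uu a b V c x + θ1 * Feller.vv a b V c x
    linarith
  · intro x hx
    have := hh2 x hx
    show 0 < 1 * Feller.uu a b V c x + θ2 * Feller.vv a b V c x
    linarith
  · exact H.sder_cont.mul
      ((continuousOn_const.mul H.pu_cont).add (continuousOn_const.mul H.pv_cont))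
  · exact H.sder_cont.mul
      ((continuousOn_const.mul H.pu_cont).add (continuousOn_const.mul H.pv_cont))
  · intro x hx
    exact H.comb_deriv θ1 hx
  · intro x hx
    exact H.comb_deriv θ2 hx
  · intro x hx y hy hxy
    have key := (H.comb_rebase 1 θ1 hx hy).2
    show sder a b c y * (1 * Feller.pu a b V c y + θ1 * Feller.pv a b V c y) / sder a b c y -
      sder a b c x * (1 * Feller.pu a b V c x + θ1 * Feller.pv a b V c x) / sder a b c x = _
    rw [mul_div_cancel_left₀ _ (ne_of_gt (Feller.sder_pos y)),
      mul_div_cancel_left₀ _ (ne_of_gt (Feller.sder_pos x))]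
    have goal' : 1 * Feller.pu a b V c y + θ1 * Feller.pv a b V c y -
        (1 * Feller.pu a b V c x + θ1 * Feller.pv a b V c x) =
        ∫ t in x..y, Feller.Kf a b V c t *
          (1 * Feller.uu a b V c t + θ1 * Feller.vv a b V c t) := by linarith
    exact goal'
  · intro x hx y hy hxy
    have key := (H.comb_rebase 1 θ2 hx hy).2
    show sder a b c y * (1 * Feller.pu a b V c y + θ2 * Feller.pv a b V c y) / sder a b c y -
      sder a b c x * (1 * Feller.pu a b V c x + θ2 * Feller.pv a b V c x) / sder a b c x = _
    rw [mul_div_cancel_left₀ _ (ne_of_gt (Feller.sder_pos y)),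
      mul_div_cancel_left₀ _ (ne_of_gt (Feller.sder_pos x))]
    have goal' : 1 * Feller.pu a b V c y + θ2 * Feller.pv a b V c y -
        (1 * Feller.pu a b V c x + θ2 * Feller.pv a b V c x) =
        ∫ t in x..y, Feller.Kf a b V c t *
          (1 * Feller.uu a b V c t + θ2 * Feller.vv a b V c t) := by linarith
    exact goal'
  · intro x hx
    have h1 := hp1 x hx
    have h2 : 0 < 1 * Feller.pu a b V c x + θ1 * Feller.pv a b V c x := by linarith
    exact mul_pos (Feller.sder_pos x) h2
  · intro x hx
    have h1 := hp2 x hx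
    have h2 : 1 * Feller.pu a b V c x + θ2 * Feller.pv a b V c x < 0 := by linarith
    exact mul_neg_of_pos_of_neg (Feller.sder_pos x) h2
end
end

section
/- Let h be a C¹ function on (x0,y0) which is a solution of (h'/s')' = m' V h (i.e. h'(y)/s'(y) − h'(x)/s'(x) = ∫_x^y m'(t) V(t) h(t) dt for all x ≤ y). If h(c) > 0, h'(c) > 0 and ∫_c^{y0} V(t) m'(t) dt > 0, then there exists a constant C > 0 such that h(c) · ∑_{n≥0} I_n^V(x) ≤ h(x) ≤ C · ∑_{n≥0} I_n^V(x) for every x ∈ [c, y0). -/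
open MeasureTheory Set Filter

noncomputable section

/-- Bundle of all standing hypotheses. -/
structure St where
  x0 : EReal
  y0 : EReal
  a : ℝ → ℝ
  b : ℝ → ℝ
  V : ℝ → ℝ
  c : ℝ
  h : ℝ → ℝ
  h' : ℝ → ℝ
  hc1 : x0 < (c : EReal)
  hc2 : (c : EReal) < y0
  ha : Measurable a
  hb : Measurable b
  hV : Measurable V
  hbB : LocEssBdd x0 y0 b
  hVB : LocEssBdd x0 y0 V
  hainvB : LocEssBdd x0 y0 (fun x => 1 / a x)
  hapos : ∀ᵐ x ∂(volume.restrict (EI x0 y0)), 0 < a x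
  hVnn : ∀ x ∈ EI x0 y0, 0 ≤ V x
  hcont : ContinuousOn h' (EI x0 y0)
  hder : ∀ x ∈ EI x0 y0, HasDerivAt h (h' x) x
  hsol : ∀ x ∈ EI x0 y0, ∀ y ∈ EI x0 y0, x ≤ y →
      h' y / sder a b c y - h' x / sder a b c x =
        ∫ t in x..y, mder a b c t * V t * h t
  hhc : 0 < h c
  hh'c : 0 < h' c

namespace St

variable (S : St)

/-- the interval -/
def E : Set ℝ := EI S.x0 S.y0

def s' : ℝ → ℝ := sder S.a S.b S.c
def m' : ℝ → ℝ := mder S.a S.b S.c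
/-- iterated integrals -/
def I : ℕ → ℝ → ℝ := Ifun S.a S.b S.c S.V
/-- inner integral operator -/
def inn (g : ℝ → ℝ) (r : ℝ) : ℝ := ∫ t in S.c..r, S.m' t * S.V t * g t
/-- full operator -/
def K (g : ℝ → ℝ) (x : ℝ) : ℝ := ∫ r in S.c..x, S.s' r * S.inn g r
/-- primitive of s' -/
def Sc (x : ℝ) : ℝ := ∫ r in S.c..x, S.s' r

lemma I_succ (n : ℕ) (x : ℝ) : S.I (n+1) x = S.K (S.I n) x := rfl

lemma cE : S.c ∈ S.E := ⟨S.hc1, S.hc2⟩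

lemma icc_sub {x : ℝ} (hx : x ∈ S.E) (hcx : S.c ≤ x) : Icc S.c x ⊆ S.E := by
  intro z hz
  exact ⟨lt_of_lt_of_le S.hc1 (EReal.coe_le_coe_iff.2 hz.1),
    lt_of_le_of_lt (EReal.coe_le_coe_iff.2 hz.2) hx.2⟩

lemma s'_pos (y : ℝ) : 0 < S.s' y := Real.exp_pos _

lemma s'_c : S.s' S.c = 1 := by
  simp [s', sder]

/-- a.e. positivity of `m'` on a compact subinterval -/
lemma m'_ae_pos {x : ℝ} (hx : x ∈ S.E) (hcx : S.c ≤ x) :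
    ∀ᵐ t ∂(volume.restrict (Icc S.c x)), 0 < S.m' t := by
  have h1 : ∀ᵐ t ∂(volume.restrict (Icc S.c x)), 0 < S.a t :=
    ae_mono (Measure.restrict_mono (S.icc_sub hx hcx) le_rfl) S.hapos
  filter_upwards [h1] with t ht
  exact mul_pos (by positivity) (Real.exp_pos _)

lemma intBA {x : ℝ} (hx : x ∈ S.E) (hcx : S.c ≤ x) :
    IntegrableOn (fun t => S.b t / S.a t) (Icc S.c x) := by
  obtain ⟨Cb, hCb⟩ := S.hbB S.c x S.hc1 hx.2
  obtain ⟨Ca, hCa⟩ := S.hainvB S.c x S.hc1 hx.2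
  refine Integrable.mono' (integrable_const (|Cb| * |Ca|)) ?_ ?_
  · exact ((S.hb.div S.ha).aestronglyMeasurable)
  · filter_upwards [hCb, hCa] with t h1 h2
    have : S.b t / S.a t = S.b t * (1 / S.a t) := by ring
    rw [Real.norm_eq_abs, this, abs_mul]
    exact mul_le_mul (h1.trans (le_abs_self _)) (h2.trans (le_abs_self _))
      (abs_nonneg _) (abs_nonneg _)

lemma FcontOn {x : ℝ} (hx : x ∈ S.E) (hcx : S.c ≤ x) :
    ContinuousOn (fun y => ∫ t in S.c..y, S.b t / S.a t) (Icc S.c x) := by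
  have h1 : IntegrableOn (fun t => S.b t / S.a t) (uIcc S.c x) := by
    rw [uIcc_of_le hcx]; exact S.intBA hx hcx
  have h2 := intervalIntegral.continuousOn_primitive_interval h1
  rwa [uIcc_of_le hcx] at h2

lemma s'contOn {x : ℝ} (hx : x ∈ S.E) (hcx : S.c ≤ x) :
    ContinuousOn S.s' (Icc S.c x) :=
  Real.continuous_exp.comp_continuousOn (S.FcontOn hx hcx).neg

lemma expFcontOn {x : ℝ} (hx : x ∈ S.E) (hcx : S.c ≤ x) :
    ContinuousOn (fun y => Real.exp (∫ t in S.c..y, S.b t / S.a t)) (Icc S.c x) :=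
  Real.continuous_exp.comp_continuousOn (S.FcontOn hx hcx)

/-- integrability of `m' * V * g` for continuous `g` -/
lemma intMVg {x : ℝ} (hx : x ∈ S.E) (hcx : S.c ≤ x) {g : ℝ → ℝ}
    (hg : ContinuousOn g (Icc S.c x)) :
    IntegrableOn (fun t => S.m' t * S.V t * g t) (Icc S.c x) := by
  obtain ⟨Ca, hCa⟩ := S.hainvB S.c x S.hc1 hx.2
  obtain ⟨Cv, hCv⟩ := S.hVB S.c x S.hc1 hx.2
  obtain ⟨Ce, hCe⟩ := (isCompact_Icc (a := S.c) (b := x)).exists_bound_of_continuousOn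
    (S.expFcontOn hx hcx)
  obtain ⟨Cg, hCg⟩ := (isCompact_Icc (a := S.c) (b := x)).exists_bound_of_continuousOn hg
  have hCe' : 0 ≤ Ce := le_trans (norm_nonneg _) (hCe S.c ⟨le_rfl, hcx⟩)
  have hCg' : 0 ≤ Cg := le_trans (norm_nonneg _) (hCg S.c ⟨le_rfl, hcx⟩)
  refine Integrable.mono' (integrable_const ((|Ca| * Ce) * (|Cv| * Cg))) ?_ ?_
  · apply AEMeasurable.aestronglyMeasurable
    have h1 : AEMeasurable (fun t => 1 / S.a t) (volume.restrict (Icc S.c x)) :=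
      (measurable_const.div S.ha).aemeasurable
    have h2 : AEMeasurable (fun y => Real.exp (∫ t in S.c..y, S.b t / S.a t))
        (volume.restrict (Icc S.c x)) :=
      (S.expFcontOn hx hcx).aemeasurable measurableSet_Icc
    have h3 : AEMeasurable g (volume.restrict (Icc S.c x)) :=
      hg.aemeasurable measurableSet_Icc
    exact ((h1.mul h2).mul S.hV.aemeasurable).mul h3
  · rw [ae_restrict_iff' measurableSet_Icc]
    filter_upwards [(ae_restrict_iff' measurableSet_Icc).1 hCa,
      (ae_restrict_iff' measurableSet_Icc).1 hCv] with t h1 h2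
    intro ht
    have e1 : |1 / S.a t| ≤ |Ca| := (h1 ht).trans (le_abs_self _)
    have e2 : |Real.exp (∫ u in S.c..t, S.b u / S.a u)| ≤ Ce := hCe t ht
    have e3 : |S.V t| ≤ |Cv| := (h2 ht).trans (le_abs_self _)
    have e4 : |g t| ≤ Cg := hCg t ht
    have : ‖S.m' t * S.V t * g t‖ = (|1 / S.a t| * |Real.exp (∫ u in S.c..t, S.b u / S.a u)|) * (|S.V t| * |g t|) := by
      rw [Real.norm_eq_abs, m', mder]
      rw [abs_mul, abs_mul, abs_mul]; ring
    rw [this]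
    exact mul_le_mul (mul_le_mul e1 e2 (abs_nonneg _) (abs_nonneg _))
      (mul_le_mul e3 e4 (abs_nonneg _) (by positivity)) (by positivity) (by positivity)


lemma intMVg' {x : ℝ} (hx : x ∈ S.E) (hcx : S.c ≤ x) {g : ℝ → ℝ}
    (hg : ContinuousOn g (Icc S.c x)) {r : ℝ} (hr : r ∈ Icc S.c x) :
    IntervalIntegrable (fun t => S.m' t * S.V t * g t) volume S.c r := by
  have h1 : IntegrableOn (fun t => S.m' t * S.V t * g t) (uIcc S.c r) := by
    rw [uIcc_of_le hr.1]
    exact (S.intMVg hx hcx hg).mono_set (Icc_subset_Icc le_rfl hr.2)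
  exact h1.intervalIntegrable

lemma innContOn {x : ℝ} (hx : x ∈ S.E) (hcx : S.c ≤ x) {g : ℝ → ℝ}
    (hg : ContinuousOn g (Icc S.c x)) :
    ContinuousOn (S.inn g) (Icc S.c x) := by
  have h1 : IntegrableOn (fun t => S.m' t * S.V t * g t) (uIcc S.c x) := by
    rw [uIcc_of_le hcx]; exact S.intMVg hx hcx hg
  have h2 := intervalIntegral.continuousOn_primitive_interval h1
  rwa [uIcc_of_le hcx] at h2

lemma ae_nn {x : ℝ} (hx : x ∈ S.E) (hcx : S.c ≤ x) {g : ℝ → ℝ}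
    (hg : ∀ t ∈ Icc S.c x, 0 ≤ g t) {r : ℝ} (hr : r ∈ Icc S.c x) :
    0 ≤ᵐ[volume.restrict (Icc S.c r)] fun t => S.m' t * S.V t * g t := by
  have h1 : ∀ᵐ t ∂(volume.restrict (Icc S.c r)), 0 < S.m' t :=
    ae_mono (Measure.restrict_mono (Icc_subset_Icc le_rfl hr.2) le_rfl) (S.m'_ae_pos hx hcx)
  rw [EventuallyLE, ae_restrict_iff' measurableSet_Icc]
  filter_upwards [(ae_restrict_iff' measurableSet_Icc).1 h1] with t h1 ht
  have ht' : t ∈ Icc S.c x := ⟨ht.1, ht.2.trans hr.2⟩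
  have hV := S.hVnn t (S.icc_sub hx hcx ht')
  have := hg t ht'
  have := (h1 ht).le
  positivity

lemma inn_nonneg {x : ℝ} (hx : x ∈ S.E) (hcx : S.c ≤ x) {g : ℝ → ℝ}
    (hg : ∀ t ∈ Icc S.c x, 0 ≤ g t) {r : ℝ} (hr : r ∈ Icc S.c x) :
    0 ≤ S.inn g r :=
  intervalIntegral.integral_nonneg_of_ae_restrict hr.1 (S.ae_nn hx hcx hg hr)

lemma inn_mono {x : ℝ} (hx : x ∈ S.E) (hcx : S.c ≤ x) {g₁ g₂ : ℝ → ℝ}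
    (hg₁ : ContinuousOn g₁ (Icc S.c x)) (hg₂ : ContinuousOn g₂ (Icc S.c x))
    (hle : ∀ t ∈ Icc S.c x, g₁ t ≤ g₂ t) {r : ℝ} (hr : r ∈ Icc S.c x) :
    S.inn g₁ r ≤ S.inn g₂ r := by
  refine intervalIntegral.integral_mono_ae_restrict hr.1
    (S.intMVg' hx hcx hg₁ hr) (S.intMVg' hx hcx hg₂ hr) ?_
  have h1 : ∀ᵐ t ∂(volume.restrict (Icc S.c r)), 0 < S.m' t :=
    ae_mono (Measure.restrict_mono (Icc_subset_Icc le_rfl hr.2) le_rfl) (S.m'_ae_pos hx hcx)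
  rw [EventuallyLE, ae_restrict_iff' measurableSet_Icc]
  filter_upwards [(ae_restrict_iff' measurableSet_Icc).1 h1] with t h1 ht
  have ht' : t ∈ Icc S.c x := ⟨ht.1, ht.2.trans hr.2⟩
  have hV := S.hVnn t (S.icc_sub hx hcx ht')
  have hm := (h1 ht).le
  exact mul_le_mul_of_nonneg_left (hle t ht') (by positivity)

lemma sinnContOn {x : ℝ} (hx : x ∈ S.E) (hcx : S.c ≤ x) {g : ℝ → ℝ}
    (hg : ContinuousOn g (Icc S.c x)) :
    ContinuousOn (fun r => S.s' r * S.inn g r) (Icc S.c x) :=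
  (S.s'contOn hx hcx).mul (S.innContOn hx hcx hg)

lemma sinnInt {x : ℝ} (hx : x ∈ S.E) (hcx : S.c ≤ x) {g : ℝ → ℝ}
    (hg : ContinuousOn g (Icc S.c x)) :
    IntervalIntegrable (fun r => S.s' r * S.inn g r) volume S.c x := by
  have := (S.sinnContOn hx hcx hg)
  rw [← uIcc_of_le hcx] at this
  exact this.intervalIntegrable

lemma K_nonneg {x : ℝ} (hx : x ∈ S.E) (hcx : S.c ≤ x) {g : ℝ → ℝ}
    (hg : ∀ t ∈ Icc S.c x, 0 ≤ g t) : 0 ≤ S.K g x := by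
  refine intervalIntegral.integral_nonneg hcx (fun r hr => ?_)
  exact mul_nonneg (S.s'_pos r).le (S.inn_nonneg hx hcx hg hr)

lemma K_mono {x : ℝ} (hx : x ∈ S.E) (hcx : S.c ≤ x) {g₁ g₂ : ℝ → ℝ}
    (hg₁ : ContinuousOn g₁ (Icc S.c x)) (hg₂ : ContinuousOn g₂ (Icc S.c x))
    (hle : ∀ t ∈ Icc S.c x, g₁ t ≤ g₂ t) :
    S.K g₁ x ≤ S.K g₂ x := by
  refine intervalIntegral.integral_mono_on hcx (S.sinnInt hx hcx hg₁) (S.sinnInt hx hcx hg₂)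
    (fun r hr => ?_)
  exact mul_le_mul_of_nonneg_left (S.inn_mono hx hcx hg₁ hg₂ hle hr) (S.s'_pos r).le

lemma inn_smul {x : ℝ} (hx : x ∈ S.E) (hcx : S.c ≤ x) (α : ℝ) {g : ℝ → ℝ}
    {r : ℝ} (hr : r ∈ Icc S.c x) :
    S.inn (fun t => α * g t) r = α * S.inn g r := by
  rw [inn, inn, ← intervalIntegral.integral_const_mul]
  apply intervalIntegral.integral_congr
  intro t _
  show S.m' t * S.V t * (α * g t) = α * (S.m' t * S.V t * g t)
  ring

lemma K_smul {x : ℝ} (hx : x ∈ S.E) (hcx : S.c ≤ x) (α : ℝ) {g : ℝ → ℝ} :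
    S.K (fun t => α * g t) x = α * S.K g x := by
  rw [K, K, ← intervalIntegral.integral_const_mul]
  apply intervalIntegral.integral_congr
  intro r hr
  rw [uIcc_of_le hcx] at hr
  show S.s' r * S.inn (fun t => α * g t) r = α * (S.s' r * S.inn g r)
  rw [S.inn_smul hx hcx α hr]
  ring

lemma inn_sum {x : ℝ} (hx : x ∈ S.E) (hcx : S.c ≤ x) {ι : Type*} (s : Finset ι)
    (g : ι → ℝ → ℝ) (hg : ∀ k ∈ s, ContinuousOn (g k) (Icc S.c x))
    {r : ℝ} (hr : r ∈ Icc S.c x) :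
    S.inn (fun t => ∑ k ∈ s, g k t) r = ∑ k ∈ s, S.inn (g k) r := by
  simp only [inn]
  rw [← intervalIntegral.integral_finset_sum
    (fun k hk => S.intMVg' hx hcx (hg k hk) hr)]
  apply intervalIntegral.integral_congr
  intro t _
  show S.m' t * S.V t * (∑ k ∈ s, g k t) = ∑ k ∈ s, S.m' t * S.V t * g k t
  rw [Finset.mul_sum]

lemma K_sum {x : ℝ} (hx : x ∈ S.E) (hcx : S.c ≤ x) {ι : Type*} (s : Finset ι)
    (g : ι → ℝ → ℝ) (hg : ∀ k ∈ s, ContinuousOn (g k) (Icc S.c x)) :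
    S.K (fun t => ∑ k ∈ s, g k t) x = ∑ k ∈ s, S.K (g k) x := by
  simp only [K]
  rw [← intervalIntegral.integral_finset_sum
    (fun k hk => S.sinnInt hx hcx (hg k hk))]
  apply intervalIntegral.integral_congr
  intro r hr
  rw [uIcc_of_le hcx] at hr
  show S.s' r * S.inn (fun t => ∑ k ∈ s, g k t) r = ∑ k ∈ s, S.s' r * S.inn (g k) r
  rw [S.inn_sum hx hcx s g hg hr, Finset.mul_sum]

lemma inn_add {x : ℝ} (hx : x ∈ S.E) (hcx : S.c ≤ x) {g₁ g₂ : ℝ → ℝ}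
    (h₁ : ContinuousOn g₁ (Icc S.c x)) (h₂ : ContinuousOn g₂ (Icc S.c x))
    {r : ℝ} (hr : r ∈ Icc S.c x) :
    S.inn (fun t => g₁ t + g₂ t) r = S.inn g₁ r + S.inn g₂ r := by
  rw [inn, inn, inn, ← intervalIntegral.integral_add (S.intMVg' hx hcx h₁ hr)
    (S.intMVg' hx hcx h₂ hr)]
  apply intervalIntegral.integral_congr
  intro t _
  show S.m' t * S.V t * (g₁ t + g₂ t) = S.m' t * S.V t * g₁ t + S.m' t * S.V t * g₂ t
  ring

lemma K_add {x : ℝ} (hx : x ∈ S.E) (hcx : S.c ≤ x) {g₁ g₂ : ℝ → ℝ}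
    (h₁ : ContinuousOn g₁ (Icc S.c x)) (h₂ : ContinuousOn g₂ (Icc S.c x)) :
    S.K (fun t => g₁ t + g₂ t) x = S.K g₁ x + S.K g₂ x := by
  rw [K, K, K, ← intervalIntegral.integral_add (S.sinnInt hx hcx h₁) (S.sinnInt hx hcx h₂)]
  apply intervalIntegral.integral_congr
  intro r hr
  rw [uIcc_of_le hcx] at hr
  show S.s' r * S.inn (fun t => g₁ t + g₂ t) r = S.s' r * S.inn g₁ r + S.s' r * S.inn g₂ r
  rw [S.inn_add hx hcx h₁ h₂ hr]
  ring


lemma K_contOn {x : ℝ} (hx : x ∈ S.E) (hcx : S.c ≤ x) {g : ℝ → ℝ}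
    (hg : ContinuousOn g (Icc S.c x)) :
    ContinuousOn (S.K g) (Icc S.c x) := by
  have h1 : IntegrableOn (fun r => S.s' r * S.inn g r) (uIcc S.c x) := by
    rw [uIcc_of_le hcx]
    exact (S.sinnContOn hx hcx hg).integrableOn_compact isCompact_Icc
  have h2 := intervalIntegral.continuousOn_primitive_interval h1
  rwa [uIcc_of_le hcx] at h2

lemma I_contOn : ∀ n : ℕ, ∀ x ∈ S.E, S.c ≤ x → ContinuousOn (S.I n) (Icc S.c x) := by
  intro n
  induction n with
  | zero => intro x hx hcx; exact continuousOn_const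
  | succ n IH =>
    intro x hx hcx
    have := S.K_contOn hx hcx (IH x hx hcx)
    exact this.congr (fun y _ => S.I_succ n y)

lemma I_nonneg : ∀ n : ℕ, ∀ y ∈ S.E, S.c ≤ y → 0 ≤ S.I n y := by
  intro n
  induction n with
  | zero => intro y _ _; exact zero_le_one
  | succ n IH =>
    intro y hy hcy
    rw [S.I_succ]
    exact S.K_nonneg hy hcy (fun t ht => IH t (S.icc_sub hy hcy ht) ht.1)

lemma hcontOn {x : ℝ} (hx : x ∈ S.E) (hcx : S.c ≤ x) :
    ContinuousOn S.h (Icc S.c x) := fun y hy =>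
  ((S.hder y (S.icc_sub hx hcx hy)).continuousAt).continuousWithinAt

lemma h'_eq {x : ℝ} (hx : x ∈ S.E) (hcx : S.c ≤ x) {r : ℝ} (hr : r ∈ Icc S.c x) :
    S.h' r = S.s' r * (S.h' S.c + S.inn S.h r) := by
  have h0 := S.hsol S.c S.cE r (S.icc_sub hx hcx hr) hr.1
  have h1 : S.h' r / S.s' r - S.h' S.c / S.s' S.c = S.inn S.h r := h0
  rw [S.s'_c, div_one] at h1
  have h2 : S.h' r / S.s' r = S.h' S.c + S.inn S.h r := by linarith
  rw [div_eq_iff (S.s'_pos r).ne'] at h2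
  rw [h2]; ring

lemma Sc_nonneg {x : ℝ} (hcx : S.c ≤ x) : 0 ≤ S.Sc x :=
  intervalIntegral.integral_nonneg hcx (fun r _ => (S.s'_pos r).le)

lemma s'Int {x u v : ℝ} (hu : u ∈ Icc S.c x) (hv : v ∈ Icc S.c x)
    (hx : x ∈ S.E) (hcx : S.c ≤ x) :
    IntervalIntegrable S.s' volume u v := by
  have : ContinuousOn S.s' (uIcc u v) := by
    refine (S.s'contOn hx hcx).mono ?_
    rw [uIcc]
    exact Icc_subset_Icc (le_inf hu.1 hv.1) (sup_le hu.2 hv.2)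
  exact this.intervalIntegrable

lemma hFTC {x : ℝ} (hx : x ∈ S.E) (hcx : S.c ≤ x) :
    S.h x = S.h S.c + ∫ r in S.c..x, S.h' r := by
  have h1 : ∀ t ∈ uIcc S.c x, HasDerivAt S.h (S.h' t) t := by
    rw [uIcc_of_le hcx]
    exact fun t ht => S.hder t (S.icc_sub hx hcx ht)
  have h2 : IntervalIntegrable S.h' volume S.c x := by
    have : ContinuousOn S.h' (uIcc S.c x) := by
      rw [uIcc_of_le hcx]; exact S.hcont.mono (S.icc_sub hx hcx)
    exact this.intervalIntegrable
  have := intervalIntegral.integral_eq_sub_of_hasDerivAt h1 h2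
  rw [this]; ring

lemma hsplit {x : ℝ} (hx : x ∈ S.E) (hcx : S.c ≤ x) :
    S.h x = S.h S.c + S.h' S.c * S.Sc x + S.K S.h x := by
  rw [S.hFTC hx hcx]
  have e1 : ∫ r in S.c..x, S.h' r
      = ∫ r in S.c..x, (S.h' S.c * S.s' r + S.s' r * S.inn S.h r) := by
    apply intervalIntegral.integral_congr
    intro r hr
    rw [uIcc_of_le hcx] at hr
    rw [S.h'_eq hx hcx hr]; ring
  have i1 : IntervalIntegrable (fun r => S.h' S.c * S.s' r) volume S.c x := by
    have : ContinuousOn (fun r => S.h' S.c * S.s' r) (uIcc S.c x) := by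
      rw [uIcc_of_le hcx]; exact continuousOn_const.mul (S.s'contOn hx hcx)
    exact this.intervalIntegrable
  have i2 := S.sinnInt hx hcx (S.hcontOn hx hcx)
  rw [e1, intervalIntegral.integral_add i1 i2, intervalIntegral.integral_const_mul]
  rw [Sc, K]
  ring

lemma h_pos {x : ℝ} (hx : x ∈ S.E) (hcx : S.c ≤ x) :
    ∀ y ∈ Icc S.c x, 0 < S.h y := by
  by_contra hcon
  push_neg at hcon
  obtain ⟨y, hy, hy0⟩ := hcon
  set Kset := Icc S.c x ∩ S.h ⁻¹' (Iic 0) with hKdef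
  have hKcl : IsClosed Kset :=
    (S.hcontOn hx hcx).preimage_isClosed_of_isClosed isClosed_Icc isClosed_Iic
  have hKne : Kset.Nonempty := ⟨y, hy, hy0⟩
  have hKbd : BddBelow Kset := bddBelow_Icc.mono inter_subset_left
  set z := sInf Kset with hzdef
  have hzK : z ∈ Kset := hKcl.csInf_mem hKne hKbd
  have hzI : z ∈ Icc S.c x := hzK.1
  have hz0 : S.h z ≤ 0 := hzK.2
  have hcz : S.c < z := by
    rcases eq_or_lt_of_le hzI.1 with e | e
    · exact absurd (e ▸ hz0) (not_le.2 S.hhc)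
    · exact e
  have hpre : ∀ u ∈ Ico S.c z, 0 < S.h u := by
    intro u hu
    by_contra h0
    push_neg at h0
    have hmem : u ∈ Kset := ⟨⟨hu.1, hu.2.le.trans hzI.2⟩, h0⟩
    exact absurd (csInf_le hKbd hmem) (not_le.2 hu.2)
  have hsub : Icc S.c z ⊆ Icc S.c x := Icc_subset_Icc le_rfl hzI.2
  have hsm : StrictMonoOn S.h (Icc S.c z) := by
    apply strictMonoOn_of_deriv_pos (convex_Icc _ _) ((S.hcontOn hx hcx).mono hsub)
    intro u hu
    rw [interior_Icc] at hu
    have huI : u ∈ Icc S.c x := ⟨hu.1.le, hu.2.le.trans hzI.2⟩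
    have huE : u ∈ S.E := S.icc_sub hx hcx huI
    rw [(S.hder u huE).deriv]
    have h1 : S.h' u = S.s' u * (S.h' S.c + S.inn S.h u) := S.h'_eq hx hcx huI
    have h2 : 0 ≤ S.inn S.h u := by
      refine S.inn_nonneg huE hu.1.le (fun t ht => ?_) (right_mem_Icc.2 hu.1.le)
      exact (hpre t ⟨ht.1, lt_of_le_of_lt ht.2 hu.2⟩).le
    rw [h1]
    have := S.hh'c
    exact mul_pos (S.s'_pos u) (by linarith)
  have := hsm (left_mem_Icc.2 hcz.le) (right_mem_Icc.2 hcz.le) hcz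
  have := S.hhc
  linarith

lemma h_mono {x : ℝ} (hx : x ∈ S.E) (hcx : S.c ≤ x) :
    MonotoneOn S.h (Icc S.c x) := by
  apply monotoneOn_of_deriv_nonneg (convex_Icc _ _) (S.hcontOn hx hcx)
  · intro u hu
    rw [interior_Icc] at hu
    exact ((S.hder u (S.icc_sub hx hcx ⟨hu.1.le, hu.2.le⟩)).differentiableAt).differentiableWithinAt
  · intro u hu
    rw [interior_Icc] at hu
    have huI : u ∈ Icc S.c x := ⟨hu.1.le, hu.2.le⟩
    have huE : u ∈ S.E := S.icc_sub hx hcx huI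
    rw [(S.hder u huE).deriv]
    rw [S.h'_eq hx hcx huI]
    have h2 : 0 ≤ S.inn S.h u := by
      refine S.inn_nonneg huE hu.1.le (fun t ht => ?_) (right_mem_Icc.2 hu.1.le)
      exact (S.h_pos hx hcx t ⟨ht.1, ht.2.trans huI.2⟩).le
    have := S.hh'c
    exact mul_nonneg (S.s'_pos u).le (by linarith)

lemma lower : ∀ n : ℕ, ∀ x ∈ S.E, S.c ≤ x →
    S.h S.c * (∑ k ∈ Finset.range (n+1), S.I k x) ≤ S.h x := by
  intro n
  induction n with
  | zero =>
    intro x hx hcx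
    have : S.h S.c ≤ S.h x :=
      S.h_mono hx hcx (left_mem_Icc.2 hcx) (right_mem_Icc.2 hcx) hcx
    simpa [I, Ifun] using this
  | succ n IH =>
    intro x hx hcx
    set P : ℝ → ℝ := fun t => S.h S.c * ∑ k ∈ Finset.range (n+1), S.I k t with hPdef
    have hPcont : ContinuousOn P (Icc S.c x) :=
      continuousOn_const.mul (continuousOn_finset_sum _ (fun k _ => S.I_contOn k x hx hcx))
    have e1 := S.hsplit hx hcx
    have e2 : 0 ≤ S.h' S.c * S.Sc x := mul_nonneg S.hh'c.le (S.Sc_nonneg hcx)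
    have e3 : S.K P x ≤ S.K S.h x := by
      refine S.K_mono hx hcx hPcont (S.hcontOn hx hcx) (fun t ht => ?_)
      exact IH t (S.icc_sub hx hcx ht) ht.1
    have e4 : S.K P x = S.h S.c * ∑ k ∈ Finset.range (n+1), S.I (k+1) x := by
      rw [hPdef]
      rw [S.K_smul hx hcx]
      congr 1
      rw [S.K_sum hx hcx _ _ (fun k _ => S.I_contOn k x hx hcx)]
      exact Finset.sum_congr rfl (fun k _ => (S.I_succ k x).symm)
    have e5 : ∑ k ∈ Finset.range (n+2), S.I k x
        = (∑ k ∈ Finset.range (n+1), S.I (k+1) x) + S.I 0 x :=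
      Finset.sum_range_succ' _ _
    have e6 : S.I 0 x = 1 := rfl
    have e7 : 0 ≤ S.K S.h x :=
      S.K_nonneg hx hcx (fun t ht => (S.h_pos hx hcx t ht).le)
    rw [e5, e6]
    have := S.hhc
    nlinarith [e3, e4]


lemma MVInt {x : ℝ} (hx : x ∈ S.E) (hcx : S.c ≤ x) {g : ℝ → ℝ}
    (hg : ContinuousOn g (Icc S.c x)) {u v : ℝ}
    (hu : u ∈ Icc S.c x) (hv : v ∈ Icc S.c x) :
    IntervalIntegrable (fun t => S.m' t * S.V t * g t) volume u v := by
  refine IntegrableOn.intervalIntegrable ?_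
  refine (S.intMVg hx hcx hg).mono_set ?_
  rw [uIcc]
  exact Icc_subset_Icc (le_inf hu.1 hv.1) (sup_le hu.2 hv.2)

lemma sinnInt' {x : ℝ} (hx : x ∈ S.E) (hcx : S.c ≤ x) {g : ℝ → ℝ}
    (hg : ContinuousOn g (Icc S.c x)) {u v : ℝ}
    (hu : u ∈ Icc S.c x) (hv : v ∈ Icc S.c x) :
    IntervalIntegrable (fun r => S.s' r * S.inn g r) volume u v := by
  refine IntegrableOn.intervalIntegrable ?_
  refine ((S.sinnContOn hx hcx hg).mono ?_).integrableOn_compact isCompact_uIcc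
  rw [uIcc]
  exact Icc_subset_Icc (le_inf hu.1 hv.1) (sup_le hu.2 hv.2)

lemma Sc_diff {x : ℝ} (hx : x ∈ S.E) (hcx : S.c ≤ x) {u v : ℝ}
    (hu : u ∈ Icc S.c x) (hv : v ∈ Icc S.c x) :
    S.Sc v = S.Sc u + ∫ r in u..v, S.s' r := by
  have := intervalIntegral.integral_add_adjacent_intervals
    (S.s'Int (left_mem_Icc.2 hcx) hu hx hcx) (S.s'Int hu hv hx hcx)
  rw [Sc, Sc, ← this]

lemma inn_diff {x : ℝ} (hx : x ∈ S.E) (hcx : S.c ≤ x) {g : ℝ → ℝ}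
    (hg : ContinuousOn g (Icc S.c x)) {u v : ℝ}
    (hu : u ∈ Icc S.c x) (hv : v ∈ Icc S.c x) :
    S.inn g v = S.inn g u + ∫ t in u..v, S.m' t * S.V t * g t := by
  have := intervalIntegral.integral_add_adjacent_intervals
    (S.MVInt hx hcx hg (left_mem_Icc.2 hcx) hu) (S.MVInt hx hcx hg hu hv)
  rw [inn, inn, ← this]

/-- lower bound for `I 1` past `d` -/
lemma I1_lb {d : ℝ} (hd : d ∈ S.E) (hcd : S.c ≤ d) :
    ∀ x ∈ S.E, d ≤ x → (S.inn (S.I 0) d) * (S.Sc x - S.Sc d) ≤ S.I 1 x := by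
  intro x hx hdx
  have hcx : S.c ≤ x := hcd.trans hdx
  have hdI : d ∈ Icc S.c x := ⟨hcd, hdx⟩
  have hxI : x ∈ Icc S.c x := right_mem_Icc.2 hcx
  have hI0cont : ContinuousOn (S.I 0) (Icc S.c x) := continuousOn_const
  -- split I 1 x
  have hsplit : S.I 1 x = (∫ r in S.c..d, S.s' r * S.inn (S.I 0) r)
      + ∫ r in d..x, S.s' r * S.inn (S.I 0) r := by
    rw [S.I_succ, K]
    exact (intervalIntegral.integral_add_adjacent_intervals
      (S.sinnInt' hx hcx hI0cont (left_mem_Icc.2 hcx) hdI)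
      (S.sinnInt' hx hcx hI0cont hdI hxI)).symm
  have h1 : 0 ≤ ∫ r in S.c..d, S.s' r * S.inn (S.I 0) r := by
    refine intervalIntegral.integral_nonneg hcd (fun r hr => ?_)
    have hrI : r ∈ Icc S.c x := ⟨hr.1, hr.2.trans hdx⟩
    exact mul_nonneg (S.s'_pos r).le
      (S.inn_nonneg hx hcx (fun t _ => zero_le_one) hrI)
  have h2 : ∫ r in d..x, (S.inn (S.I 0) d) * S.s' r
      ≤ ∫ r in d..x, S.s' r * S.inn (S.I 0) r := by
    refine intervalIntegral.integral_mono_on hdx ?_ (S.sinnInt' hx hcx hI0cont hdI hxI)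
      (fun r hr => ?_)
    · exact (S.s'Int hdI hxI hx hcx).const_mul _
    · have hrI : r ∈ Icc S.c x := ⟨hcd.trans hr.1, hr.2⟩
      have hmono : S.inn (S.I 0) d ≤ S.inn (S.I 0) r := by
        rw [S.inn_diff hx hcx hI0cont hdI hrI]
        have : 0 ≤ ∫ t in d..r, S.m' t * S.V t * S.I 0 t := by
          refine intervalIntegral.integral_nonneg_of_ae_restrict hr.1 ?_
          have hsub2 : Icc d r ⊆ Icc S.c x := Icc_subset_Icc hcd hr.2
          have h4 : ∀ᵐ t ∂(volume.restrict (Icc d r)), 0 < S.m' t :=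
            ae_mono (Measure.restrict_mono hsub2 le_rfl) (S.m'_ae_pos hx hcx)
          rw [EventuallyLE, ae_restrict_iff' measurableSet_Icc]
          filter_upwards [(ae_restrict_iff' measurableSet_Icc).1 h4] with t h5 ht
          have hVt := S.hVnn t (S.icc_sub hx hcx (hsub2 ht))
          have hmt := (h5 ht).le
          have : S.I 0 t = 1 := rfl
          rw [this, mul_one]
          positivity
        linarith
      calc S.inn (S.I 0) d * S.s' r ≤ S.inn (S.I 0) r * S.s' r := by
            exact mul_le_mul_of_nonneg_right hmono (S.s'_pos r).le
        _ = S.s' r * S.inn (S.I 0) r := mul_comm _ _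
  have h3 : ∫ r in d..x, (S.inn (S.I 0) d) * S.s' r
      = (S.inn (S.I 0) d) * (S.Sc x - S.Sc d) := by
    rw [intervalIntegral.integral_const_mul]
    have := S.Sc_diff hx hcx hdI hxI
    have e : ∫ r in d..x, S.s' r = S.Sc x - S.Sc d := by linarith
    rw [e]
  linarith


lemma phi_bound {d : ℝ} (hd : d ∈ S.E) (hcd : S.c ≤ d) {δ : ℝ} (hδ : 0 < δ)
    (hI1 : ∀ x ∈ S.E, d ≤ x → δ * (S.Sc x - S.Sc d) ≤ S.I 1 x) :
    ∀ x ∈ S.E, S.c ≤ x →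
      S.h S.c + S.h' S.c * S.Sc x
        ≤ max (S.h S.c + S.h' S.c * S.Sc d) (S.h' S.c / δ) * (S.I 0 x + S.I 1 x) := by
  intro x hx hcx
  set C₁ := max (S.h S.c + S.h' S.c * S.Sc d) (S.h' S.c / δ) with hC₁
  have hC₁1 : S.h S.c + S.h' S.c * S.Sc d ≤ C₁ := le_max_left _ _
  have hC₁2 : S.h' S.c / δ ≤ C₁ := le_max_right _ _
  have hC₁pos : 0 < C₁ :=
    lt_of_lt_of_le (by nlinarith [S.hhc, S.hh'c, S.Sc_nonneg hcd]) hC₁1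
  have hI0 : S.I 0 x = 1 := rfl
  have hI1nn : 0 ≤ S.I 1 x := S.I_nonneg 1 x hx hcx
  rcases le_total x d with hxd | hdx
  · have hSle : S.Sc x ≤ S.Sc d := by
      have := S.Sc_diff hd hcd (⟨hcx, hxd⟩ : x ∈ Icc S.c d) (right_mem_Icc.2 hcd)
      have h0 : 0 ≤ ∫ r in x..d, S.s' r :=
        intervalIntegral.integral_nonneg hxd (fun r _ => (S.s'_pos r).le)
      linarith
    have := S.hh'c
    nlinarith
  · have hkey := hI1 x hx hdx
    have hSd : S.Sc d ≤ S.Sc x := by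
      have := S.Sc_diff hx hcx (⟨hcd, hdx⟩ : d ∈ Icc S.c x) (right_mem_Icc.2 hcx)
      have h0 : 0 ≤ ∫ r in d..x, S.s' r :=
        intervalIntegral.integral_nonneg hdx (fun r _ => (S.s'_pos r).le)
      linarith
    have e1 : S.h' S.c * (S.Sc x - S.Sc d) ≤ (S.h' S.c / δ) * (δ * (S.Sc x - S.Sc d)) := by
      rw [← mul_assoc, div_mul_cancel₀ _ hδ.ne']
    have e2 : (S.h' S.c / δ) * (δ * (S.Sc x - S.Sc d)) ≤ (S.h' S.c / δ) * S.I 1 x :=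
      mul_le_mul_of_nonneg_left hkey (div_nonneg S.hh'c.le hδ.le)
    have e3 : (S.h' S.c / δ) * S.I 1 x ≤ C₁ * S.I 1 x :=
      mul_le_mul_of_nonneg_right hC₁2 hI1nn
    rw [hI0]
    nlinarith

lemma upper (C₁ : ℝ) (hC₁pos : 0 < C₁)
    (hphi : ∀ x ∈ S.E, S.c ≤ x →
      S.h S.c + S.h' S.c * S.Sc x ≤ C₁ * (S.I 0 x + S.I 1 x)) :
    ∀ n : ℕ, ∀ x ∈ S.E, S.c ≤ x →
      S.h x ≤ C₁ * ((∑ k ∈ Finset.range (n+1), S.I k x)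
          + (∑ k ∈ Finset.range (n+1), S.I (k+1) x)) + S.h x * S.I (n+1) x := by
  intro n
  induction n with
  | zero =>
    intro x hx hcx
    have e1 := S.hsplit hx hcx
    have hxx : x ∈ Icc S.c x := right_mem_Icc.2 hcx
    have e2 : S.K S.h x ≤ S.K (fun t => S.h x * S.I 0 t) x := by
      refine S.K_mono hx hcx (S.hcontOn hx hcx) (continuousOn_const.mul continuousOn_const) ?_
      intro t ht
      show S.h t ≤ S.h x * S.I 0 t
      have hI0 : S.I 0 t = 1 := rfl
      rw [hI0, mul_one]
      exact S.h_mono hx hcx ht hxx ht.2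
    have e3 : S.K (fun t => S.h x * S.I 0 t) x = S.h x * S.I 1 x := by
      rw [S.K_smul hx hcx, ← S.I_succ]
    have e4 := hphi x hx hcx
    norm_num [Finset.sum_range_one]
    linarith
  | succ n IH =>
    intro x hx hcx
    have hxx : x ∈ Icc S.c x := right_mem_Icc.2 hcx
    set A : ℝ → ℝ := fun t => ∑ k ∈ Finset.range (n+1), S.I k t with hA
    set B : ℝ → ℝ := fun t => ∑ k ∈ Finset.range (n+1), S.I (k+1) t with hB
    have hAcont : ContinuousOn A (Icc S.c x) :=
      continuousOn_finset_sum _ (fun k _ => S.I_contOn k x hx hcx)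
    have hBcont : ContinuousOn B (Icc S.c x) :=
      continuousOn_finset_sum _ (fun k _ => S.I_contOn (k+1) x hx hcx)
    have hIcont : ContinuousOn (S.I (n+1)) (Icc S.c x) := S.I_contOn (n+1) x hx hcx
    set Φ : ℝ → ℝ := fun t => C₁ * (A t + B t) + S.h x * S.I (n+1) t with hΦ
    have hΦcont : ContinuousOn Φ (Icc S.c x) :=
      (continuousOn_const.mul (hAcont.add hBcont)).add (continuousOn_const.mul hIcont)
    have e1 := S.hsplit hx hcx
    -- pointwise bound h ≤ Φ on Icc c x
    have hptw : ∀ t ∈ Icc S.c x, S.h t ≤ Φ t := by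
      intro t ht
      have htE : t ∈ S.E := S.icc_sub hx hcx ht
      have h1 := IH t htE ht.1
      have h2 : S.h t * S.I (n+1) t ≤ S.h x * S.I (n+1) t :=
        mul_le_mul_of_nonneg_right (S.h_mono hx hcx ht hxx ht.2)
          (S.I_nonneg (n+1) t htE ht.1)
      simp only [hΦ, hA, hB]
      linarith
    have e2 : S.K S.h x ≤ S.K Φ x :=
      S.K_mono hx hcx (S.hcontOn hx hcx) hΦcont hptw
    -- compute K Φ x
    have e3 : S.K Φ x = C₁ * ((∑ k ∈ Finset.range (n+1), S.I (k+1) x)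
        + (∑ k ∈ Finset.range (n+1), S.I (k+2) x)) + S.h x * S.I (n+2) x := by
      have c1 : ContinuousOn (fun t => C₁ * (A t + B t)) (Icc S.c x) :=
        continuousOn_const.mul (hAcont.add hBcont)
      have c2 : ContinuousOn (fun t => S.h x * S.I (n+1) t) (Icc S.c x) :=
        continuousOn_const.mul hIcont
      rw [hΦ]
      rw [S.K_add hx hcx c1 c2]
      rw [S.K_smul hx hcx (α := C₁) (g := fun t => A t + B t)]
      rw [S.K_smul hx hcx (α := S.h x) (g := S.I (n+1))]
      rw [S.K_add hx hcx hAcont hBcont]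
      rw [hA, hB]
      rw [S.K_sum hx hcx _ _ (fun k _ => S.I_contOn k x hx hcx)]
      rw [S.K_sum hx hcx _ _ (fun k _ => S.I_contOn (k+1) x hx hcx)]
      rw [← S.I_succ (n+1)]
      have s1 : ∑ k ∈ Finset.range (n+1), S.K (S.I k) x
          = ∑ k ∈ Finset.range (n+1), S.I (k+1) x :=
        Finset.sum_congr rfl (fun k _ => (S.I_succ k x).symm)
      have s2 : ∑ k ∈ Finset.range (n+1), S.K (S.I (k+1)) x
          = ∑ k ∈ Finset.range (n+1), S.I (k+2) x :=
        Finset.sum_congr rfl (fun k _ => (S.I_succ (k+1) x).symm)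
      rw [s1, s2]
    have e4 := hphi x hx hcx
    -- reindex sums
    have r1 : ∑ k ∈ Finset.range (n+2), S.I k x
        = (∑ k ∈ Finset.range (n+1), S.I (k+1) x) + S.I 0 x :=
      Finset.sum_range_succ' _ _
    have r2 : ∑ k ∈ Finset.range (n+2), S.I (k+1) x
        = (∑ k ∈ Finset.range (n+1), S.I (k+2) x) + S.I 1 x :=
      Finset.sum_range_succ' (fun k => S.I (k+1) x) _
    rw [r1, r2]
    nlinarith [e1, e2, e3, e4]

end St

lemma exists_piece_pos {y0 : EReal} {c : ℝ} (hcy : (c : EReal) < y0) (f : ℝ → ENNReal)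
    (hpos : 0 < ∫⁻ t in {t : ℝ | c < t ∧ (t : EReal) < y0}, f t) :
    ∃ d : ℝ, c < d ∧ (d : EReal) < y0 ∧ 0 < ∫⁻ t in Ioc c d, f t := by
  by_contra hcon
  push_neg at hcon
  have hzero : ∀ d : ℝ, c < d → (d : EReal) < y0 → ∫⁻ t in Ioc c d, f t = 0 :=
    fun d h1 h2 => le_antisymm (hcon d h1 h2) zero_le
  obtain ⟨e, he1, he2, hcov⟩ : ∃ e : ℕ → ℝ, (∀ k, c < e k) ∧ (∀ k, (e k : EReal) < y0) ∧
      {t : ℝ | c < t ∧ (t : EReal) < y0} ⊆ ⋃ k, Ioc c (e k) := by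
    clear hcon hzero hpos
    revert hcy
    induction y0 using EReal.rec with
    | bot => intro hcy; exact absurd hcy (by simp)
    | coe Y =>
      intro hcy
      have hcY : c < Y := EReal.coe_lt_coe_iff.1 hcy
      refine ⟨fun k => Y - (Y - c)/((k:ℝ)+2), fun k => ?_, fun k => ?_, fun t ht => ?_⟩
      · have hk0 : (0:ℝ) ≤ (k:ℝ) := Nat.cast_nonneg k
        have hk2 : (1:ℝ) < (k:ℝ)+2 := by linarith
        have := div_lt_self (by linarith : (0:ℝ) < Y - c) hk2
        linarith
      · rw [EReal.coe_lt_coe_iff]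
        have hk2 : (0:ℝ) < (k:ℝ)+2 := by positivity
        have : 0 < (Y - c)/((k:ℝ)+2) := div_pos (by linarith) hk2
        linarith
      · obtain ⟨ht1, ht2⟩ := ht
        have ht2' : t < Y := EReal.coe_lt_coe_iff.1 ht2
        obtain ⟨k, hk⟩ := exists_nat_ge ((Y - c)/(Y - t))
        refine mem_iUnion.2 ⟨k, ht1, ?_⟩
        rw [div_le_iff₀ (by linarith : (0:ℝ) < Y - t)] at hk
        rw [le_sub_comm]
        rw [div_le_iff₀ (by positivity : (0:ℝ) < (k:ℝ)+2)]
        nlinarith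
    | top =>
      intro _
      refine ⟨fun k => c + (k:ℝ) + 1, fun k => ?_, fun k => EReal.coe_lt_top _,
        fun t ht => ?_⟩
      · show c < c + (k:ℝ) + 1
        have : (0:ℝ) ≤ (k:ℝ) := Nat.cast_nonneg k
        linarith
      · obtain ⟨k, hk⟩ := exists_nat_ge (t - c)
        refine mem_iUnion.2 ⟨k, ht.1, ?_⟩
        show t ≤ c + (k:ℝ) + 1
        linarith
  have hle : ∫⁻ t in {t : ℝ | c < t ∧ (t : EReal) < y0}, f t
      ≤ ∑' k : ℕ, ∫⁻ t in Ioc c (e k), f t :=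
    le_trans (lintegral_mono_set hcov) (lintegral_iUnion_le _ _)
  have hz : ∑' k : ℕ, ∫⁻ t in Ioc c (e k), f t = 0 :=
    ENNReal.tsum_eq_zero.2 (fun k => hzero _ (he1 k) (he2 k))
  exact absurd (hle.trans_eq hz) (by simpa using hpos.ne')

/-- two-sided bound `h(c) ∑ I_n^V(x) ≤ h(x) ≤ C ∑ I_n^V(x)` on `[c, y0)`
for an increasing-at-`c` positive solution of `(h'/s')' = m' V h`. -/
theorem stmt5
    (x0 y0 : EReal) (hxy : x0 < y0)
    (a b V : ℝ → ℝ) (c : ℝ)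
    (hc : x0 < (c : EReal) ∧ (c : EReal) < y0)
    (ha : Measurable a) (hb : Measurable b) (hV : Measurable V)
    (haB : LocEssBdd x0 y0 a) (hbB : LocEssBdd x0 y0 b)
    (hVB : LocEssBdd x0 y0 V) (hainvB : LocEssBdd x0 y0 (fun x => 1 / a x))
    (hapos : ∀ᵐ x ∂(volume.restrict (EI x0 y0)), 0 < a x)
    (hVnn : ∀ x ∈ EI x0 y0, 0 ≤ V x)
    (h h' : ℝ → ℝ)
    (hcont : ContinuousOn h' (EI x0 y0))
    (hder : ∀ x ∈ EI x0 y0, HasDerivAt h (h' x) x)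
    (hsol : ∀ x ∈ EI x0 y0, ∀ y ∈ EI x0 y0, x ≤ y →
      h' y / sder a b c y - h' x / sder a b c x =
        ∫ t in x..y, mder a b c t * V t * h t)
    (hhc : 0 < h c) (hh'c : 0 < h' c)
    (hVpos : 0 < ∫⁻ t in {t : ℝ | c < t ∧ (t : EReal) < y0},
      ENNReal.ofReal (V t * mder a b c t)) :
    ∃ C : ℝ, 0 < C ∧ ∀ x ∈ EI x0 y0, c ≤ x →
      ENNReal.ofReal (h c) * (∑' n : ℕ, ENNReal.ofReal (Ifun a b c V n x)) ≤
          ENNReal.ofReal (h x) ∧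
      ENNReal.ofReal (h x) ≤
          ENNReal.ofReal C * (∑' n : ℕ, ENNReal.ofReal (Ifun a b c V n x)) := by
  set S : St := ⟨x0, y0, a, b, V, c, h, h', hc.1, hc.2, ha, hb, hV, hbB, hVB, hainvB,
    hapos, hVnn, hcont, hder, hsol, hhc, hh'c⟩ with hSdef
  obtain ⟨d, hcd, hdy, hdpos⟩ := exists_piece_pos hc.2
    (fun t => ENNReal.ofReal (V t * mder a b c t)) hVpos
  have hdE : d ∈ S.E := ⟨lt_trans hc.1 (EReal.coe_lt_coe_iff.2 hcd), hdy⟩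
  set δ : ℝ := S.inn (S.I 0) d with hδdef
  have hδrew : ENNReal.ofReal δ
      = ∫⁻ t in Ioc c d, ENNReal.ofReal (V t * mder a b c t) := by
    have hInt : IntegrableOn (fun t => S.m' t * S.V t * S.I 0 t) (Ioc c d) :=
      (S.intMVg hdE hcd.le continuousOn_const).mono_set Ioc_subset_Icc_self
    have hnn : 0 ≤ᵐ[volume.restrict (Ioc c d)] fun t => S.m' t * S.V t * S.I 0 t :=
      ae_mono (Measure.restrict_mono Ioc_subset_Icc_self le_rfl)
        (S.ae_nn hdE hcd.le (fun t _ => zero_le_one) (right_mem_Icc.2 hcd.le))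
    have e0 : δ = ∫ t in Ioc c d, S.m' t * S.V t * S.I 0 t := by
      rw [hδdef, St.inn, intervalIntegral.integral_of_le hcd.le]
    rw [e0, MeasureTheory.ofReal_integral_eq_lintegral_ofReal hInt hnn]
    refine lintegral_congr (fun t => ?_)
    congr 1
    show mder a b c t * V t * 1 = V t * mder a b c t
    ring
  have hδpos : 0 < δ := ENNReal.ofReal_pos.1 (by rw [hδrew]; exact hdpos)
  have hI1 := S.I1_lb hdE hcd.le
  rw [← hδdef] at hI1
  set C₁ : ℝ := max (S.h S.c + S.h' S.c * S.Sc d) (S.h' S.c / δ) with hC₁def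
  have hScd : 0 ≤ S.Sc d := S.Sc_nonneg hcd.le
  have hC₁pos : 0 < C₁ := by
    refine lt_of_lt_of_le ?_ (le_max_left _ _)
    show (0:ℝ) < h c + h' c * S.Sc d
    nlinarith
  have hphi := S.phi_bound hdE hcd.le hδpos hI1
  rw [← hC₁def] at hphi
  have hup := S.upper C₁ hC₁pos hphi
  refine ⟨4*C₁, by positivity, ?_⟩
  intro x hxE hcx
  have hxE' : x ∈ S.E := hxE
  have hhx : 0 < h x := S.h_pos hxE' hcx x (right_mem_Icc.2 hcx)
  have hnn : ∀ n, 0 ≤ Ifun a b c V n x := fun n => S.I_nonneg n x hxE' hcx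
  have hparts : ∀ N, ∑ k ∈ Finset.range N, Ifun a b c V k x ≤ h x / h c := by
    intro N
    cases N with
    | zero => simp; positivity
    | succ n =>
      have := S.lower n x hxE' hcx
      rw [le_div_iff₀ hhc]
      show (∑ k ∈ Finset.range (n+1), Ifun a b c V k x) * h c ≤ h x
      have e : S.h S.c * (∑ k ∈ Finset.range (n+1), S.I k x)
          = (∑ k ∈ Finset.range (n+1), Ifun a b c V k x) * h c := by
        show h c * (∑ k ∈ Finset.range (n+1), Ifun a b c V k x)
          = (∑ k ∈ Finset.range (n+1), Ifun a b c V k x) * h c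
        ring
      linarith [e ▸ this]
  have hsum : Summable (fun n => Ifun a b c V n x) := summable_of_sum_range_le hnn hparts
  set T : ℝ := ∑' n, Ifun a b c V n x with hTdef
  have htsum_le : T ≤ h x / h c := Summable.tsum_le_of_sum_range_le hsum hparts
  have hTnn : 0 ≤ T := tsum_nonneg hnn
  have hofT : (∑' n : ℕ, ENNReal.ofReal (Ifun a b c V n x)) = ENNReal.ofReal T :=
    (ENNReal.ofReal_tsum_of_nonneg hnn hsum).symm
  constructor
  · rw [hofT, ← ENNReal.ofReal_mul hhc.le]
    apply ENNReal.ofReal_le_ofReal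
    have := (le_div_iff₀ hhc).1 htsum_le
    linarith
  · have htend : Tendsto (fun n => Ifun a b c V n x) atTop (nhds 0) :=
      hsum.tendsto_atTop_zero
    obtain ⟨N, hN⟩ := eventually_atTop.1
      (htend.eventually (gt_mem_nhds (show (0:ℝ) < 1/2 by norm_num)))
    have hNx : Ifun a b c V (N+1) x ≤ 1/2 := (hN (N+1) (by omega)).le
    have hux : h x ≤ C₁ * ((∑ k ∈ Finset.range (N+1), Ifun a b c V k x)
        + ∑ k ∈ Finset.range (N+1), Ifun a b c V (k+1) x)
        + h x * Ifun a b c V (N+1) x := hup N x hxE' hcx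
    have hA : ∑ k ∈ Finset.range (N+1), Ifun a b c V k x ≤ T :=
      Summable.sum_le_tsum _ (fun k _ => hnn k) hsum
    have hB : ∑ k ∈ Finset.range (N+1), Ifun a b c V (k+1) x ≤ T := by
      have h2 := Summable.sum_le_tsum (Finset.range (N+2)) (fun k _ => hnn k) hsum
      have r1 : ∑ k ∈ Finset.range (N+2), Ifun a b c V k x
          = (∑ k ∈ Finset.range (N+1), Ifun a b c V (k+1) x) + Ifun a b c V 0 x :=
        Finset.sum_range_succ' _ _
      have r0 : Ifun a b c V 0 x = 1 := rfl
      rw [r1, r0] at h2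
      linarith
    have key : h x ≤ 4*C₁*T := by
      have k1 : C₁ * ((∑ k ∈ Finset.range (N+1), Ifun a b c V k x)
          + ∑ k ∈ Finset.range (N+1), Ifun a b c V (k+1) x) ≤ C₁ * (2*T) :=
        mul_le_mul_of_nonneg_left (by linarith) hC₁pos.le
      have k2 : h x * Ifun a b c V (N+1) x ≤ h x * (1/2) :=
        mul_le_mul_of_nonneg_left hNx hhx.le
      linarith
    rw [hofT, ← ENNReal.ofReal_mul (by positivity : (0:ℝ) ≤ 4*C₁)]
    exact ENNReal.ofReal_le_ofReal key
end
end

section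
/- Let δ > 0 and let h be a strictly positive C¹ function on (x0,y0) with h' ≤ 0 which is a solution of (h'/s')' = m'(V+δ)h, i.e. h'(y)/s'(y) − h'(x)/s'(x) = ∫_x^y m'(t)(V(t)+δ)h(t) dt for all x ≤ y. Then h is m-integrable near y0; more precisely, δ ∫_c^{y0} m'(t) h(t) dt ≤ −h'(c)/s'(c) < +∞. -/
open MeasureTheory Set Filter

noncomputable section

/-- a strictly positive nonincreasing `C¹` solution of
`(h'/s')' = m' (V+δ) h` is `m`-integrable near `y0`, with
`δ ∫_c^{y0} m' h dt ≤ -h'(c)/s'(c) < +∞`. -/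
theorem stmt7
    (x0 y0 : EReal) (hxy : x0 < y0)
    (a b V : ℝ → ℝ) (c : ℝ)
    (hc : x0 < (c : EReal) ∧ (c : EReal) < y0)
    (ha : Measurable a) (hb : Measurable b) (hV : Measurable V)
    (haB : LocEssBdd x0 y0 a) (hbB : LocEssBdd x0 y0 b)
    (hVB : LocEssBdd x0 y0 V) (hainvB : LocEssBdd x0 y0 (fun x => 1 / a x))
    (hapos : ∀ᵐ x ∂(volume.restrict (EI x0 y0)), 0 < a x)
    (hVnn : ∀ x ∈ EI x0 y0, 0 ≤ V x)
    (δ : ℝ) (hδ : 0 < δ)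
    (h h' : ℝ → ℝ)
    (hpos : ∀ x ∈ EI x0 y0, 0 < h x)
    (hdec : ∀ x ∈ EI x0 y0, h' x ≤ 0)
    (hcont : ContinuousOn h' (EI x0 y0))
    (hder : ∀ x ∈ EI x0 y0, HasDerivAt h (h' x) x)
    (hsol : ∀ x ∈ EI x0 y0, ∀ y ∈ EI x0 y0, x ≤ y →
      h' y / sder a b c y - h' x / sder a b c x =
        ∫ t in x..y, mder a b c t * (V t + δ) * h t) :
    IntegrableOn (fun t => mder a b c t * h t)
        {t : ℝ | c < t ∧ (t : EReal) < y0} volume ∧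
      δ * ∫ t in {t : ℝ | c < t ∧ (t : EReal) < y0}, mder a b c t * h t ≤
        -(h' c) / sder a b c c := by
  obtain ⟨hcx0, hcy0⟩ := hc
  have hcEI : c ∈ EI x0 y0 := ⟨hcx0, hcy0⟩
  set K : ℝ := -(h' c) / sder a b c c with hK
  have hKnn : 0 ≤ K := div_nonneg (neg_nonneg.2 (hdec c hcEI)) (Real.exp_pos _).le
  set S : Set ℝ := {t : ℝ | c < t ∧ (t : EReal) < y0} with hS
  set f : ℝ → ℝ := fun t => mder a b c t * h t with hf
  have hSsub : S ⊆ EI x0 y0 := fun t ht =>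
    ⟨lt_trans hcx0 (EReal.coe_lt_coe_iff.2 ht.1), ht.2⟩
  -- Key facts on each interval (c, y] with y < y0.
  have key : ∀ y : ℝ, c < y → (y : EReal) < y0 →
      IntegrableOn f (Ioc c y) volume ∧
      δ * ∫ t in Ioc c y, f t ≤ K := by
    intro y hcy hyy0
    have hIccEI : Icc c y ⊆ EI x0 y0 := fun t ht =>
      ⟨lt_of_lt_of_le hcx0 (EReal.coe_le_coe_iff.2 ht.1),
        lt_of_le_of_lt (EReal.coe_le_coe_iff.2 ht.2) hyy0⟩
    have hIocEI : Ioc c y ⊆ EI x0 y0 := Ioc_subset_Icc_self.trans hIccEI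
    obtain ⟨Cb, hCb⟩ := hbB c y hcx0 hyy0
    obtain ⟨Ca, hCa⟩ := hainvB c y hcx0 hyy0
    obtain ⟨Cv, hCv⟩ := hVB c y hcx0 hyy0
    have hhcont : ContinuousOn h (Icc c y) := fun x hx =>
      (hder x (hIccEI hx)).continuousAt.continuousWithinAt
    obtain ⟨Ch, hCh⟩ := isCompact_Icc.exists_bound_of_continuousOn hhcont
    have hba_meas : Measurable fun t => b t / a t := hb.div ha
    have hvol : volume (Icc c y) < ⊤ := by simp [Real.volume_Icc]
    have hba_int : IntegrableOn (fun t => b t / a t) (Icc c y) volume := by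
      refine Integrable.mono' (g := fun _ => |Cb| * |Ca|)
        ((integrableOn_const_iff).2 (Or.inr hvol)) hba_meas.aestronglyMeasurable ?_
      filter_upwards [hCb, hCa] with t h1 h2
      rw [Real.norm_eq_abs, div_eq_mul_one_div, abs_mul]
      exact mul_le_mul (h1.trans (le_abs_self _)) (h2.trans (le_abs_self _))
        (abs_nonneg _) (abs_nonneg _)
    set G : ℝ → ℝ := fun x => ∫ t in c..x, b t / a t with hGdef
    have hGcont : ContinuousOn G (Icc c y) := by
      have := intervalIntegral.continuousOn_primitive_interval
        (a := c) (b := y) (μ := volume) (f := fun t => b t / a t)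
        (by rwa [uIcc_of_le hcy.le])
      rwa [uIcc_of_le hcy.le] at this
    have hmeasIoc : MeasurableSet (Ioc c y) := measurableSet_Ioc
    have hexpGm : AEStronglyMeasurable (fun x => Real.exp (G x))
        (volume.restrict (Ioc c y)) :=
      (Real.continuous_exp.comp_continuousOn
        (hGcont.mono Ioc_subset_Icc_self)).aestronglyMeasurable hmeasIoc
    have hmder_eq : ∀ x, mder a b c x = (1 / a x) * Real.exp (G x) := fun x => rfl
    have hmderm : AEStronglyMeasurable (mder a b c) (volume.restrict (Ioc c y)) := by
      have h1a : Measurable fun x => 1 / a x := measurable_const.div ha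
      exact h1a.aestronglyMeasurable.mul hexpGm
    have hhm : AEStronglyMeasurable h (volume.restrict (Ioc c y)) :=
      (hhcont.mono Ioc_subset_Icc_self).aestronglyMeasurable hmeasIoc
    set B : ℝ := ∫ t in Ioc c y, |b t / a t| with hBdef
    have habs_int : IntegrableOn (fun t => |b t / a t|) (Ioc c y) volume :=
      (hba_int.mono_set Ioc_subset_Icc_self).abs
    set C1 : ℝ := |Ca| * Real.exp B with hC1def
    have hC1nn : 0 ≤ C1 := mul_nonneg (abs_nonneg _) (Real.exp_pos _).le
    have hmder_bd : ∀ᵐ x ∂(volume.restrict (Ioc c y)), |mder a b c x| ≤ C1 := by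
      filter_upwards [ae_restrict_of_ae_restrict_of_subset Ioc_subset_Icc_self hCa,
        ae_restrict_mem hmeasIoc] with x h1 hx
      have hGx : G x ≤ B := by
        calc G x ≤ |G x| := le_abs_self _
        _ = |∫ t in Ioc c x, b t / a t| := by
              have : G x = ∫ t in Ioc c x, b t / a t :=
                intervalIntegral.integral_of_le hx.1.le
              rw [this]
        _ ≤ ∫ t in Ioc c x, |b t / a t| := by
              have := norm_integral_le_integral_norm
                (μ := volume.restrict (Ioc c x)) (f := fun t => b t / a t)
              simpa only [Real.norm_eq_abs] using this
        _ ≤ B := by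
              refine setIntegral_mono_set habs_int ?_ ?_
              · exact Filter.Eventually.of_forall fun t => abs_nonneg _
              · exact HasSubset.Subset.eventuallyLE (Ioc_subset_Ioc_right hx.2)
      rw [hmder_eq, abs_mul, abs_of_pos (Real.exp_pos _)]
      exact mul_le_mul (h1.trans (le_abs_self _)) (Real.exp_le_exp.2 hGx)
        (Real.exp_pos _).le (abs_nonneg _)
    have hf_int : IntegrableOn f (Ioc c y) volume := by
      refine Integrable.mono' (g := fun _ => C1 * |Ch|)
        ((integrableOn_const_iff).2 (Or.inr (lt_of_le_of_lt
          (measure_mono Ioc_subset_Icc_self) hvol))) (hmderm.mul hhm) ?_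
      filter_upwards [hmder_bd, ae_restrict_mem hmeasIoc] with t h1 h2
      have hht : |h t| ≤ |Ch| :=
        ((Real.norm_eq_abs _ ▸ hCh t (Ioc_subset_Icc_self h2))).trans (le_abs_self _)
      rw [Real.norm_eq_abs, hf, abs_mul]
      exact mul_le_mul h1 hht (abs_nonneg _) hC1nn
    have hF_int : IntegrableOn (fun t => mder a b c t * (V t + δ) * h t)
        (Ioc c y) volume := by
      refine Integrable.mono' (g := fun _ => C1 * (|Cv| + |δ|) * |Ch|)
        ((integrableOn_const_iff).2 (Or.inr (lt_of_le_of_lt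
          (measure_mono Ioc_subset_Icc_self) hvol)))
        ((hmderm.mul ((hV.aestronglyMeasurable).add aestronglyMeasurable_const)).mul hhm) ?_
      filter_upwards [hmder_bd,
        ae_restrict_of_ae_restrict_of_subset Ioc_subset_Icc_self hCv,
        ae_restrict_mem hmeasIoc] with t h1 h2 h3
      have hht : |h t| ≤ |Ch| :=
        ((Real.norm_eq_abs _ ▸ hCh t (Ioc_subset_Icc_self h3))).trans (le_abs_self _)
      have hVt : |V t + δ| ≤ |Cv| + |δ| :=
        (abs_add_le _ _).trans (add_le_add (h2.trans (le_abs_self _)) le_rfl)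
      rw [Real.norm_eq_abs, abs_mul, abs_mul]
      exact mul_le_mul (mul_le_mul h1 hVt (abs_nonneg _) hC1nn) hht (abs_nonneg _)
        (mul_nonneg hC1nn (by positivity))
    have hmder_nn : ∀ᵐ t ∂(volume.restrict (Ioc c y)), 0 < mder a b c t := by
      filter_upwards [ae_restrict_of_ae_restrict_of_subset hIocEI hapos] with t h1
      exact mul_pos (by positivity) (Real.exp_pos _)
    have hyEI : y ∈ EI x0 y0 := hIccEI ⟨hcy.le, le_refl y⟩
    have hintF : ∫ t in Ioc c y, mder a b c t * (V t + δ) * h t =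
        h' y / sder a b c y - h' c / sder a b c c := by
      rw [← intervalIntegral.integral_of_le hcy.le]
      exact (hsol c hcEI y hyEI hcy.le).symm
    have hmono : δ * ∫ t in Ioc c y, f t ≤
        ∫ t in Ioc c y, mder a b c t * (V t + δ) * h t := by
      rw [← MeasureTheory.integral_const_mul]
      refine integral_mono_ae (hf_int.const_mul δ) hF_int ?_
      filter_upwards [hmder_nn, ae_restrict_mem hmeasIoc] with t h1 h2
      have hV0 := hVnn t (hIocEI h2)
      have hh0 := (hpos t (hIocEI h2)).le
      have : 0 ≤ mder a b c t * V t * h t :=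
        mul_nonneg (mul_nonneg h1.le hV0) hh0
      simp only [hf]; nlinarith
    refine ⟨hf_int, ?_⟩
    have hdy : h' y / sder a b c y ≤ 0 :=
      div_nonpos_iff.2 (Or.inr ⟨hdec y hyEI, (Real.exp_pos _).le⟩)
    rw [hK, neg_div]
    calc δ * ∫ t in Ioc c y, f t ≤ h' y / sder a b c y - h' c / sder a b c c := by
          rw [← hintF]; exact hmono
    _ ≤ -(h' c / sder a b c c) := by linarith
  -- A monotone exhaustion of S by intervals (c, u n].
  have hseq : ∀ y0' : EReal, (c : EReal) < y0' → ∃ u : ℕ → ℝ, Monotone u ∧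
      (∀ n, (u n : EReal) < y0') ∧
      {t : ℝ | c < t ∧ (t : EReal) < y0'} = ⋃ n, Ioc c (u n) := by
    intro y0'
    induction y0' using EReal.rec with
    | bot => intro hlt; exact absurd hlt (by simp)
    | coe r =>
        intro hlt
        have hcr : c < r := EReal.coe_lt_coe_iff.1 hlt
        refine ⟨fun n => r - (r - c) / (n + 1), ?_, ?_, ?_⟩
        · intro m n hmn
          have h1 : (0:ℝ) < m + 1 := by positivity
          have h2 : (m:ℝ) + 1 ≤ n + 1 := by exact_mod_cast Nat.succ_le_succ hmn
          have h3 : (r - c) / ((n:ℝ) + 1) ≤ (r - c) / ((m:ℝ) + 1) :=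
            div_le_div_of_nonneg_left (by linarith) h1 h2
          simp only
          linarith
        · intro n
          have h1 : (0:ℝ) < (n:ℝ) + 1 := by positivity
          have : 0 < (r - c) / (n + 1) := div_pos (by linarith) h1
          exact EReal.coe_lt_coe_iff.2 (by linarith)
        · ext t
          simp only [mem_setOf_eq, mem_iUnion, mem_Ioc, EReal.coe_lt_coe_iff]
          constructor
          · rintro ⟨h1, h2⟩
            obtain ⟨n, hn⟩ := exists_nat_ge ((r - c) / (r - t))
            have hrt : (0:ℝ) < r - t := by linarith
            have hd : r - c ≤ ((n:ℝ) + 1) * (r - t) := by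
              rw [div_le_iff₀ hrt] at hn
              nlinarith
            have h3 : (r - c) / ((n:ℝ) + 1) ≤ r - t := by
              rw [div_le_iff₀ (by positivity : (0:ℝ) < (n:ℝ) + 1)]
              nlinarith
            exact ⟨n, h1, by linarith⟩
          · rintro ⟨n, h1, h2⟩
            have h3 : 0 < (r - c) / ((n:ℝ) + 1) :=
              div_pos (by linarith) (by positivity)
            exact ⟨h1, by linarith⟩
    | top =>
        intro _
        refine ⟨fun n => c + n, fun m n hmn => by
          simp only [add_le_add_iff_left, Nat.cast_le]; exact hmn,
          fun n => EReal.coe_lt_top _, ?_⟩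
        ext t
        simp only [mem_setOf_eq, mem_iUnion, mem_Ioc, EReal.coe_lt_top, and_true]
        constructor
        · intro ht
          obtain ⟨n, hn⟩ := exists_nat_ge (t - c)
          exact ⟨n, ht, by linarith⟩
        · rintro ⟨n, h1, _⟩; exact h1
  obtain ⟨u, humono, huy0, huU⟩ := hseq y0 hcy0
  rw [← hS] at huU
  have huUmono : Monotone fun n => Ioc c (u n) := fun m n hmn =>
    Ioc_subset_Ioc_right (humono hmn)
  have hSmeas : MeasurableSet S := by
    rw [huU]; exact MeasurableSet.iUnion fun n => measurableSet_Ioc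
  have hIocS : ∀ n, Ioc c (u n) ⊆ S := fun n t ht =>
    ⟨ht.1, lt_of_le_of_lt (EReal.coe_le_coe_iff.2 ht.2) (huy0 n)⟩
  have hfnn : 0 ≤ᵐ[volume.restrict S] f := by
    filter_upwards [ae_restrict_of_ae_restrict_of_subset hSsub hapos,
      ae_restrict_mem hSmeas] with t h1 h2
    have h3 := hpos t (hSsub h2)
    have hm : 0 < mder a b c t := mul_pos (by positivity) (Real.exp_pos _)
    exact (mul_pos hm h3).le
  have hfm : AEStronglyMeasurable f (volume.restrict S) := by
    rw [huU, aestronglyMeasurable_iUnion_iff]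
    intro n
    by_cases hn : c < u n
    · exact (key (u n) hn (huy0 n)).1.aestronglyMeasurable
    · rw [Ioc_eq_empty hn, Measure.restrict_empty]
      exact aestronglyMeasurable_zero_measure f
  -- bound the lintegral of f over S
  have hlin : ∫⁻ t in S, ENNReal.ofReal (f t) ≤ ENNReal.ofReal (K / δ) := by
    set ν : Measure ℝ := volume.withDensity fun t => ENNReal.ofReal (f t) with hν
    have happ : ∀ T : Set ℝ, MeasurableSet T →
        ν T = ∫⁻ t in T, ENNReal.ofReal (f t) := fun T hT =>
      withDensity_apply _ hT
    rw [← happ S hSmeas, huU, Monotone.measure_iUnion huUmono]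
    refine iSup_le fun n => ?_
    by_cases hn : c < u n
    · rw [happ _ measurableSet_Ioc]
      have hkey := key (u n) hn (huy0 n)
      have hnn : 0 ≤ᵐ[volume.restrict (Ioc c (u n))] f :=
        ae_restrict_of_ae_restrict_of_subset (hIocS n) hfnn
      rw [← ofReal_integral_eq_lintegral_ofReal hkey.1 hnn]
      exact ENNReal.ofReal_le_ofReal ((le_div_iff₀' hδ).2 hkey.2)
    · rw [Ioc_eq_empty hn]
      simp
  have hfin : HasFiniteIntegral f (volume.restrict S) := by
    rw [HasFiniteIntegral]
    have heq : ∫⁻ t in S, (‖f t‖₊ : ENNReal) = ∫⁻ t in S, ENNReal.ofReal (f t) := by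
      refine lintegral_congr_ae ?_
      filter_upwards [hfnn] with t h1
      rw [← enorm_eq_nnnorm, ← ofReal_norm, Real.norm_of_nonneg h1]
    calc ∫⁻ t, (‖f t‖₊ : ENNReal) ∂(volume.restrict S)
        = ∫⁻ t in S, ENNReal.ofReal (f t) := heq
    _ ≤ ENNReal.ofReal (K / δ) := hlin
    _ < ⊤ := ENNReal.ofReal_lt_top
  refine ⟨⟨hfm, hfin⟩, ?_⟩
  have hint_eq : ∫ t in S, f t = (∫⁻ t in S, ENNReal.ofReal (f t)).toReal :=
    integral_eq_lintegral_of_nonneg_ae hfnn hfm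
  have hle : ∫ t in S, f t ≤ K / δ := by
    rw [hint_eq]
    exact ENNReal.toReal_le_of_le_ofReal (div_nonneg hKnn hδ.le) hlin
  calc δ * ∫ t in S, f t ≤ δ * (K / δ) := mul_le_mul_of_nonneg_left hle hδ.le
  _ = K := by field_simp
end
end
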